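/- arXiv:2211.07159 — 4 statements merged into one kernel-verified Lean document; each statement's English description precedes it below -/
import Mathlib

section
/- Let G be a graph, let P be a path in G, and let T be a triangle in G that is edge-disjoint from P and shares at least one vertex with P. Then the edges of P together with the edges of T can be decomposed into exactly two paths of G. -/
open SimpleGraph

/-- A graph is 2-degenerate if every nonempty (induced) subgraph has a vertex
of degree at most 2. -/
def TwoDegenerate {V : Type*} (G : SimpleGraph V) : Prop :=
  ∀ S : Set V, S.Nonempty → ∃ v ∈ S, (G.neighborSet v ∩ S).ncard ≤ 2

/-- A graph is a triangle if it is isomorphic to the complete graph `K₃`. -/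
def IsTriangleGraph {V : Type*} (G : SimpleGraph V) : Prop :=
  Nonempty (G ≃g (⊤ : SimpleGraph (Fin 3)))

/-- `IsPathDecompOf G E Ps` : the list `Ps` of walks of `G` consists of
(nontrivial) paths of `G` whose edge sets partition the edge set `E`. -/
def IsPathDecompOf {V : Type*} (G : SimpleGraph V) (E : Set (Sym2 V))
    (Ps : List (Σ u : V, Σ v : V, G.Walk u v)) : Prop :=
  (∀ p ∈ Ps, p.2.2.IsPath ∧ p.2.2.edges ≠ []) ∧
  Ps.Pairwise (fun p q => ∀ e ∈ p.2.2.edges, e ∉ q.2.2.edges) ∧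
  (∀ e, e ∈ E ↔ ∃ p ∈ Ps, e ∈ p.2.2.edges)


namespace TriHelp

variable {V : Type*} {G : SimpleGraph V} {u v w : V}

lemma isPath_append {p : G.Walk u w} {q : G.Walk w v}
    (hp : p.IsPath) (hq : q.IsPath)
    (hj : ∀ x ∈ p.support, x ∈ q.support → x = w) : (p.append q).IsPath := by
  rw [Walk.isPath_def, Walk.support_append]
  have hqt : q.support = w :: q.support.tail := q.support_eq_cons
  have hqnd := hq.support_nodup
  rw [hqt, List.nodup_cons] at hqnd
  refine List.Nodup.append hp.support_nodup hqnd.2 ?_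
  intro x hxp hxt
  have hxq : x ∈ q.support := by rw [hqt]; exact List.mem_cons_of_mem _ hxt
  have := hj x hxp hxq
  subst this
  exact hqnd.1 hxt

lemma eq_junction {p : G.Walk u w} {q : G.Walk w v}
    (h : (p.append q).IsPath) : ∀ x ∈ p.support, x ∈ q.support → x = w := by
  intro x hxp hxq
  by_contra hne
  have hnod := h.support_nodup
  rw [Walk.support_append] at hnod
  have hxt : x ∈ q.support.tail := by
    have := q.support_eq_cons
    rw [this] at hxq
    rcases List.mem_cons.mp hxq with h' | h'
    · exact absurd h' hne
    · exact h'
  exact (List.disjoint_of_nodup_append hnod) hxp hxt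

lemma edges_disj {p : G.Walk u w} {q : G.Walk w v}
    (h : (p.append q).IsTrail) : ∀ e ∈ p.edges, e ∉ q.edges := by
  have := h.edges_nodup
  rw [Walk.edges_append] at this
  exact fun e he => (List.disjoint_of_nodup_append this) he

lemma ne_edge_left {p : G.Walk u v} {x y : V} (hx : x ∉ p.support) : s(x, y) ∉ p.edges :=
  fun h => hx (p.fst_mem_support_of_mem_edges h)

lemma ne_edge_right {p : G.Walk u v} {x y : V} (hy : y ∉ p.support) : s(x, y) ∉ p.edges :=
  fun h => hy (p.snd_mem_support_of_mem_edges h)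

lemma order2 (p : G.Walk u v) {a b : V} (ha : a ∈ p.support) (hb : b ∈ p.support) :
    (∃ (q1 : G.Walk u a) (q2 : G.Walk a b) (q3 : G.Walk b v), p = q1.append (q2.append q3)) ∨
    (∃ (q1 : G.Walk u b) (q2 : G.Walk b a) (q3 : G.Walk a v), p = q1.append (q2.append q3)) := by
  induction p with
  | nil =>
    rw [Walk.mem_support_nil_iff] at ha hb
    subst ha; subst hb
    exact Or.inl ⟨Walk.nil, Walk.nil, Walk.nil, rfl⟩
  | @cons s t v' h q ih =>
    by_cases hau : a = s
    · subst hau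
      obtain ⟨r1, r2, hr⟩ := Walk.mem_support_iff_exists_append.mp hb
      exact Or.inl ⟨Walk.nil, r1, r2, by rw [hr]; rfl⟩
    · by_cases hbu : b = s
      · subst hbu
        obtain ⟨r1, r2, hr⟩ := Walk.mem_support_iff_exists_append.mp ha
        exact Or.inr ⟨Walk.nil, r1, r2, by rw [hr]; rfl⟩
      · have ha' : a ∈ q.support := by
          rw [Walk.support_cons] at ha
          rcases List.mem_cons.mp ha with h' | h'
          · exact absurd h' hau
          · exact h'
        have hb' : b ∈ q.support := by
          rw [Walk.support_cons] at hb
          rcases List.mem_cons.mp hb with h' | h'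
          · exact absurd h' hbu
          · exact h'
        rcases ih ha' hb' with ⟨q1, q2, q3, hq⟩ | ⟨q1, q2, q3, hq⟩
        · exact Or.inl ⟨Walk.cons h q1, q2, q3, by rw [hq]; rfl⟩
        · exact Or.inr ⟨Walk.cons h q1, q2, q3, by rw [hq]; rfl⟩


def Perm3 (a b c a' b' c' : V) : Prop :=
  (a = a' ∧ b = b' ∧ c = c') ∨ (a = a' ∧ c = b' ∧ b = c') ∨
  (b = a' ∧ a = b' ∧ c = c') ∨ (b = a' ∧ c = b' ∧ a = c') ∨
  (c = a' ∧ a = b' ∧ b = c') ∨ (c = a' ∧ b = b' ∧ a = c')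

lemma order3 (p : G.Walk u v) {a b c : V} (ha : a ∈ p.support) (hb : b ∈ p.support)
    (hc : c ∈ p.support) :
    ∃ a' b' c', Perm3 a b c a' b' c' ∧
      ∃ (q1 : G.Walk u a') (q2 : G.Walk a' b') (q3 : G.Walk b' c') (q4 : G.Walk c' v),
        p = q1.append (q2.append (q3.append q4)) := by
  induction p with
  | nil =>
    rw [Walk.mem_support_nil_iff] at ha hb hc
    subst ha; subst hb; subst hc
    exact ⟨_, _, _, Or.inl ⟨rfl, rfl, rfl⟩, Walk.nil, Walk.nil, Walk.nil, Walk.nil, rfl⟩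
  | @cons s t v' h q ih =>
    by_cases hau : a = s
    · subst hau
      rcases order2 (Walk.cons h q) hb hc with ⟨q2, q3, q4, hq⟩ | ⟨q2, q3, q4, hq⟩
      · exact ⟨a, b, c, Or.inl ⟨rfl, rfl, rfl⟩, Walk.nil, q2, q3, q4, by rw [hq]; rfl⟩
      · exact ⟨a, c, b, Or.inr (Or.inl ⟨rfl, rfl, rfl⟩), Walk.nil, q2, q3, q4, by rw [hq]; rfl⟩
    · by_cases hbu : b = s
      · subst hbu
        rcases order2 (Walk.cons h q) ha hc with ⟨q2, q3, q4, hq⟩ | ⟨q2, q3, q4, hq⟩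
        · exact ⟨b, a, c, Or.inr (Or.inr (Or.inl ⟨rfl, rfl, rfl⟩)), Walk.nil, q2, q3, q4,
            by rw [hq]; rfl⟩
        · exact ⟨b, c, a, Or.inr (Or.inr (Or.inr (Or.inl ⟨rfl, rfl, rfl⟩))), Walk.nil, q2, q3, q4,
            by rw [hq]; rfl⟩
      · by_cases hcu : c = s
        · subst hcu
          rcases order2 (Walk.cons h q) ha hb with ⟨q2, q3, q4, hq⟩ | ⟨q2, q3, q4, hq⟩
          · exact ⟨c, a, b, Or.inr (Or.inr (Or.inr (Or.inr (Or.inl ⟨rfl, rfl, rfl⟩)))), Walk.nil,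
              q2, q3, q4, by rw [hq]; rfl⟩
          · exact ⟨c, b, a, Or.inr (Or.inr (Or.inr (Or.inr (Or.inr ⟨rfl, rfl, rfl⟩)))), Walk.nil,
              q2, q3, q4, by rw [hq]; rfl⟩
        · have ha' : a ∈ q.support := by
            rw [Walk.support_cons] at ha
            exact (List.mem_cons.mp ha).resolve_left hau
          have hb' : b ∈ q.support := by
            rw [Walk.support_cons] at hb
            exact (List.mem_cons.mp hb).resolve_left hbu
          have hc' : c ∈ q.support := by
            rw [Walk.support_cons] at hc
            exact (List.mem_cons.mp hc).resolve_left hcu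
          obtain ⟨a', b', c', hperm, q1, q2, q3, q4, hq⟩ := ih ha' hb' hc'
          exact ⟨a', b', c', hperm, Walk.cons h q1, q2, q3, q4, by rw [hq]; rfl⟩

lemma build (E : Set (Sym2 V)) {a b c d : V} (R1 : G.Walk a b) (R2 : G.Walk c d)
    (h1 : R1.IsPath) (h2 : R2.IsPath) (n1 : R1.edges ≠ []) (n2 : R2.edges ≠ [])
    (hd : ∀ e ∈ R1.edges, e ∉ R2.edges)
    (hcov : ∀ e, e ∈ E ↔ (e ∈ R1.edges ∨ e ∈ R2.edges)) :
    ∃ Ps, IsPathDecompOf G E Ps ∧ Ps.length = 2 := by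
  refine ⟨[⟨a, b, R1⟩, ⟨c, d, R2⟩], ⟨?_, ?_, ?_⟩, rfl⟩
  · intro p hp
    rcases List.mem_cons.mp hp with rfl | hp
    · exact ⟨h1, n1⟩
    · rcases List.mem_cons.mp hp with rfl | hp
      · exact ⟨h2, n2⟩
      · simp at hp
  · refine List.Pairwise.cons ?_ (List.pairwise_singleton _ _)
    intro q hq
    rcases List.mem_cons.mp hq with rfl | hq
    · exact hd
    · simp at hq
  · intro e
    rw [hcov]
    constructor
    · rintro (h | h)
      · exact ⟨⟨a, b, R1⟩, by simp, h⟩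
      · exact ⟨⟨c, d, R2⟩, by simp, h⟩
    · rintro ⟨p, hp, he⟩
      rcases List.mem_cons.mp hp with rfl | hp
      · exact Or.inl he
      · rcases List.mem_cons.mp hp with rfl | hp
        · exact Or.inr he
        · simp at hp


lemma core1 {u v a t1 t2 : V} (A : G.Walk u a) (D : G.Walk a v)
    (hP : (A.append D).IsPath)
    (ht1 : t1 ∉ (A.append D).support) (ht2 : t2 ∉ (A.append D).support)
    (h1 : G.Adj a t1) (h12 : G.Adj t1 t2) (h2 : G.Adj a t2)
    (E : Set (Sym2 V))
    (hE : ∀ e, e ∈ E ↔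
      (e ∈ (A.append D).edges ∨ e = s(a, t1) ∨ e = s(t1, t2) ∨ e = s(a, t2))) :
    ∃ Ps, IsPathDecompOf G E Ps ∧ Ps.length = 2 := by
  have hA : A.IsPath := hP.of_append_left
  have hD : D.IsPath := hP.of_append_right
  have ht1A : t1 ∉ A.support := fun h => ht1 ((Walk.mem_support_append_iff _ _).mpr (Or.inl h))
  have ht1D : t1 ∉ D.support := fun h => ht1 ((Walk.mem_support_append_iff _ _).mpr (Or.inr h))
  have ht2A : t2 ∉ A.support := fun h => ht2 ((Walk.mem_support_append_iff _ _).mpr (Or.inl h))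
  have ht2D : t2 ∉ D.support := fun h => ht2 ((Walk.mem_support_append_iff _ _).mpr (Or.inr h))
  have hedis : ∀ e ∈ A.edges, e ∉ D.edges := edges_disj hP.isTrail
  set R1 : G.Walk t2 u := Walk.cons h12.symm (Walk.cons h1.symm A.reverse) with hR1
  set R2 : G.Walk t2 v := Walk.cons h2.symm D with hR2
  have hR1p : R1.IsPath := by
    rw [hR1, Walk.cons_isPath_iff, Walk.cons_isPath_iff]
    refine ⟨⟨hA.reverse, ?_⟩, ?_⟩
    · rw [Walk.support_reverse, List.mem_reverse]; exact ht1A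
    · rw [Walk.support_cons, List.mem_cons]
      push_neg
      refine ⟨h12.ne', ?_⟩
      rw [Walk.support_reverse, List.mem_reverse]; exact ht2A
  have hR2p : R2.IsPath := by
    rw [hR2, Walk.cons_isPath_iff]
    exact ⟨hD, ht2D⟩
  have hR1e : R1.edges = s(t2, t1) :: s(t1, a) :: A.edges.reverse := by
    rw [hR1, Walk.edges_cons, Walk.edges_cons, Walk.edges_reverse]
  have hR2e : R2.edges = s(t2, a) :: D.edges := by rw [hR2, Walk.edges_cons]
  refine build E R1 R2 hR1p hR2p (by rw [hR1e]; simp) (by rw [hR2e]; simp) ?_ ?_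
  · intro e he
    rw [hR1e] at he
    rw [hR2e]
    have ht1a : t1 ≠ a := fun h => ht1A (h ▸ A.end_mem_support)
    have ht1t2 : t1 ≠ t2 := h12.ne
    rcases List.mem_cons.mp he with rfl | he
    · intro hmem
      rcases List.mem_cons.mp hmem with heq | hmem
      · rw [Sym2.eq_iff] at heq
        rcases heq with ⟨-, h'⟩ | ⟨h', -⟩
        · exact ht1a h'
        · exact ht2A (h'.symm ▸ A.end_mem_support)
      · exact ne_edge_left ht2D hmem
    · rcases List.mem_cons.mp he with rfl | he
      · intro hmem
        rcases List.mem_cons.mp hmem with heq | hmem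
        · rw [Sym2.eq_iff] at heq
          rcases heq with ⟨h', -⟩ | ⟨-, h'⟩
          · exact ht1t2 h'
          · exact ht2A (h' ▸ A.end_mem_support)
        · exact ne_edge_left ht1D hmem
      · rw [List.mem_reverse] at he
        intro hmem
        rcases List.mem_cons.mp hmem with rfl | hmem
        · exact ne_edge_left ht2A he
        · exact hedis e he hmem
  · intro e
    rw [hE, hR1e, hR2e, Walk.edges_append]
    rw [show s(t2, t1) = s(t1, t2) from Sym2.eq_swap,
      show s(t1, a) = s(a, t1) from Sym2.eq_swap,
      show s(t2, a) = s(a, t2) from Sym2.eq_swap]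
    simp only [List.mem_append, List.mem_cons, List.mem_reverse]
    tauto


set_option maxHeartbeats 1000000 in
lemma core2 {u v a b t : V} (A : G.Walk u a) (B : G.Walk a b) (C : G.Walk b v)
    (hP : (A.append (B.append C)).IsPath)
    (ht : t ∉ (A.append (B.append C)).support)
    (hab : G.Adj a b) (hbt : G.Adj b t) (hat : G.Adj a t)
    (hdab : s(a, b) ∉ (A.append (B.append C)).edges)
    (E : Set (Sym2 V))
    (hE : ∀ e, e ∈ E ↔ (e ∈ (A.append (B.append C)).edges ∨
      e = s(a, b) ∨ e = s(b, t) ∨ e = s(a, t))) :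
    ∃ Ps, IsPathDecompOf G E Ps ∧ Ps.length = 2 := by
  cases B with
  | nil => exact absurd hab G.irrefl
  | @cons _ m _ e1 q =>
    have hA : A.IsPath := hP.of_append_left
    have hWC : ((Walk.cons e1 q).append C).IsPath := hP.of_append_right
    have hW : (Walk.cons e1 q).IsPath := hWC.of_append_left
    have hC : C.IsPath := hWC.of_append_right
    have hq : q.IsPath := hW.of_cons
    have haq : a ∉ q.support := ((Walk.cons_isPath_iff _ _).mp hW).2
    have junc1 := eq_junction hP
    have junc2 := eq_junction hWC
    have hmW : m ∈ (Walk.cons e1 q).support := by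
      rw [Walk.support_cons]; exact List.mem_cons_of_mem _ q.start_mem_support
    have haW : a ∈ (Walk.cons e1 q).support := Walk.start_mem_support _
    have htA : t ∉ A.support := fun h => ht ((Walk.mem_support_append_iff _ _).mpr (Or.inl h))
    have htWC : t ∉ ((Walk.cons e1 q).append C).support :=
      fun h => ht ((Walk.mem_support_append_iff _ _).mpr (Or.inr h))
    have htW : t ∉ (Walk.cons e1 q).support :=
      fun h => htWC ((Walk.mem_support_append_iff _ _).mpr (Or.inl h))
    have htq : t ∉ q.support :=
      fun h => htW (by rw [Walk.support_cons]; exact List.mem_cons_of_mem _ h)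
    have htC : t ∉ C.support :=
      fun h => htWC ((Walk.mem_support_append_iff _ _).mpr (Or.inr h))
    have hta : t ≠ a := fun h => htW (h ▸ haW)
    have htb : t ≠ b := fun h => htq (h ▸ q.end_mem_support)
    have htm : t ≠ m := fun h => htq (h ▸ q.start_mem_support)
    have hmb : m ≠ b := by
      intro h
      subst h
      have hqnil : q = Walk.nil := (Walk.isPath_iff_eq_nil (p := q)).mp hq
      subst hqnil
      apply hdab
      rw [Walk.edges_append, Walk.edges_append, Walk.edges_cons]
      simp
    have hbA : b ∉ A.support := fun h => hab.ne (junc1 b h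
      ((Walk.mem_support_append_iff _ _).mpr (Or.inl (Walk.cons e1 q).end_mem_support))).symm
    have haC : a ∉ C.support := fun h => hab.ne (junc2 a haW h)
    have hmC : m ∉ C.support := fun h => hmb (junc2 m hmW h)
    have hAq : ∀ x ∈ q.support, x ∉ A.support := fun x hx h =>
      haq ((junc1 x h ((Walk.mem_support_append_iff _ _).mpr
        (Or.inl (by rw [Walk.support_cons]; exact List.mem_cons_of_mem _ hx)))) ▸ hx)
    have hamq : s(a, m) ∉ q.edges := ((Walk.isTrail_cons _ _).mp hW.isTrail).2
    have hdis1 : ∀ e ∈ A.edges, e ∉ ((Walk.cons e1 q).append C).edges := edges_disj hP.isTrail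
    have hdis2 : ∀ e ∈ (Walk.cons e1 q).edges, e ∉ C.edges := edges_disj hWC.isTrail
    have hsubq : ∀ e ∈ q.edges, e ∈ (A.append ((Walk.cons e1 q).append C)).edges := by
      intro e he
      rw [Walk.edges_append, Walk.edges_append, Walk.edges_cons]
      simp only [List.mem_append, List.mem_cons]
      tauto
    have hsubA : ∀ e ∈ A.edges, e ∈ (A.append ((Walk.cons e1 q).append C)).edges := by
      intro e he
      rw [Walk.edges_append]
      exact List.mem_append_left _ he
    set R1 : G.Walk m u := q.append (Walk.cons hbt (Walk.cons hat.symm A.reverse)) with hR1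
    set R2 : G.Walk m v := Walk.cons e1.symm (Walk.cons hab C) with hR2
    have hinner : (Walk.cons hbt (Walk.cons hat.symm A.reverse)).IsPath := by
      rw [Walk.cons_isPath_iff, Walk.cons_isPath_iff]
      refine ⟨⟨hA.reverse, ?_⟩, ?_⟩
      · rw [Walk.support_reverse, List.mem_reverse]; exact htA
      · rw [Walk.support_cons, List.mem_cons]
        push_neg
        refine ⟨hbt.ne, ?_⟩
        rw [Walk.support_reverse, List.mem_reverse]; exact hbA
    have hR1p : R1.IsPath := by
      rw [hR1]
      refine isPath_append hq hinner ?_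
      intro x hx hx2
      rw [Walk.support_cons, Walk.support_cons, Walk.support_reverse] at hx2
      rcases List.mem_cons.mp hx2 with rfl | hx2
      · rfl
      rcases List.mem_cons.mp hx2 with rfl | hx2
      · exact absurd hx htq
      · rw [List.mem_reverse] at hx2
        exact absurd hx2 (hAq x hx)
    have hR2p : R2.IsPath := by
      rw [hR2, Walk.cons_isPath_iff, Walk.cons_isPath_iff]
      refine ⟨⟨hC, haC⟩, ?_⟩
      rw [Walk.support_cons, List.mem_cons]
      push_neg
      exact ⟨e1.ne', hmC⟩
    have hR1e : R1.edges = q.edges ++ (s(b, t) :: s(t, a) :: A.edges.reverse) := by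
      rw [hR1, Walk.edges_append, Walk.edges_cons, Walk.edges_cons, Walk.edges_reverse]
    have hR2e : R2.edges = s(m, a) :: s(a, b) :: C.edges := by
      rw [hR2, Walk.edges_cons, Walk.edges_cons]
    refine build E R1 R2 hR1p hR2p (by rw [hR1e]; simp) (by rw [hR2e]; simp) ?_ ?_
    · intro e he
      rw [hR1e] at he
      rw [hR2e]
      intro hmem
      rcases List.mem_append.mp he with he | he
      · rcases List.mem_cons.mp hmem with heq | hmem
        · exact hamq (by rw [show s(a, m) = s(m, a) from Sym2.eq_swap, ← heq]; exact he)
        rcases List.mem_cons.mp hmem with heq | hmem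
        · exact hdab (heq ▸ hsubq e he)
        · exact hdis2 e (by rw [Walk.edges_cons]; exact List.mem_cons_of_mem _ he) hmem
      · rcases List.mem_cons.mp he with rfl | he
        · rcases List.mem_cons.mp hmem with heq | hmem
          · rw [Sym2.eq_iff] at heq
            rcases heq with ⟨-, h'⟩ | ⟨h', -⟩
            · exact hta h'
            · exact hab.ne h'.symm
          rcases List.mem_cons.mp hmem with heq | hmem
          · rw [Sym2.eq_iff] at heq
            rcases heq with ⟨h', -⟩ | ⟨-, h'⟩
            · exact hab.ne h'.symm
            · exact hta h'
          · exact ne_edge_right htC hmem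
        rcases List.mem_cons.mp he with rfl | he
        · rcases List.mem_cons.mp hmem with heq | hmem
          · rw [Sym2.eq_iff] at heq
            rcases heq with ⟨h', -⟩ | ⟨h', -⟩
            · exact htm h'
            · exact hta h'
          rcases List.mem_cons.mp hmem with heq | hmem
          · rw [Sym2.eq_iff] at heq
            rcases heq with ⟨h', -⟩ | ⟨h', -⟩
            · exact hta h'
            · exact htb h'
          · exact ne_edge_left htC hmem
        · rw [List.mem_reverse] at he
          rcases List.mem_cons.mp hmem with heq | hmem
          · refine hdis1 e he ?_
            rw [heq, show s(m, a) = s(a, m) from Sym2.eq_swap, Walk.edges_append,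
              Walk.edges_cons]
            simp
          rcases List.mem_cons.mp hmem with heq | hmem
          · exact hdab (heq ▸ hsubA e he)
          · refine hdis1 e he ?_
            rw [Walk.edges_append]
            exact List.mem_append_right _ hmem
    · intro e
      rw [hE, hR1e, hR2e, Walk.edges_append, Walk.edges_append, Walk.edges_cons]
      rw [show s(m, a) = s(a, m) from Sym2.eq_swap,
        show s(t, a) = s(a, t) from Sym2.eq_swap]
      simp only [List.mem_append, List.mem_cons, List.mem_reverse]
      tauto


set_option maxHeartbeats 1000000 in
lemma core3 {u v a b c : V} (A : G.Walk u a) (B : G.Walk a b) (F : G.Walk b c) (C : G.Walk c v)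
    (hP : (A.append (B.append (F.append C))).IsPath)
    (hab : G.Adj a b) (hbc : G.Adj b c) (hac : G.Adj a c)
    (hdab : s(a, b) ∉ (A.append (B.append (F.append C))).edges)
    (hdbc : s(b, c) ∉ (A.append (B.append (F.append C))).edges)
    (E : Set (Sym2 V))
    (hE : ∀ e, e ∈ E ↔ (e ∈ (A.append (B.append (F.append C))).edges ∨
      e = s(a, b) ∨ e = s(b, c) ∨ e = s(a, c))) :
    ∃ Ps, IsPathDecompOf G E Ps ∧ Ps.length = 2 := by
  cases B with
  | nil => exact absurd hab G.irrefl
  | @cons _ m _ e1 q =>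
    have hA : A.IsPath := hP.of_append_left
    have hWFC : ((Walk.cons e1 q).append (F.append C)).IsPath := hP.of_append_right
    have hW : (Walk.cons e1 q).IsPath := hWFC.of_append_left
    have hFC : (F.append C).IsPath := hWFC.of_append_right
    have hF : F.IsPath := hFC.of_append_left
    have hC : C.IsPath := hFC.of_append_right
    have hq : q.IsPath := hW.of_cons
    have haq : a ∉ q.support := ((Walk.cons_isPath_iff _ _).mp hW).2
    have junc1 := eq_junction hP
    have junc2 := eq_junction hWFC
    have junc3 := eq_junction hFC
    have hmW : m ∈ (Walk.cons e1 q).support := by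
      rw [Walk.support_cons]; exact List.mem_cons_of_mem _ q.start_mem_support
    have haW : a ∈ (Walk.cons e1 q).support := Walk.start_mem_support _
    have hbW : b ∈ (Walk.cons e1 q).support := Walk.end_mem_support _
    have hbF : b ∈ F.support := F.start_mem_support
    have hcF : c ∈ F.support := F.end_mem_support
    have hmb : m ≠ b := by
      intro h
      subst h
      have hqnil : q = Walk.nil := (Walk.isPath_iff_eq_nil (p := q)).mp hq
      subst hqnil
      apply hdab
      rw [Walk.edges_append, Walk.edges_append, Walk.edges_cons]
      simp
    have hcm : c ≠ m := by
      intro h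
      refine hbc.ne ?_
      have hcW : c ∈ (Walk.cons e1 q).support := by rw [h]; exact hmW
      exact (junc2 c hcW ((Walk.mem_support_append_iff _ _).mpr (Or.inl hcF))).symm
    have hbA : b ∉ A.support := fun h => hab.ne (junc1 b h
      ((Walk.mem_support_append_iff _ _).mpr (Or.inl hbW))).symm
    have hcA : c ∉ A.support := fun h => hac.ne (junc1 c h
      ((Walk.mem_support_append_iff _ _).mpr (Or.inr
        ((Walk.mem_support_append_iff _ _).mpr (Or.inl hcF))))).symm
    have haFC : a ∉ (F.append C).support := fun h => hab.ne (junc2 a haW h)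
    have haF : a ∉ F.support := fun h => haFC ((Walk.mem_support_append_iff _ _).mpr (Or.inl h))
    have haC : a ∉ C.support := fun h => haFC ((Walk.mem_support_append_iff _ _).mpr (Or.inr h))
    have hmFC : m ∉ (F.append C).support := fun h => hmb (junc2 m hmW h)
    have hmC : m ∉ C.support := fun h => hmFC ((Walk.mem_support_append_iff _ _).mpr (Or.inr h))
    have hbC : b ∉ C.support := fun h => hbc.ne (junc3 b hbF h)
    have hAq : ∀ x ∈ q.support, x ∉ A.support := fun x hx h =>
      haq ((junc1 x h ((Walk.mem_support_append_iff _ _).mpr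
        (Or.inl (by rw [Walk.support_cons]; exact List.mem_cons_of_mem _ hx)))) ▸ hx)
    have hAF : ∀ x ∈ F.support, x ∉ A.support := fun x hx h =>
      haF ((junc1 x h ((Walk.mem_support_append_iff _ _).mpr
        (Or.inr ((Walk.mem_support_append_iff _ _).mpr (Or.inl hx))))) ▸ hx)
    have hamq : s(a, m) ∉ q.edges := ((Walk.isTrail_cons _ _).mp hW.isTrail).2
    have hdis1 : ∀ e ∈ A.edges, e ∉ ((Walk.cons e1 q).append (F.append C)).edges :=
      edges_disj hP.isTrail
    have hdis2 : ∀ e ∈ (Walk.cons e1 q).edges, e ∉ (F.append C).edges := edges_disj hWFC.isTrail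
    have hdis3 : ∀ e ∈ F.edges, e ∉ C.edges := edges_disj hFC.isTrail
    have hsubq : ∀ e ∈ q.edges,
        e ∈ (A.append ((Walk.cons e1 q).append (F.append C))).edges := by
      intro e he
      rw [Walk.edges_append, Walk.edges_append, Walk.edges_cons]
      simp only [List.mem_append, List.mem_cons]
      tauto
    have hsubF : ∀ e ∈ F.edges,
        e ∈ (A.append ((Walk.cons e1 q).append (F.append C))).edges := by
      intro e he
      rw [Walk.edges_append, Walk.edges_append, Walk.edges_cons, Walk.edges_append]
      simp only [List.mem_append, List.mem_cons]
      tauto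
    have hsubA : ∀ e ∈ A.edges,
        e ∈ (A.append ((Walk.cons e1 q).append (F.append C))).edges := by
      intro e he
      rw [Walk.edges_append]
      exact List.mem_append_left _ he
    set R1 : G.Walk m u := (q.append F).append (Walk.cons hac.symm A.reverse) with hR1
    set R2 : G.Walk m v := Walk.cons e1.symm (Walk.cons hab (Walk.cons hbc C)) with hR2
    have hqF : (q.append F).IsPath := by
      refine isPath_append hq hF ?_
      intro x hx hx2
      exact junc2 x (by rw [Walk.support_cons]; exact List.mem_cons_of_mem _ hx)
        ((Walk.mem_support_append_iff _ _).mpr (Or.inl hx2))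
    have hinner : (Walk.cons hac.symm A.reverse).IsPath := by
      rw [Walk.cons_isPath_iff]
      refine ⟨hA.reverse, ?_⟩
      rw [Walk.support_reverse, List.mem_reverse]; exact hcA
    have hR1p : R1.IsPath := by
      rw [hR1]
      refine isPath_append hqF hinner ?_
      intro x hx hx2
      rw [Walk.support_cons, Walk.support_reverse] at hx2
      rcases List.mem_cons.mp hx2 with rfl | hx2
      · rfl
      · rw [List.mem_reverse] at hx2
        rcases (Walk.mem_support_append_iff _ _).mp hx with hx | hx
        · exact absurd hx2 (hAq x hx)
        · exact absurd hx2 (hAF x hx)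
    have hR2p : R2.IsPath := by
      rw [hR2, Walk.cons_isPath_iff, Walk.cons_isPath_iff, Walk.cons_isPath_iff]
      refine ⟨⟨⟨hC, hbC⟩, ?_⟩, ?_⟩
      · rw [Walk.support_cons, List.mem_cons]
        push_neg
        exact ⟨hab.ne, haC⟩
      · rw [Walk.support_cons, Walk.support_cons, List.mem_cons, List.mem_cons]
        push_neg
        exact ⟨e1.ne', hmb, hmC⟩
    have hR1e : R1.edges = (q.edges ++ F.edges) ++ (s(c, a) :: A.edges.reverse) := by
      rw [hR1, Walk.edges_append, Walk.edges_append, Walk.edges_cons, Walk.edges_reverse]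
    have hR2e : R2.edges = s(m, a) :: s(a, b) :: s(b, c) :: C.edges := by
      rw [hR2, Walk.edges_cons, Walk.edges_cons, Walk.edges_cons]
    have hamW : s(a, m) ∈ (Walk.cons e1 q).edges := by rw [Walk.edges_cons]; simp
    refine build E R1 R2 hR1p hR2p (by rw [hR1e]; simp) (by rw [hR2e]; simp) ?_ ?_
    · intro e he
      rw [hR1e] at he
      rw [hR2e]
      intro hmem
      rcases List.mem_append.mp he with he | he
      · rcases List.mem_append.mp he with he | he
        · -- e ∈ q.edges
          rcases List.mem_cons.mp hmem with heq | hmem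
          · exact hamq (by rw [show s(a, m) = s(m, a) from Sym2.eq_swap, ← heq]; exact he)
          rcases List.mem_cons.mp hmem with heq | hmem
          · exact hdab (heq ▸ hsubq e he)
          rcases List.mem_cons.mp hmem with heq | hmem
          · exact hdbc (heq ▸ hsubq e he)
          · exact hdis2 e (by rw [Walk.edges_cons]; exact List.mem_cons_of_mem _ he)
              ((by rw [Walk.edges_append]; exact List.mem_append_right _ hmem))
        · -- e ∈ F.edges
          rcases List.mem_cons.mp hmem with heq | hmem
          · refine hdis2 s(a, m) hamW ?_
            rw [show s(a, m) = s(m, a) from Sym2.eq_swap, ← heq, Walk.edges_append]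
            exact List.mem_append_left _ he
          rcases List.mem_cons.mp hmem with heq | hmem
          · exact hdab (heq ▸ hsubF e he)
          rcases List.mem_cons.mp hmem with heq | hmem
          · exact hdbc (heq ▸ hsubF e he)
          · exact hdis3 e he hmem
      · rcases List.mem_cons.mp he with rfl | he
        · -- e = s(c, a)
          rcases List.mem_cons.mp hmem with heq | hmem
          · rw [Sym2.eq_iff] at heq
            rcases heq with ⟨h', -⟩ | ⟨h', -⟩
            · exact hcm h'
            · exact hac.ne h'.symm
          rcases List.mem_cons.mp hmem with heq | hmem
          · rw [Sym2.eq_iff] at heq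
            rcases heq with ⟨h', -⟩ | ⟨h', -⟩
            · exact hac.ne h'.symm
            · exact hbc.ne h'.symm
          rcases List.mem_cons.mp hmem with heq | hmem
          · rw [Sym2.eq_iff] at heq
            rcases heq with ⟨h', -⟩ | ⟨-, h'⟩
            · exact hbc.ne h'.symm
            · exact hab.ne h'
          · exact ne_edge_right haC hmem
        · -- e ∈ A.edges.reverse
          rw [List.mem_reverse] at he
          rcases List.mem_cons.mp hmem with heq | hmem
          · refine hdis1 e he ?_
            rw [heq, show s(m, a) = s(a, m) from Sym2.eq_swap, Walk.edges_append,
              Walk.edges_cons]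
            simp
          rcases List.mem_cons.mp hmem with heq | hmem
          · exact hdab (heq ▸ hsubA e he)
          rcases List.mem_cons.mp hmem with heq | hmem
          · exact hdbc (heq ▸ hsubA e he)
          · refine hdis1 e he ?_
            rw [Walk.edges_append, Walk.edges_append]
            exact List.mem_append_right _ (List.mem_append_right _ hmem)
    · intro e
      rw [hE, hR1e, hR2e, Walk.edges_append, Walk.edges_append, Walk.edges_cons,
        Walk.edges_append]
      rw [show s(m, a) = s(a, m) from Sym2.eq_swap,
        show s(c, a) = s(a, c) from Sym2.eq_swap]
      simp only [List.mem_append, List.mem_cons, List.mem_reverse]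
      tauto


lemma case1 {u v a t1 t2 : V} (P : G.Walk u v) (hP : P.IsPath)
    (ha : a ∈ P.support) (ht1 : t1 ∉ P.support) (ht2 : t2 ∉ P.support)
    (h1 : G.Adj a t1) (h12 : G.Adj t1 t2) (h2 : G.Adj a t2)
    (E : Set (Sym2 V))
    (hE : ∀ e, e ∈ E ↔ (e ∈ P.edges ∨ e = s(a, t1) ∨ e = s(t1, t2) ∨ e = s(a, t2))) :
    ∃ Ps, IsPathDecompOf G E Ps ∧ Ps.length = 2 := by
  obtain ⟨A, D, rfl⟩ := Walk.mem_support_iff_exists_append.mp ha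
  exact core1 A D hP ht1 ht2 h1 h12 h2 E hE

lemma case2 {u v a b t : V} (P : G.Walk u v) (hP : P.IsPath)
    (ha : a ∈ P.support) (hb : b ∈ P.support) (ht : t ∉ P.support)
    (hab : G.Adj a b) (hbt : G.Adj b t) (hat : G.Adj a t)
    (hdab : s(a, b) ∉ P.edges)
    (E : Set (Sym2 V))
    (hE : ∀ e, e ∈ E ↔ (e ∈ P.edges ∨ e = s(a, b) ∨ e = s(b, t) ∨ e = s(a, t))) :
    ∃ Ps, IsPathDecompOf G E Ps ∧ Ps.length = 2 := by
  rcases order2 P ha hb with ⟨q1, q2, q3, rfl⟩ | ⟨q1, q2, q3, rfl⟩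
  · exact core2 q1 q2 q3 hP ht hab hbt hat hdab E hE
  · refine core2 q1 q2 q3 hP ht hab.symm hat hbt
      (by rwa [show s(b, a) = s(a, b) from Sym2.eq_swap]) E ?_
    intro e
    rw [hE e, show s(b, a) = s(a, b) from Sym2.eq_swap]
    tauto

lemma case3 {u v a b c : V} (P : G.Walk u v) (hP : P.IsPath)
    (ha : a ∈ P.support) (hb : b ∈ P.support) (hc : c ∈ P.support)
    (hab : G.Adj a b) (hbc : G.Adj b c) (hac : G.Adj a c)
    (hdab : s(a, b) ∉ P.edges) (hdbc : s(b, c) ∉ P.edges) (hdac : s(a, c) ∉ P.edges)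
    (E : Set (Sym2 V))
    (hE : ∀ e, e ∈ E ↔ (e ∈ P.edges ∨ e = s(a, b) ∨ e = s(b, c) ∨ e = s(a, c))) :
    ∃ Ps, IsPathDecompOf G E Ps ∧ Ps.length = 2 := by
  obtain ⟨a', b', c', hperm, q1, q2, q3, q4, rfl⟩ := order3 P ha hb hc
  rcases hperm with ⟨rfl, rfl, rfl⟩ | ⟨rfl, rfl, rfl⟩ | ⟨rfl, rfl, rfl⟩ | ⟨rfl, rfl, rfl⟩ |
    ⟨rfl, rfl, rfl⟩ | ⟨rfl, rfl, rfl⟩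
  · exact core3 q1 q2 q3 q4 hP hab hbc hac hdab hdbc E hE
  · refine core3 q1 q2 q3 q4 hP hac hbc.symm hab hdac
      (by rwa [show s(c, b) = s(b, c) from Sym2.eq_swap]) E ?_
    intro e
    rw [hE e, show s(c, b) = s(b, c) from Sym2.eq_swap]
    tauto
  · refine core3 q1 q2 q3 q4 hP hab.symm hac hbc
      (by rwa [show s(b, a) = s(a, b) from Sym2.eq_swap]) hdac E ?_
    intro e
    rw [hE e, show s(b, a) = s(a, b) from Sym2.eq_swap]
    tauto
  · refine core3 q1 q2 q3 q4 hP hbc hac.symm hab.symm hdbc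
      (by rwa [show s(c, a) = s(a, c) from Sym2.eq_swap]) E ?_
    intro e
    rw [hE e, show s(c, a) = s(a, c) from Sym2.eq_swap,
      show s(b, a) = s(a, b) from Sym2.eq_swap]
    tauto
  · refine core3 q1 q2 q3 q4 hP hac.symm hab hbc.symm
      (by rwa [show s(c, a) = s(a, c) from Sym2.eq_swap]) hdab E ?_
    intro e
    rw [hE e, show s(c, a) = s(a, c) from Sym2.eq_swap,
      show s(c, b) = s(b, c) from Sym2.eq_swap]
    tauto
  · refine core3 q1 q2 q3 q4 hP hbc.symm hab.symm hac.symm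
      (by rwa [show s(c, b) = s(b, c) from Sym2.eq_swap])
      (by rwa [show s(b, a) = s(a, b) from Sym2.eq_swap]) E ?_
    intro e
    rw [hE e, show s(c, b) = s(b, c) from Sym2.eq_swap,
      show s(b, a) = s(a, b) from Sym2.eq_swap,
      show s(c, a) = s(a, c) from Sym2.eq_swap]
    tauto

end TriHelp

/-- If `P` is a path in `G` and `T` is a triangle of `G` (on vertices
`x, y, z`) that is edge-disjoint from `P` and shares at least one vertex with
`P`, then the edges of `P` together with the edges of `T` can be decomposed
into exactly two paths of `G`. -/
theorem path_plus_intersecting_triangle {V : Type*} (G : SimpleGraph V) {u v : V}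
    (P : G.Walk u v) (hP : P.IsPath) (x y z : V)
    (hxy : G.Adj x y) (hyz : G.Adj y z) (hxz : G.Adj x z)
    (hdisj : ∀ e ∈ ({s(x, y), s(y, z), s(x, z)} : Set (Sym2 V)), e ∉ P.edges)
    (hshare : x ∈ P.support ∨ y ∈ P.support ∨ z ∈ P.support) :
    ∃ Ps, IsPathDecompOf G ({e | e ∈ P.edges} ∪ {s(x, y), s(y, z), s(x, z)}) Ps ∧
      Ps.length = 2 := by
  classical
  have key : ∀ e, e ∈ ({e | e ∈ P.edges} ∪ {s(x, y), s(y, z), s(x, z)} : Set (Sym2 V)) ↔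
      (e ∈ P.edges ∨ e = s(x, y) ∨ e = s(y, z) ∨ e = s(x, z)) := by
    intro e
    simp only [Set.mem_union, Set.mem_setOf_eq, Set.mem_insert_iff, Set.mem_singleton_iff]
  have hdxy : s(x, y) ∉ P.edges := hdisj _ (by simp)
  have hdyz : s(y, z) ∉ P.edges := hdisj _ (by simp)
  have hdxz : s(x, z) ∉ P.edges := hdisj _ (by simp)
  by_cases hx : x ∈ P.support <;> by_cases hy : y ∈ P.support <;> by_cases hz : z ∈ P.support
  · exact TriHelp.case3 P hP hx hy hz hxy hyz hxz hdxy hdyz hdxz _ key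
  · exact TriHelp.case2 P hP hx hy hz hxy hyz hxz hdxy _ key
  · refine TriHelp.case2 P hP hx hz hy hxz hyz.symm hxy hdxz _ ?_
    intro e
    rw [key e, show s(z, y) = s(y, z) from Sym2.eq_swap]
    tauto
  · exact TriHelp.case1 P hP hx hy hz hxy hyz hxz _ key
  · refine TriHelp.case2 P hP hy hz hx hyz hxz.symm hxy.symm hdyz _ ?_
    intro e
    rw [key e, show s(z, x) = s(x, z) from Sym2.eq_swap,
      show s(y, x) = s(x, y) from Sym2.eq_swap]
    tauto
  · refine TriHelp.case1 P hP hy hx hz hxy.symm hxz hyz _ ?_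
    intro e
    rw [key e, show s(y, x) = s(x, y) from Sym2.eq_swap]
    tauto
  · refine TriHelp.case1 P hP hz hx hy hxz.symm hxy hyz.symm _ ?_
    intro e
    rw [key e, show s(z, x) = s(x, z) from Sym2.eq_swap,
      show s(z, y) = s(y, z) from Sym2.eq_swap]
    tauto
  · rcases hshare with h | h | h
    · exact absurd h hx
    · exact absurd h hy
    · exact absurd h hz
end

section
/- Let G be a connected graph, let u and v be two vertices of G of degree at most 2, and let C be a cycle of G of length 3 or 4 that contains every edge of G incident to u or to v, with E(G) ≠ E(C). If the edges of G − E(C) can be decomposed into k ≥ 1 paths, then the edges of G can be decomposed into at most k + 1 paths. -/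
open SimpleGraph

namespace DecompAux

variable {V : Type*} {G : SimpleGraph V}

lemma isPath_append {a x b : V} {p : G.Walk a x} {q : G.Walk x b}
    (hp : p.IsPath) (hq : q.IsPath)
    (h : ∀ y, y ∈ p.support → y ∈ q.support → y = x) : (p.append q).IsPath := by
  rw [Walk.isPath_def, Walk.support_append]
  refine List.Nodup.append hp.support_nodup ?_ ?_
  · exact hq.support_nodup.tail
  · intro y hy1 hy2
    have hy2' : y ∈ q.support := List.mem_of_mem_tail hy2
    have : y = x := h y hy1 hy2'
    subst this
    have := hq.support_nodup
    rw [q.support_eq_cons] at this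
    exact (List.nodup_cons.mp this).1 hy2

lemma mem_edge_of_mem_support {a b y : V} (p : G.Walk a b) (hy : y ∈ p.support)
    (hne : p.edges ≠ []) : ∃ e ∈ p.edges, y ∈ e := by
  induction p with
  | nil => simp at hne
  | @cons c d b h q ih =>
    rw [Walk.support_cons] at hy
    rcases List.mem_cons.mp hy with rfl | hy'
    · exact ⟨s(y, d), by simp, by simp⟩
    · by_cases hq : q.edges = []
      · cases q with
        | nil =>
          simp only [Walk.support_nil, List.mem_singleton] at hy'
          subst hy'
          exact ⟨s(c, y), by simp, by simp⟩
        | cons h' q' => simp [Walk.edges_cons] at hq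
      · obtain ⟨e, he, hye⟩ := ih hy' hq
        exact ⟨e, by simp [Walk.edges_cons, he], hye⟩

lemma path_start_ne_end_of_pos {a : V} {p : G.Walk a a} (hp : p.IsPath)
    (h : 0 < p.length) : False := by
  rw [Walk.isPath_iff_eq_nil] at hp
  subst hp
  simp at h

lemma closed_mem_tail {w y : V} (c : G.Walk w w) (hlen : 0 < c.length)
    (hy : y ∈ c.support) : y ∈ c.support.tail := by
  cases c with
  | nil => simp at hlen
  | cons h q =>
    rw [Walk.support_cons] at hy ⊢
    rcases List.mem_cons.mp hy with rfl | hy'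
    · simpa using q.end_mem_support
    · simpa using hy'


lemma boundary {w a b : V} (C : G.Walk w w) (W : G.Walk a b) (ha : a ∈ C.support)
    (hW : ∃ e ∈ W.edges, e ∉ C.edges) :
    ∃ x ∈ C.support, ∃ y, G.Adj x y ∧ s(x, y) ∉ C.edges := by
  induction W with
  | nil => simp at hW
  | @cons c d b h q ih =>
    by_cases hfirst : s(c, d) ∈ C.edges
    · have hd : d ∈ C.support := C.snd_mem_support_of_mem_edges hfirst
      apply ih hd
      obtain ⟨e, he, heC⟩ := hW
      rw [Walk.edges_cons, List.mem_cons] at he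
      rcases he with rfl | he
      · exact absurd hfirst heC
      · exact ⟨e, he, heC⟩
    · exact ⟨c, ha, d, h, hfirst⟩

lemma cycle_split {x u v z : V} (C₁ : G.Walk x x)
    (hC : C₁.IsCycle) (hlen : C₁.length = 3 ∨ C₁.length = 4)
    (hsub : ∀ y ∈ C₁.support, y = x ∨ y = u ∨ y = v ∨ y = z) :
    ∃ (p : V) (_ : G.Adj x p) (PL : G.Walk x p), PL.IsPath ∧ (p = u ∨ p = v) ∧
      (∀ y ∈ PL.support, y = x ∨ y = u ∨ y = v ∨ y = z) ∧
      (s(x, p) :: PL.edges).Perm C₁.edges ∧ PL.edges ≠ [] := by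
  cases C₁ with
  | nil => simp at hlen
  | @cons _ p₁ _ h T =>
    rw [Walk.cons_isCycle_iff] at hC
    obtain ⟨hT, hsxT⟩ := hC
    have hTlen : 2 ≤ T.length := by
      rw [Walk.length_cons] at hlen; omega
    have hTne : T.edges ≠ [] := by
      intro hnil
      have := T.length_edges
      rw [hnil] at this
      simp at this
      omega
    have hp₁x : p₁ ≠ x := by
      intro hEq
      subst hEq
      exact path_start_ne_end_of_pos hT (by omega)
    have hsubT : ∀ y ∈ T.support, y = x ∨ y = u ∨ y = v ∨ y = z := by
      intro y hy
      exact hsub y (by rw [Walk.support_cons]; exact List.mem_cons_of_mem _ hy)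
    by_cases hp₁ : p₁ = u ∨ p₁ = v
    · refine ⟨p₁, h, T.reverse, hT.reverse, hp₁, ?_, ?_, ?_⟩
      · intro y hy
        rw [Walk.support_reverse, List.mem_reverse] at hy
        exact hsubT y hy
      · rw [Walk.edges_cons, Walk.edges_reverse]
        exact List.Perm.cons _ (List.reverse_perm _)
      · rw [Walk.edges_reverse]
        simpa using hTne
    · have hp₁z : p₁ = z := by
        rcases hsubT p₁ T.start_mem_support with h1 | h1 | h1 | h1 <;> tauto
      subst hp₁z
      -- now z has been replaced by p₁
      obtain ⟨p₂, h₂, T₂, hTrev⟩ := Walk.exists_eq_cons_of_ne (Ne.symm hp₁x) T.reverse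
      have hTrevPath : T.reverse.IsPath := hT.reverse
      rw [hTrev, Walk.cons_isPath_iff] at hTrevPath
      obtain ⟨hT₂, hxT₂⟩ := hTrevPath
      have hT₂len : 1 ≤ T₂.length := by
        have := T.length_reverse
        rw [hTrev, Walk.length_cons] at this
        omega
      have hp₂z : p₂ ≠ p₁ := by
        intro hEq
        subst hEq
        exact path_start_ne_end_of_pos hT₂ (by omega)
      have hp₂T : p₂ ∈ T.support := by
        have : p₂ ∈ T.reverse.support := by
          rw [hTrev, Walk.support_cons]
          exact List.mem_cons_of_mem _ T₂.start_mem_support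
        rwa [Walk.support_reverse, List.mem_reverse] at this
      have hp₂x : p₂ ≠ x := by
        intro hEq
        subst hEq
        exact hxT₂ T₂.start_mem_support
      have hp₂ : p₂ = u ∨ p₂ = v := by
        rcases hsubT p₂ hp₂T with h1 | h1 | h1 | h1 <;> tauto
      refine ⟨p₂, h₂, Walk.cons h T₂.reverse, ?_, hp₂, ?_, ?_, ?_⟩
      · rw [Walk.cons_isPath_iff]
        refine ⟨hT₂.reverse, ?_⟩
        rwa [Walk.support_reverse, List.mem_reverse]
      · intro y hy
        rw [Walk.support_cons, List.mem_cons] at hy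
        rcases hy with rfl | hy
        · left; rfl
        · rw [Walk.support_reverse, List.mem_reverse] at hy
          have : y ∈ T.reverse.support := by
            rw [hTrev, Walk.support_cons]
            exact List.mem_cons_of_mem _ hy
          rw [Walk.support_reverse, List.mem_reverse] at this
          exact hsubT y this
      · rw [Walk.edges_cons, Walk.edges_cons, Walk.edges_reverse]
        have hrevE : T.reverse.edges = s(x, p₂) :: T₂.edges := by
          rw [hTrev, Walk.edges_cons]
        have hTe : T.edges.Perm (s(x, p₂) :: T₂.edges) := by
          rw [← hrevE, Walk.edges_reverse]
          exact (List.reverse_perm _).symm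
        refine List.Perm.trans
          (List.Perm.cons _ (List.Perm.cons _ (List.reverse_perm _))) ?_
        refine List.Perm.trans (List.Perm.swap _ _ _) ?_
        exact List.Perm.cons _ hTe.symm
      · simp [Walk.edges_cons]

end DecompAux

/-- Let `G` be connected, let `u ≠ v` be vertices of degree at most 2 and let
`C` be a cycle of length 3 or 4 containing every edge of `G` incident to `u` or
to `v`, with `E(G) ≠ E(C)`.  If the edges of `G − E(C)` can be decomposed into
`k ≥ 1` paths, then the edges of `G` can be decomposed into at most `k + 1`
paths. -/


theorem decomp_extends_over_small_cycle {V : Type*} [Fintype V] (G : SimpleGraph V)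
    [DecidableRel G.Adj] (hconn : G.Connected) (u v : V) (huv : u ≠ v)
    (hu : G.degree u ≤ 2) (hv : G.degree v ≤ 2) {w : V} (C : G.Walk w w)
    (hC : C.IsCycle) (hlen : C.length = 3 ∨ C.length = 4)
    (hcov : ∀ e ∈ G.edgeSet, (u ∈ e ∨ v ∈ e) → e ∈ C.edges)
    (hne : G.edgeSet ≠ {e | e ∈ C.edges}) (k : ℕ) (hk : 1 ≤ k)
    (hdec : ∃ Ps, IsPathDecompOf G {e ∈ G.edgeSet | e ∉ C.edges} Ps ∧ Ps.length = k) :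
    ∃ Ps, IsPathDecompOf G G.edgeSet Ps ∧ Ps.length ≤ k + 1 := by
  classical
  obtain ⟨Ps, ⟨h1, h2, h3⟩, hlenPs⟩ := hdec
  have hCE : ∀ e ∈ C.edges, e ∈ G.edgeSet := fun e he => C.edges_subset_edgeSet he
  have hClen3 : 0 < C.length := by rcases hlen with h | h <;> omega
  -- u and v do not appear in any path of the decomposition
  have hfresh : ∀ P ∈ Ps, ∀ y : V, (y = u ∨ y = v) → y ∉ P.2.2.support := by
    intro P hP y hy hysup
    obtain ⟨e, heP, hye⟩ := DecompAux.mem_edge_of_mem_support P.2.2 hysup (h1 P hP).2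
    have heE : e ∈ G.edgeSet ∧ e ∉ C.edges := (h3 e).mpr ⟨P, hP, heP⟩
    refine heE.2 (hcov e heE.1 ?_)
    rcases hy with rfl | rfl
    · exact Or.inl hye
    · exact Or.inr hye
  -- there is an edge outside C
  obtain ⟨e₀, he₀G, he₀C⟩ : ∃ e, e ∈ G.edgeSet ∧ e ∉ C.edges := by
    by_contra hcon
    push_neg at hcon
    apply hne
    ext e
    exact ⟨fun he => hcon e he, fun he => hCE e he⟩
  -- find a vertex x on C with an incident edge outside C
  revert he₀G he₀C
  induction e₀ using Sym2.ind with | _ a₀ b₀ => ?_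
  intro he₀G he₀C
  have hadj₀ : G.Adj a₀ b₀ := he₀G
  obtain ⟨W⟩ := hconn w a₀
  obtain ⟨x, hxC, y, hxy, hxyC⟩ :=
    DecompAux.boundary C (W.concat hadj₀) C.start_mem_support
      ⟨s(a₀, b₀), by simp [Walk.edges_concat], he₀C⟩
  have hxu : x ≠ u := by
    intro h
    exact hxyC (hcov _ (G.mem_edgeSet.mpr hxy) (Or.inl (by rw [h]; simp)))
  have hxv : x ≠ v := by
    intro h
    exact hxyC (hcov _ (G.mem_edgeSet.mpr hxy) (Or.inr (by rw [h]; simp)))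
  -- u and v lie on C
  have hnbr : ∀ y₁ y₂ : V, y₁ ≠ y₂ → ∃ t, G.Adj y₁ t := by
    intro y₁ y₂ hne'
    obtain ⟨W'⟩ := hconn y₁ y₂
    cases W' with
    | nil => exact absurd rfl hne'
    | cons h' q => exact ⟨_, h'⟩
  have huC : u ∈ C.support := by
    obtain ⟨t, ht⟩ := hnbr u v huv
    exact C.fst_mem_support_of_mem_edges
      (hcov s(u, t) (G.mem_edgeSet.mpr ht) (Or.inl (by simp)))
  have hvC : v ∈ C.support := by
    obtain ⟨t, ht⟩ := hnbr v u huv.symm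
    exact C.fst_mem_support_of_mem_edges
      (hcov s(v, t) (G.mem_edgeSet.mpr ht) (Or.inr (by simp)))
  -- rotate C to start at x
  set C₁ := C.rotate x hxC with hC₁def
  have hC₁ : C₁.IsCycle := hC.rotate hxC
  have hC₁lenE : C₁.length = C.length := by
    have h₁ := (C.rotate_edges x hxC).perm.length_eq
    rw [C₁.length_edges, C.length_edges] at h₁
    exact h₁
  have hC₁len : C₁.length = 3 ∨ C₁.length = 4 := by rw [hC₁lenE]; exact hlen
  have hC₁pos : 0 < C₁.length := by omega
  have hmem_tail : ∀ y' : V, y' ∈ C.support → y' ∈ C₁.support.tail := by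
    intro y' hy'
    have h' := DecompAux.closed_mem_tail C hClen3 hy'
    exact ((C.support_rotate x hxC).mem_iff).mpr h'
  have hxL : x ∈ C₁.support.tail := DecompAux.closed_mem_tail C₁ hC₁pos C₁.start_mem_support
  have huL : u ∈ C₁.support.tail := hmem_tail u huC
  have hvL : v ∈ C₁.support.tail := hmem_tail v hvC
  have hLnodup : C₁.support.tail.Nodup := hC₁.support_nodup
  have hLlen : C₁.support.tail.length ≤ 4 := by
    have h₁ := C₁.length_support
    have h₂ : C₁.support.tail.length = C₁.support.length - 1 := by
      simp [List.length_tail]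
    omega
  -- at most one vertex of C other than x, u, v
  have key : ∀ y₁ y₂ : V, y₁ ∈ C₁.support.tail → y₂ ∈ C₁.support.tail →
      y₁ ≠ x → y₁ ≠ u → y₁ ≠ v → y₂ ≠ x → y₂ ≠ u → y₂ ≠ v → y₁ = y₂ := by
    intro y₁ y₂ hm₁ hm₂ h₁x h₁u h₁v h₂x h₂u h₂v
    by_contra hne₁₂
    have hMnodup : ([x, u, v, y₁, y₂] : List V).Nodup := by
      have q1 : x ≠ y₁ := fun h => h₁x h.symm
      have q2 : x ≠ y₂ := fun h => h₂x h.symm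
      have q3 : u ≠ y₁ := fun h => h₁u h.symm
      have q4 : u ≠ y₂ := fun h => h₂u h.symm
      have q5 : v ≠ y₁ := fun h => h₁v h.symm
      have q6 : v ≠ y₂ := fun h => h₂v h.symm
      simp [List.nodup_cons, hxu, hxv, q1, q2, huv, q3, q4, q5, q6, hne₁₂]
    have hMsub : ([x, u, v, y₁, y₂] : List V) ⊆ C₁.support.tail := by
      intro t ht
      simp only [List.mem_cons, List.not_mem_nil, or_false] at ht
      rcases ht with rfl | rfl | rfl | rfl | rfl
      exacts [hxL, huL, hvL, hm₁, hm₂]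
    have := (List.subperm_of_subset hMnodup hMsub).length_le
    simp at this
    omega
  -- the fourth vertex z
  obtain ⟨z, hzx, hsubC₁⟩ :
      ∃ z : V, z ≠ x ∧ ∀ y' ∈ C₁.support, y' = x ∨ y' = u ∨ y' = v ∨ y' = z := by
    by_cases hzE : ∃ t ∈ C₁.support.tail, t ≠ x ∧ t ≠ u ∧ t ≠ v
    · obtain ⟨z, hzL, hz1, hz2, hz3⟩ := hzE
      refine ⟨z, hz1, ?_⟩
      intro y' hy'
      rw [C₁.support_eq_cons, List.mem_cons] at hy'
      rcases hy' with rfl | hy'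
      · exact Or.inl rfl
      by_cases e1 : y' = x
      · exact Or.inl e1
      by_cases e2 : y' = u
      · exact Or.inr (Or.inl e2)
      by_cases e3 : y' = v
      · exact Or.inr (Or.inr (Or.inl e3))
      · exact Or.inr (Or.inr (Or.inr (key y' z hy' hzL e1 e2 e3 hz1 hz2 hz3)))
    · push_neg at hzE
      refine ⟨u, Ne.symm hxu, ?_⟩
      intro y' hy'
      rw [C₁.support_eq_cons, List.mem_cons] at hy'
      rcases hy' with rfl | hy'
      · exact Or.inl rfl
      by_cases e1 : y' = x
      · exact Or.inl e1
      by_cases e2 : y' = u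
      · exact Or.inr (Or.inl e2)
      by_cases e3 : y' = v
      · exact Or.inr (Or.inr (Or.inl e3))
      · exact absurd (hzE y' hy' e1) (by simp [e2, e3])
  -- split the cycle into a long and short piece from x
  obtain ⟨p, hxp, PL, hPLpath, hpuv, hPLsup, hPLperm₁, hPLne⟩ :=
    DecompAux.cycle_split C₁ hC₁ hC₁len hsubC₁
  have hCperm : (s(x, p) :: PL.edges).Perm C.edges :=
    hPLperm₁.trans (C.rotate_edges x hxC).perm
  have hCnodup : C.edges.Nodup := hC.isCircuit.isTrail.edges_nodup
  have hconsNodup : (s(x, p) :: PL.edges).Nodup := hCperm.nodup_iff.mpr hCnodup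
  have hsxpC : s(x, p) ∈ C.edges := hCperm.mem_iff.mp (List.mem_cons_self)
  have hPLC : ∀ e ∈ PL.edges, e ∈ C.edges :=
    fun e he => hCperm.mem_iff.mp (List.mem_cons_of_mem _ he)
  -- the path Q of the decomposition through x
  have hsxyE : s(x, y) ∈ ({e ∈ G.edgeSet | e ∉ C.edges} : Set (Sym2 V)) :=
    ⟨G.mem_edgeSet.mpr hxy, hxyC⟩
  obtain ⟨Q, hQmem, hxyQ⟩ := (h3 _).mp hsxyE
  have hQpath : Q.2.2.IsPath := (h1 Q hQmem).1
  have hxQ : x ∈ Q.2.2.support := Q.2.2.fst_mem_support_of_mem_edges hxyQ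
  obtain ⟨l1, l2, hPsSplit⟩ := List.append_of_mem hQmem
  have hPE : ∀ P ∈ Ps, ∀ e ∈ P.2.2.edges, e ∈ G.edgeSet ∧ e ∉ C.edges :=
    fun P hP e he => (h3 e).mpr ⟨P, hP, he⟩
  -- split Q at x, with z avoiding the incoming half
  obtain ⟨c, d, Q1, Q2, hQ1path, hQ2path, hzQ1, hint, hQperm, hQ1sub, hQ2sub⟩ :
      ∃ (c d : V) (Q1 : G.Walk c x) (Q2 : G.Walk x d), Q1.IsPath ∧ Q2.IsPath ∧
        z ∉ Q1.support ∧ (∀ y', y' ∈ Q1.support → y' ∈ Q2.support → y' = x) ∧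
        (Q1.edges ++ Q2.edges).Perm Q.2.2.edges ∧
        (∀ y' ∈ Q1.support, y' ∈ Q.2.2.support) ∧
        (∀ y' ∈ Q2.support, y' ∈ Q.2.2.support) := by
    have hspec : (Q.2.2.takeUntil x hxQ).append (Q.2.2.dropUntil x hxQ) = Q.2.2 :=
      Q.2.2.take_spec hxQ
    set T1 := Q.2.2.takeUntil x hxQ with hT1def
    set T2 := Q.2.2.dropUntil x hxQ with hT2def
    have hT1 : T1.IsPath := hQpath.takeUntil hxQ
    have hT2 : T2.IsPath := hQpath.dropUntil hxQ
    have hnd : (T1.support ++ T2.support.tail).Nodup := by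
      rw [← Walk.support_append, hspec]
      exact hQpath.support_nodup
    have hint0 : ∀ y', y' ∈ T1.support → y' ∈ T2.support → y' = x := by
      intro y' h1' h2'
      rw [T2.support_eq_cons, List.mem_cons] at h2'
      rcases h2' with h2' | h2'
      · exact h2'
      · exact absurd h2' (List.disjoint_of_nodup_append hnd h1')
    have hedges : Q.2.2.edges = T1.edges ++ T2.edges := by
      conv_lhs => rw [← hspec]
      rw [Walk.edges_append]
    have hsub1 : ∀ y' ∈ T1.support, y' ∈ Q.2.2.support :=
      fun y' h => Q.2.2.support_takeUntil_subset hxQ h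
    have hsub2 : ∀ y' ∈ T2.support, y' ∈ Q.2.2.support :=
      fun y' h => Q.2.2.support_dropUntil_subset hxQ h
    by_cases hzT1 : z ∈ T1.support
    · have hzT2 : z ∉ T2.support := fun h => hzx (hint0 z hzT1 h)
      refine ⟨_, _, T2.reverse, T1.reverse, hT2.reverse, hT1.reverse, ?_, ?_, ?_, ?_, ?_⟩
      · rw [Walk.support_reverse, List.mem_reverse]
        exact hzT2
      · intro y' hy1 hy2
        rw [Walk.support_reverse, List.mem_reverse] at hy1 hy2
        exact hint0 y' hy2 hy1
      · rw [Walk.edges_reverse, Walk.edges_reverse, hedges]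
        exact ((List.reverse_perm _).append (List.reverse_perm _)).trans
          List.perm_append_comm
      · intro y' h
        rw [Walk.support_reverse, List.mem_reverse] at h
        exact hsub2 y' h
      · intro y' h
        rw [Walk.support_reverse, List.mem_reverse] at h
        exact hsub1 y' h
    · exact ⟨_, _, T1, T2, hT1, hT2, hzT1, hint0, by rw [hedges], hsub1, hsub2⟩
  have huQ1 : u ∉ Q1.support := fun h => hfresh Q hQmem u (Or.inl rfl) (hQ1sub u h)
  have hvQ1 : v ∉ Q1.support := fun h => hfresh Q hQmem v (Or.inr rfl) (hQ1sub v h)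
  have huQ2 : u ∉ Q2.support := fun h => hfresh Q hQmem u (Or.inl rfl) (hQ2sub u h)
  have hvQ2 : v ∉ Q2.support := fun h => hfresh Q hQmem v (Or.inr rfl) (hQ2sub v h)
  -- the two new paths
  have hNP1path : (Q1.append PL).IsPath := by
    refine DecompAux.isPath_append hQ1path hPLpath ?_
    intro y' hy1 hy2
    rcases hPLsup y' hy2 with rfl | rfl | rfl | rfl
    · rfl
    · exact absurd hy1 huQ1
    · exact absurd hy1 hvQ1
    · exact absurd hy1 hzQ1
  have hpQ2 : p ∉ Q2.support := by
    rcases hpuv with rfl | rfl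
    · exact huQ2
    · exact hvQ2
  have hNP2path : (Walk.cons hxp.symm Q2).IsPath := hQ2path.cons hpQ2
  have hNP1edges : (Q1.append PL).edges = Q1.edges ++ PL.edges := Walk.edges_append _ _
  have hNP2edges : (Walk.cons hxp.symm Q2).edges = s(p, x) :: Q2.edges :=
    Walk.edges_cons _ _
  have hspx : s(p, x) = s(x, p) := Sym2.eq_swap
  have hQ1E : ∀ e ∈ Q1.edges, e ∈ Q.2.2.edges :=
    fun e he => hQperm.mem_iff.mp (List.mem_append_left _ he)
  have hQ2E : ∀ e ∈ Q2.edges, e ∈ Q.2.2.edges :=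
    fun e he => hQperm.mem_iff.mp (List.mem_append_right _ he)
  have hQedgesE : ∀ e ∈ Q.2.2.edges, e ∈ G.edgeSet ∧ e ∉ C.edges := hPE Q hQmem
  have hQnodup : Q.2.2.edges.Nodup := hQpath.isTrail.edges_nodup
  have hQ12nodup : (Q1.edges ++ Q2.edges).Nodup := hQperm.nodup_iff.mpr hQnodup
  have hdisj12 : ∀ e ∈ Q1.edges, e ∉ Q2.edges :=
    fun e he => List.disjoint_of_nodup_append hQ12nodup he
  -- pairwise structure of the old decomposition
  rw [hPsSplit, List.pairwise_append] at h2
  obtain ⟨hp_l1, hp_Ql2, hcross⟩ := h2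
  rw [List.pairwise_cons] at hp_Ql2
  obtain ⟨hQ_l2, hp_l2⟩ := hp_Ql2
  have hrest_mem : ∀ R ∈ l1 ++ l2, R ∈ Ps := by
    intro R hR
    rw [hPsSplit]
    rcases List.mem_append.mp hR with h | h
    · exact List.mem_append_left _ h
    · exact List.mem_append_right _ (List.mem_cons_of_mem _ h)
  have hdisjQrest : ∀ R ∈ l1 ++ l2, ∀ e, e ∈ Q.2.2.edges → e ∉ R.2.2.edges := by
    intro R hR e heQ heR
    rcases List.mem_append.mp hR with hR' | hR'
    · exact hcross R hR' Q (List.mem_cons_self) e heR heQ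
    · exact hQ_l2 R hR' e heQ heR
  -- assemble the new decomposition
  refine ⟨⟨c, p, Q1.append PL⟩ :: ⟨p, d, Walk.cons hxp.symm Q2⟩ :: (l1 ++ l2),
    ⟨?_, ?_, ?_⟩, ?_⟩
  · intro P hP
    rcases List.mem_cons.mp hP with rfl | hP
    · refine ⟨hNP1path, ?_⟩
      rw [hNP1edges]
      intro hcon
      exact hPLne (List.append_eq_nil_iff.mp hcon).2
    rcases List.mem_cons.mp hP with rfl | hP
    · refine ⟨hNP2path, ?_⟩
      rw [hNP2edges]
      exact List.cons_ne_nil _ _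
    · exact h1 P (hrest_mem P hP)
  · rw [List.pairwise_cons]
    constructor
    · intro P hP e heNP1
      have heNP1' : e ∈ Q1.edges ∨ e ∈ PL.edges := by
        rw [hNP1edges] at heNP1
        exact List.mem_append.mp heNP1
      rcases List.mem_cons.mp hP with rfl | hP
      · rw [hNP2edges]
        intro hcon
        rcases List.mem_cons.mp hcon with rfl | hcon
        · rcases heNP1' with h' | h'
          · exact (hQedgesE _ (hQ1E _ h')).2 (hspx ▸ hsxpC)
          · exact (List.nodup_cons.mp hconsNodup).1 (hspx ▸ h')
        · rcases heNP1' with h' | h'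
          · exact hdisj12 e h' hcon
          · exact (hQedgesE e (hQ2E e hcon)).2 (hPLC e h')
      · intro hcon
        have hconE := hPE P (hrest_mem P hP) e hcon
        rcases heNP1' with h' | h'
        · exact hdisjQrest P hP e (hQ1E e h') hcon
        · exact hconE.2 (hPLC e h')
    rw [List.pairwise_cons]
    refine ⟨?_, ?_⟩
    · intro P hP e heNP2 hcon
      have heNP2' : e = s(p, x) ∨ e ∈ Q2.edges := by
        rw [hNP2edges] at heNP2
        exact List.mem_cons.mp heNP2
      have hconE := hPE P (hrest_mem P hP) e hcon
      rcases heNP2' with rfl | h'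
      · exact hconE.2 (hspx ▸ hsxpC)
      · exact hdisjQrest P hP e (hQ2E e h') hcon
    · rw [List.pairwise_append]
      exact ⟨hp_l1, hp_l2, fun a ha b hb => hcross a ha b (List.mem_cons_of_mem _ hb)⟩
  · intro e
    constructor
    · intro heG
      by_cases heC : e ∈ C.edges
      · have he' : e ∈ s(x, p) :: PL.edges := hCperm.mem_iff.mpr heC
        rcases List.mem_cons.mp he' with rfl | hePL
        · refine ⟨⟨p, d, Walk.cons hxp.symm Q2⟩,
            List.mem_cons_of_mem _ (List.mem_cons_self), ?_⟩
          rw [hNP2edges, hspx]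
          exact List.mem_cons_self
        · refine ⟨⟨c, p, Q1.append PL⟩, List.mem_cons_self, ?_⟩
          rw [hNP1edges]
          exact List.mem_append_right _ hePL
      · obtain ⟨P, hP, heP⟩ := (h3 e).mp ⟨heG, heC⟩
        rw [hPsSplit] at hP
        rcases List.mem_append.mp hP with h' | h'
        · exact ⟨P, List.mem_cons_of_mem _ (List.mem_cons_of_mem _
            (List.mem_append_left _ h')), heP⟩
        rcases List.mem_cons.mp h' with rfl | h'
        · have he2 : e ∈ Q1.edges ++ Q2.edges := hQperm.mem_iff.mpr heP
          rcases List.mem_append.mp he2 with h'' | h''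
          · refine ⟨⟨c, p, Q1.append PL⟩, List.mem_cons_self, ?_⟩
            rw [hNP1edges]
            exact List.mem_append_left _ h''
          · refine ⟨⟨p, d, Walk.cons hxp.symm Q2⟩,
              List.mem_cons_of_mem _ (List.mem_cons_self), ?_⟩
            rw [hNP2edges]
            exact List.mem_cons_of_mem _ h''
        · exact ⟨P, List.mem_cons_of_mem _ (List.mem_cons_of_mem _
            (List.mem_append_right _ h')), heP⟩
    · rintro ⟨P, hP, heP⟩
      rcases List.mem_cons.mp hP with rfl | hP
      · exact (Q1.append PL).edges_subset_edgeSet heP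
      rcases List.mem_cons.mp hP with rfl | hP
      · exact (Walk.cons hxp.symm Q2).edges_subset_edgeSet heP
      · exact ((h3 e).mpr ⟨P, hrest_mem P hP, heP⟩).1
  · have hlen' : Ps.length = l1.length + 1 + l2.length := by
      rw [hPsSplit]
      simp only [List.length_append, List.length_cons]
      omega
    simp only [List.length_cons, List.length_append]
    omega
end

section
/- Let G be a minimum counterexample to the statement that every connected 2-degenerate graph on n vertices other than a triangle has a path decomposition into at most ⌊n/2⌋ paths; that is, G is connected, 2-degenerate, not a triangle, its edges cannot be decomposed into at most ⌊n/2⌋ paths where n is its number of vertices, and every connected 2-degenerate graph on fewer vertices that is not a triangle admits a decomposition of its edges into at most ⌊(number of its vertices)/2⌋ paths. Then no vertex of degree 2 in G is a cut vertex of G. -/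
open SimpleGraph

/-- `G` is a minimum counterexample to the statement that every connected
2-degenerate graph on `n` vertices other than a triangle has a path
decomposition into at most `⌊n/2⌋` paths. -/
def MinCounterexample {V : Type} [Fintype V] (G : SimpleGraph V) : Prop :=
  G.Connected ∧ TwoDegenerate G ∧ ¬ IsTriangleGraph G ∧
  ¬ (∃ Ps, IsPathDecompOf G G.edgeSet Ps ∧ Ps.length ≤ Fintype.card V / 2) ∧
  ∀ (W : Type) [Fintype W] (H : SimpleGraph W), Fintype.card W < Fintype.card V →
    H.Connected → TwoDegenerate H → ¬ IsTriangleGraph H →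
    ∃ Ps, IsPathDecompOf H H.edgeSet Ps ∧ Ps.length ≤ Fintype.card W / 2

/-- A cut vertex of a connected graph is a vertex whose removal disconnects the
graph. -/
def IsCutVertex {V : Type*} (G : SimpleGraph V) (v : V) : Prop :=
  G.Connected ∧ ¬ (G.induce {u | u ≠ v}).Connected

theorem isPath_append' {V : Type*} {G : SimpleGraph V} {a v b : V}
    {p : G.Walk a v} {q : G.Walk v b} (hp : p.IsPath) (hq : q.IsPath)
    (h : ∀ u, u ∈ p.support → u ∈ q.support → u = v) : (p.append q).IsPath := by
  rw [Walk.isPath_def, Walk.support_append]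
  refine List.Nodup.append hp.support_nodup (hq.support_nodup.sublist (List.tail_sublist _)) ?_
  intro u hu hu'
  have hv := h u hu (List.mem_of_mem_tail hu')
  have h2 := hq.support_nodup
  rw [q.support_eq_cons] at h2
  exact (List.nodup_cons.mp h2).1 (hv ▸ hu')

-- helper 2: walk in G with support ⊆ T gives reachability in induce T

theorem reachable_induce_of_walk {V : Type*} {G : SimpleGraph V} {T : Set V} :
    ∀ {a b : V} (w : G.Walk a b) (hs : ∀ u ∈ w.support, u ∈ T) (ha : a ∈ T) (hb : b ∈ T),
      (G.induce T).Reachable ⟨a, ha⟩ ⟨b, hb⟩ := by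
  intro a b w
  induction w with
  | nil => intro _ _ _; rfl
  | cons h p ih =>
    rename_i u c d
    intro hs ha hb
    have hc : c ∈ T := hs c (by simp)
    have : (G.induce T).Adj ⟨u, ha⟩ ⟨c, hc⟩ := by simpa using h
    exact this.reachable.trans (ih (fun z hz => hs z (by simp [hz])) hc hb)

theorem walk_avoid {V : Type*} {G : SimpleGraph V} (v : V) :
    ∀ {a b : V} (w : G.Walk a b), a ≠ v →
      ∃ t, (t = b ∨ G.Adj v t) ∧ ∃ w' : G.Walk a t, ∀ u ∈ w'.support, u ≠ v := by
  intro a b w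
  induction w with
  | nil => intro ha; exact ⟨_, Or.inl rfl, Walk.nil, by simpa using ha⟩
  | @cons u c d h p ih =>
    intro ha
    by_cases hc : c = v
    · exact ⟨u, Or.inr (by rw [← hc]; exact h.symm), Walk.nil, by simpa using ha⟩
    · obtain ⟨t, ht, w', hw'⟩ := ih hc
      refine ⟨t, ht, Walk.cons h w', ?_⟩
      intro z hz
      rw [Walk.support_cons] at hz
      rcases List.mem_cons.mp hz with hz' | hz'
      · exact hz' ▸ ha
      · exact hw' z hz'

theorem two_edges_of_internal {V : Type*} {G : SimpleGraph V} {v : V} :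
    ∀ {a b : V} (p : G.Walk a b), p.IsPath → v ∈ p.support → v ≠ a → v ≠ b →
      ∃ e₁ ∈ p.edges, ∃ e₂ ∈ p.edges, e₁ ≠ e₂ ∧ v ∈ e₁ ∧ v ∈ e₂ := by
  intro a b p
  induction p with
  | nil => simp
  | @cons u c d h q ih =>
    intro hp hv hva hvb
    rw [Walk.support_cons] at hv
    rcases List.mem_cons.mp hv with hv | hv
    · exact absurd hv hva
    · by_cases hvc : v = c
      · subst hvc
        cases q with
        | nil => exact absurd rfl hvb
        | @cons _ c2 _ h2 q2 =>
          clear ih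
          refine ⟨s(u, v), by simp, s(v, c2), by simp, ?_, by simp, by simp⟩
          intro he
          have huc2 : u = c2 := by
            rcases Sym2.eq_iff.mp he with ⟨he1, _⟩ | ⟨he1, _⟩
            · exact absurd he1.symm hva
            · exact he1
          have hns : u ∉ (Walk.cons h2 q2).support := ((Walk.cons_isPath_iff _ _).mp hp).2
          exact hns (by rw [huc2, Walk.support_cons]; exact List.mem_cons_of_mem _ q2.start_mem_support)
      · obtain ⟨e₁, he₁, e₂, he₂, hne, hv₁, hv₂⟩ := ih hp.of_cons hv hvc hvb
        exact ⟨e₁, by simp [he₁], e₂, by simp [he₂], hne, hv₁, hv₂⟩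

theorem twoDegenerate_induce {V : Type*} [Finite V] {G : SimpleGraph V}
    (h : ∀ S : Set V, S.Nonempty → ∃ v ∈ S, (G.neighborSet v ∩ S).ncard ≤ 2)
    (A : Set V) :
    ∀ S : Set ↥A, S.Nonempty → ∃ v ∈ S, ((G.induce A).neighborSet v ∩ S).ncard ≤ 2 := by
  intro S hS
  obtain ⟨w, hwT, hw⟩ := h (Subtype.val '' S) (hS.image _)
  obtain ⟨w', hw'S, rfl⟩ := hwT
  refine ⟨w', hw'S, ?_⟩
  have hsub : Subtype.val '' ((G.induce A).neighborSet w' ∩ S) ⊆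
      G.neighborSet w'.val ∩ (Subtype.val '' S) := by
    rintro z ⟨z', ⟨hz1, hz2⟩, rfl⟩
    exact ⟨hz1, ⟨z', hz2, rfl⟩⟩
  calc ((G.induce A).neighborSet w' ∩ S).ncard
      = (Subtype.val '' ((G.induce A).neighborSet w' ∩ S)).ncard :=
        (Set.ncard_image_of_injective _ Subtype.val_injective).symm
    _ ≤ (G.neighborSet w'.val ∩ (Subtype.val '' S)).ncard :=
        Set.ncard_le_ncard hsub (Set.toFinite _)
    _ ≤ 2 := hw

-- a graph with a vertex having a unique possible neighbor is not a triangle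

theorem not_triangle_of_unique_nbr {W : Type*} {H : SimpleGraph W} (w₀ u₀ : W)
    (h : ∀ u, H.Adj w₀ u → u = u₀) : ¬ Nonempty (H ≃g (⊤ : SimpleGraph (Fin 3))) := by
  rintro ⟨e⟩
  have h3 : ∀ a b : Fin 3, ∃ z : Fin 3, z ≠ a ∧ z ≠ b := by decide
  obtain ⟨z, hz1, hz2⟩ := h3 (e w₀) (e u₀)
  have hadj : H.Adj w₀ (e.symm z) := by
    rw [← e.symm_apply_apply w₀]
    exact e.symm.map_adj_iff.mpr (by simpa using hz1.symm)
  have := h _ hadj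
  apply hz2
  rw [← this]
  simp

theorem induce_edge_lift {V : Type*} {G : SimpleGraph V} {A : Set V} (e' : Sym2 ↥A)
    (h : e' ∈ (G.induce A).edgeSet) :
    Sym2.map Subtype.val e' ∈ G.edgeSet ∧ ∀ z ∈ Sym2.map Subtype.val e', z ∈ A := by
  induction e' using Sym2.ind with
  | _ c d =>
    constructor
    · rw [Sym2.map_pair_eq, mem_edgeSet]
      exact h
    · intro z hz
      rw [Sym2.map_pair_eq, Sym2.mem_iff] at hz
      rcases hz with rfl | rfl
      exacts [c.property, d.property]

theorem side_lemma {V : Type} {G : SimpleGraph V} {A : Set V} {v x : V}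
    (hvA : v ∈ A) (hxA : x ∈ A) (hvx : G.Adj v x)
    (hnbr : ∀ u, u ∈ A → G.Adj v u → u = x)
    (Ps : List (Σ u : ↥A, Σ w : ↥A, (G.induce A).Walk u w))
    (hPs : IsPathDecompOf (G.induce A) (G.induce A).edgeSet Ps) :
    ∃ (a : V) (M : G.Walk a v) (L : List (Σ u : V, Σ w : V, G.Walk u w)),
      M.IsPath ∧ M.edges ≠ [] ∧ (∀ u ∈ M.support, u ∈ A) ∧
      (∀ p ∈ L, p.2.2.IsPath ∧ p.2.2.edges ≠ []) ∧
      List.Pairwise (fun p q => ∀ e ∈ p.2.2.edges, e ∉ q.2.2.edges)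
        ((⟨a, v, M⟩ : Σ u : V, Σ w : V, G.Walk u w) :: L) ∧
      (∀ e, (e ∈ G.edgeSet ∧ ∀ z ∈ e, z ∈ A) ↔ (e ∈ M.edges ∨ ∃ p ∈ L, e ∈ p.2.2.edges)) ∧
      L.length + 1 = Ps.length := by
  classical
  obtain ⟨hpaths, hpw, hcov⟩ := hPs
  set v' : ↥A := ⟨v, hvA⟩ with hv'def
  set x' : ↥A := ⟨x, hxA⟩ with hx'def
  have hvx' : (G.induce A).Adj v' x' := hvx
  have he₀ : s(v', x') ∈ (G.induce A).edgeSet := hvx'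
  obtain ⟨p, hpPs, hpe⟩ := (hcov _).mp he₀
  have hnbr' : ∀ t' : ↥A, (G.induce A).Adj v' t' → t' = x' :=
    fun t' ht' => Subtype.ext (hnbr t'.val t'.property ht')
  have hvsup : v' ∈ p.2.2.support := Walk.fst_mem_support_of_mem_edges _ hpe
  have hkey : ∀ e ∈ p.2.2.edges, v' ∈ e → e = s(v', x') := by
    intro e he hve
    obtain ⟨t', rfl⟩ := Sym2.mem_iff_exists.mp hve
    rw [hnbr' t' (p.2.2.adj_of_mem_edges he)]
  have hend : v' = p.1 ∨ v' = p.2.1 := by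
    by_contra hc
    push_neg at hc
    obtain ⟨e₁, he₁, e₂, he₂, hne, hv₁, hv₂⟩ :=
      two_edges_of_internal p.2.2 (hpaths p hpPs).1 hvsup hc.1 hc.2
    exact hne ((hkey e₁ he₁ hv₁).trans (hkey e₂ he₂ hv₂).symm)
  obtain ⟨a', pA, hpA, hpAe⟩ :
      ∃ (a' : ↥A) (pA : (G.induce A).Walk a' v'), pA.IsPath ∧
        ∀ e, e ∈ pA.edges ↔ e ∈ p.2.2.edges := by
    rcases hend with h | h
    · refine ⟨p.2.1, (p.2.2.copy h.symm rfl).reverse, ?_, ?_⟩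
      · exact (((Walk.isPath_copy _ _ _).mpr (hpaths p hpPs).1)).reverse
      · intro e; simp [Walk.edges_reverse, Walk.edges_copy]
    · refine ⟨p.1, p.2.2.copy rfl h.symm, ?_, ?_⟩
      · exact (Walk.isPath_copy _ _ _).mpr (hpaths p hpPs).1
      · intro e; simp [Walk.edges_copy]
  let f : G.induce A →g G := ⟨Subtype.val, fun {a b} h => h⟩
  have hf : ∀ z : ↥A, f z = z.val := fun z => rfl
  have hfinj : Function.Injective ⇑f := fun a b h => Subtype.val_injective h
  have hSinj : Function.Injective (Sym2.map ⇑f) := Sym2.map.injective hfinj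
  let F : (Σ u : ↥A, Σ w : ↥A, (G.induce A).Walk u w) → (Σ u : V, Σ w : V, G.Walk u w) :=
    fun q => ⟨(q.1 : V), (q.2.1 : V), q.2.2.map f⟩
  have hperm : List.Perm Ps (p :: Ps.erase p) := List.perm_cons_erase hpPs
  have hsymm : ∀ ⦃q r : (u : ↥A) × (w : ↥A) × (G.induce A).Walk u w⦄,
      (∀ e ∈ q.2.2.edges, e ∉ r.2.2.edges) → ∀ e ∈ r.2.2.edges, e ∉ q.2.2.edges :=
    fun q r h e he1 he2 => h e he2 he1
  have hpw' := hpw.perm hperm @hsymm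
  rw [List.pairwise_cons] at hpw'
  have hFedges : ∀ (q : Σ u : ↥A, Σ w : ↥A, (G.induce A).Walk u w) (e : Sym2 V),
      e ∈ (F q).2.2.edges ↔ ∃ e' ∈ q.2.2.edges, Sym2.map ⇑f e' = e := by
    intro q e
    show e ∈ (q.2.2.map f).edges ↔ _
    rw [Walk.edges_map, List.mem_map]
  refine ⟨(a' : V), pA.map f, (Ps.erase p).map F, ?_, ?_, ?_, ?_, ?_, ?_, ?_⟩
  · exact Walk.map_isPath_of_injective hfinj hpA
  · intro hnil
    have : Sym2.map ⇑f s(v', x') ∈ (pA.map f).edges := by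
      rw [Walk.edges_map, List.mem_map]
      exact ⟨_, (hpAe _).mpr hpe, rfl⟩
    rw [hnil] at this
    exact List.not_mem_nil this
  · intro u hu
    rw [Walk.support_map, List.mem_map] at hu
    obtain ⟨z, _, rfl⟩ := hu
    exact z.property
  · intro r hr
    rw [List.mem_map] at hr
    obtain ⟨q, hq, rfl⟩ := hr
    have hq' := hpaths q (List.mem_of_mem_erase hq)
    refine ⟨Walk.map_isPath_of_injective hfinj hq'.1, ?_⟩
    show (q.2.2.map f).edges ≠ []
    rw [Walk.edges_map]
    simpa using hq'.2
  · rw [List.pairwise_cons]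
    constructor
    · intro r hr e heM heR
      rw [List.mem_map] at hr
      obtain ⟨q, hq, rfl⟩ := hr
      rw [show (⟨(a' : V), v, pA.map f⟩ : Σ u : V, Σ w : V, G.Walk u w).2.2 = pA.map f from rfl,
        Walk.edges_map, List.mem_map] at heM
      obtain ⟨e₁, he₁, rfl⟩ := heM
      obtain ⟨e₂, he₂, he₁₂⟩ := (hFedges q _).mp heR
      rw [← hSinj he₁₂.symm] at he₂
      exact hpw'.1 q hq e₁ ((hpAe _).mp he₁) he₂
    · refine List.Pairwise.map F ?_ ((List.Pairwise.sublist List.erase_sublist hpw))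
      intro q r hqr e he1 he2
      obtain ⟨e₁, he₁, rfl⟩ := (hFedges q _).mp he1
      obtain ⟨e₂, he₂, he₁₂⟩ := (hFedges r _).mp he2
      rw [← hSinj he₁₂.symm] at he₂
      exact hqr e₁ he₁ he₂
  · intro e
    constructor
    · rintro ⟨heG, heA⟩
      induction e using Sym2.ind with
      | _ c d =>
        have hc : c ∈ A := heA c (by simp)
        have hd : d ∈ A := heA d (by simp)
        have he' : s((⟨c, hc⟩ : ↥A), (⟨d, hd⟩ : ↥A)) ∈ (G.induce A).edgeSet := by
          rw [mem_edgeSet]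
          exact heG
        obtain ⟨q, hqPs, hqe⟩ := (hcov _).mp he'
        have hmapeq : Sym2.map ⇑f s((⟨c, hc⟩ : ↥A), (⟨d, hd⟩ : ↥A)) = s(c, d) := by
          rw [Sym2.map_pair_eq]; rfl
        by_cases hqp : s((⟨c, hc⟩ : ↥A), (⟨d, hd⟩ : ↥A)) ∈ p.2.2.edges
        · left
          rw [Walk.edges_map, List.mem_map]
          exact ⟨_, (hpAe _).mpr hqp, hmapeq⟩
        · right
          have hqnp : q ≠ p := by rintro rfl; exact hqp hqe
          refine ⟨F q, List.mem_map_of_mem (f := F) ((List.mem_erase_of_ne hqnp).mpr hqPs), ?_⟩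
          rw [hFedges]
          exact ⟨_, hqe, hmapeq⟩
    · rintro (heM | ⟨r, hr, her⟩)
      · rw [Walk.edges_map, List.mem_map] at heM
        obtain ⟨e₁, he₁, rfl⟩ := heM
        exact induce_edge_lift e₁ (pA.edges_subset_edgeSet he₁)
      · rw [List.mem_map] at hr
        obtain ⟨q, hq, rfl⟩ := hr
        obtain ⟨e₂, he₂, rfl⟩ := (hFedges q _).mp her
        exact induce_edge_lift e₂ (q.2.2.edges_subset_edgeSet he₂)
  · rw [List.length_map]
    exact List.length_erase_add_one hpPs

/-- In a minimum counterexample, no vertex of degree 2 is a cut vertex. -/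
theorem min_counterexample_deg_two_not_cut {V : Type} [Fintype V]
    (G : SimpleGraph V) [DecidableRel G.Adj] (hG : MinCounterexample G) :
    ∀ v : V, G.degree v = 2 → ¬ IsCutVertex G v := by
  classical
  rintro v hdeg ⟨hconn, hnotconn⟩
  obtain ⟨hGconn, hGdeg2, hGtri, hGbad, hmin⟩ := hG
  have hcard2 : (G.neighborFinset v).card = 2 := hdeg
  obtain ⟨x, y, hxy, hNxy⟩ := Finset.card_eq_two.mp hcard2
  have hvx : G.Adj v x := (G.mem_neighborFinset v x).mp (by rw [hNxy]; simp)
  have hvy : G.Adj v y := (G.mem_neighborFinset v y).mp (by rw [hNxy]; simp)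
  have hnbrG : ∀ t, G.Adj v t → t = x ∨ t = y := by
    intro t ht
    have h1 : t ∈ G.neighborFinset v := (G.mem_neighborFinset v t).mpr ht
    rw [hNxy] at h1
    simpa using h1
  have hxv : x ≠ v := fun h => G.loopless.irrefl v (h ▸ hvx)
  have hyv : y ≠ v := fun h => G.loopless.irrefl v (h ▸ hvy)
  set T : Set V := {u | u ≠ v} with hTdef
  have hdich : ∀ (a : V) (ha : a ∈ T),
      (G.induce T).Reachable ⟨a, ha⟩ ⟨x, hxv⟩ ∨ (G.induce T).Reachable ⟨a, ha⟩ ⟨y, hyv⟩ := by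
    intro a ha
    obtain ⟨w⟩ := hGconn a x
    obtain ⟨t, ht, w', hw'⟩ := walk_avoid v w ha
    have htv : t ∈ T := by
      rcases ht with rfl | h
      · exact hxv
      · exact h.ne'
    have hreach : (G.induce T).Reachable ⟨a, ha⟩ ⟨t, htv⟩ :=
      reachable_induce_of_walk w' (fun z hz => hw' z hz) ha htv
    rcases ht with rfl | hadj
    · exact Or.inl hreach
    · rcases hnbrG t hadj with rfl | rfl
      · exact Or.inl hreach
      · exact Or.inr hreach
  have hnotreach : ¬ (G.induce T).Reachable ⟨x, hxv⟩ ⟨y, hyv⟩ := by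
    intro hr
    apply hnotconn
    rw [connected_iff_exists_forall_reachable]
    refine ⟨⟨x, hxv⟩, fun b => ?_⟩
    rcases hdich b.val b.property with h | h
    · exact h.symm
    · exact (h.trans hr.symm).symm
  set S1 : Set V := {u | ∃ h : u ∈ T, (G.induce T).Reachable ⟨u, h⟩ ⟨x, hxv⟩} with hS1def
  set S2 : Set V := {u | ∃ h : u ∈ T, (G.induce T).Reachable ⟨u, h⟩ ⟨y, hyv⟩} with hS2def
  have hxS1 : x ∈ S1 := ⟨hxv, Reachable.refl _⟩
  have hyS2 : y ∈ S2 := ⟨hyv, Reachable.refl _⟩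
  have hS12 : ∀ u, u ∈ S1 → u ∈ S2 → False := by
    rintro u ⟨h1, hr1⟩ ⟨h2, hr2⟩
    exact hnotreach (hr1.symm.trans hr2)
  set A : Set V := S1 ∪ {v} with hAdef
  set B : Set V := S2 ∪ {v} with hBdef
  have hvA : v ∈ A := Or.inr rfl
  have hxA : x ∈ A := Or.inl hxS1
  have hvB : v ∈ B := Or.inr rfl
  have hyB : y ∈ B := Or.inl hyS2
  have hAB : ∀ u, u ∈ A → u ∈ B → u = v := by
    rintro u (h1 | h1) (h2 | h2)
    · exact absurd h2 (fun h2 => hS12 u h1 h2)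
    · exact h2
    · exact h1
    · exact h1
  have hyA : y ∉ A := by
    rintro (h | h)
    · exact hS12 y h hyS2
    · exact hyv h
  have hxB : x ∉ B := by
    rintro (h | h)
    · exact hS12 x hxS1 h
    · exact hxv h
  have hsame1 : ∀ a b, a ∈ T → b ∈ T → G.Adj a b → a ∈ S1 → b ∈ S1 := by
    rintro a b ha hb hadj ⟨_, hr⟩
    have : (G.induce T).Adj ⟨b, hb⟩ ⟨a, ha⟩ := hadj.symm
    exact ⟨hb, this.reachable.trans hr⟩
  have hsame2 : ∀ a b, a ∈ T → b ∈ T → G.Adj a b → a ∈ S2 → b ∈ S2 := by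
    rintro a b ha hb hadj ⟨_, hr⟩
    have : (G.induce T).Adj ⟨b, hb⟩ ⟨a, ha⟩ := hadj.symm
    exact ⟨hb, this.reachable.trans hr⟩
  have hedge : ∀ a b, G.Adj a b → (a ∈ A ∧ b ∈ A) ∨ (a ∈ B ∧ b ∈ B) := by
    intro a b hadj
    by_cases hav : a = v
    · subst hav
      rcases hnbrG b hadj with rfl | rfl
      · exact Or.inl ⟨hvA, hxA⟩
      · exact Or.inr ⟨hvB, hyB⟩
    by_cases hbv : b = v
    · subst hbv
      rcases hnbrG a hadj.symm with rfl | rfl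
      · exact Or.inl ⟨hxA, hvA⟩
      · exact Or.inr ⟨hyB, hvB⟩
    rcases hdich a hav with hr | hr
    · exact Or.inl ⟨Or.inl ⟨hav, hr⟩, Or.inl (hsame1 a b hav hbv hadj ⟨hav, hr⟩)⟩
    · exact Or.inr ⟨Or.inl ⟨hav, hr⟩, Or.inl (hsame2 a b hav hbv hadj ⟨hav, hr⟩)⟩
  have hnbrA : ∀ u, u ∈ A → G.Adj v u → u = x := by
    intro u hu hadj
    rcases hnbrG u hadj with rfl | rfl
    · rfl
    · exact absurd hu hyA
  have hnbrB : ∀ u, u ∈ B → G.Adj v u → u = y := by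
    intro u hu hadj
    rcases hnbrG u hadj with rfl | rfl
    · exact absurd hu hxB
    · rfl
  letI : Fintype ↥A := Set.Finite.fintype (Set.toFinite A)
  letI : Fintype ↥B := Set.Finite.fintype (Set.toFinite B)
  let g : G.induce T →g G := ⟨Subtype.val, fun {a b} h => h⟩
  -- connectivity of the two sides
  have hreachA : ∀ a' : ↥A, (G.induce A).Reachable a' ⟨v, hvA⟩ := by
    rintro ⟨u, hu⟩
    rcases hu with hu | hu
    · obtain ⟨huv, hr⟩ := hu
      obtain ⟨w⟩ := hr
      have hsup : ∀ z ∈ w.support, z.val ∈ S1 := by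
        intro z hz
        exact ⟨z.property, ⟨w.dropUntil z hz⟩⟩
      have hr2 : (G.induce A).Reachable ⟨u, Or.inl ⟨huv, ⟨w⟩⟩⟩ ⟨x, hxA⟩ := by
        have hsup2 : ∀ z ∈ (w.map g).support, z ∈ A := by
          intro z hz
          rw [Walk.support_map, List.mem_map] at hz
          obtain ⟨z', hz', rfl⟩ := hz
          exact Or.inl (hsup z' hz')
        exact reachable_induce_of_walk (w.map g) hsup2 _ _
      have hadj : (G.induce A).Adj ⟨x, hxA⟩ ⟨v, hvA⟩ := hvx.symm
      exact hr2.trans hadj.reachable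
    · have : u = v := hu
      subst this
      exact Reachable.refl _
  have hreachB : ∀ b' : ↥B, (G.induce B).Reachable b' ⟨v, hvB⟩ := by
    rintro ⟨u, hu⟩
    rcases hu with hu | hu
    · obtain ⟨huv, hr⟩ := hu
      obtain ⟨w⟩ := hr
      have hsup : ∀ z ∈ w.support, z.val ∈ S2 := by
        intro z hz
        exact ⟨z.property, ⟨w.dropUntil z hz⟩⟩
      have hr2 : (G.induce B).Reachable ⟨u, Or.inl ⟨huv, ⟨w⟩⟩⟩ ⟨y, hyB⟩ := by
        have hsup2 : ∀ z ∈ (w.map g).support, z ∈ B := by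
          intro z hz
          rw [Walk.support_map, List.mem_map] at hz
          obtain ⟨z', hz', rfl⟩ := hz
          exact Or.inl (hsup z' hz')
        exact reachable_induce_of_walk (w.map g) hsup2 _ _
      have hadj : (G.induce B).Adj ⟨y, hyB⟩ ⟨v, hvB⟩ := hvy.symm
      exact hr2.trans hadj.reachable
    · have : u = v := hu
      subst this
      exact Reachable.refl _
  have hconnA : (G.induce A).Connected := by
    rw [connected_iff_exists_forall_reachable]
    exact ⟨⟨v, hvA⟩, fun b => (hreachA b).symm⟩
  have hconnB : (G.induce B).Connected := by
    rw [connected_iff_exists_forall_reachable]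
    exact ⟨⟨v, hvB⟩, fun b => (hreachB b).symm⟩
  have h2degA : TwoDegenerate (G.induce A) := twoDegenerate_induce hGdeg2 A
  have h2degB : TwoDegenerate (G.induce B) := twoDegenerate_induce hGdeg2 B
  have htriA : ¬ IsTriangleGraph (G.induce A) :=
    not_triangle_of_unique_nbr (⟨v, hvA⟩ : ↥A) ⟨x, hxA⟩
      (fun u h => Subtype.ext (hnbrA u.val u.property h))
  have htriB : ¬ IsTriangleGraph (G.induce B) :=
    not_triangle_of_unique_nbr (⟨v, hvB⟩ : ↥B) ⟨y, hyB⟩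
      (fun u h => Subtype.ext (hnbrB u.val u.property h))
  have hcardA : Fintype.card ↥A < Fintype.card V := by
    refine Fintype.card_lt_of_injective_of_notMem Subtype.val Subtype.val_injective (b := y) ?_
    rintro ⟨⟨z, hz⟩, hzz⟩
    exact hyA (hzz ▸ hz)
  have hcardB : Fintype.card ↥B < Fintype.card V := by
    refine Fintype.card_lt_of_injective_of_notMem Subtype.val Subtype.val_injective (b := x) ?_
    rintro ⟨⟨z, hz⟩, hzz⟩
    exact hxB (hzz ▸ hz)
  obtain ⟨PsA, hPsA, hlenA⟩ := hmin ↥A (G.induce A) hcardA hconnA h2degA htriA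
  obtain ⟨PsB, hPsB, hlenB⟩ := hmin ↥B (G.induce B) hcardB hconnB h2degB htriB
  obtain ⟨aA, MA, LA, hMApath, hMAne, hMAsup, hLA, hpwA, hcovA, hlenLA⟩ :=
    side_lemma hvA hxA hvx hnbrA PsA hPsA
  obtain ⟨aB, MB, LB, hMBpath, hMBne, hMBsup, hLB, hpwB, hcovB, hlenLB⟩ :=
    side_lemma hvB hyB hvy hnbrB PsB hPsB
  rw [List.pairwise_cons] at hpwA hpwB
  -- cardinality identity
  have hABuniv : ∀ u, u ∈ A ∨ u ∈ B := by
    intro u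
    by_cases huv : u = v
    · exact Or.inl (Or.inr huv)
    · rcases hdich u huv with h | h
      · exact Or.inl (Or.inl ⟨huv, h⟩)
      · exact Or.inr (Or.inl ⟨huv, h⟩)
  have hcards : Fintype.card ↥A + Fintype.card ↥B = Fintype.card V + 1 := by
    have h1 : A.toFinset ∪ B.toFinset = Finset.univ := by
      ext u
      simp only [Finset.mem_union, Set.mem_toFinset, Finset.mem_univ, iff_true]
      exact hABuniv u
    have h2 : A.toFinset ∩ B.toFinset = {v} := by
      ext u
      simp only [Finset.mem_inter, Set.mem_toFinset, Finset.mem_singleton]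
      constructor
      · rintro ⟨h1, h2⟩; exact hAB u h1 h2
      · rintro rfl; exact ⟨hvA, hvB⟩
    have h3 := Finset.card_union_add_card_inter A.toFinset B.toFinset
    rw [h1, h2, Finset.card_univ, Finset.card_singleton, Set.toFinset_card,
      Set.toFinset_card] at h3
    omega
  -- diag helper
  have hdiag : ∀ e : Sym2 V, e ∈ G.edgeSet → (∀ z ∈ e, z ∈ A) → (∀ z ∈ e, z ∈ B) → False := by
    intro e he h1 h2
    induction e using Sym2.ind with
    | _ c d =>
      have hc := hAB c (h1 c (by simp)) (h2 c (by simp))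
      have hd := hAB d (h1 d (by simp)) (h2 d (by simp))
      rw [mem_edgeSet, hc, hd] at he
      exact G.loopless.irrefl v he
  -- the combined walk
  have hWpath : (MA.append MB.reverse).IsPath := by
    refine isPath_append' hMApath hMBpath.reverse ?_
    intro u hu1 hu2
    rw [Walk.support_reverse, List.mem_reverse] at hu2
    exact hAB u (hMAsup u hu1) (hMBsup u hu2)
  have hWedges : ∀ e, e ∈ (MA.append MB.reverse).edges ↔ e ∈ MA.edges ∨ e ∈ MB.edges := by
    intro e
    rw [Walk.edges_append, List.mem_append, Walk.edges_reverse, List.mem_reverse]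
  apply hGbad
  refine ⟨(⟨aA, aB, MA.append MB.reverse⟩ : Σ u : V, Σ w : V, G.Walk u w) :: (LA ++ LB),
    ⟨?_, ?_, ?_⟩, ?_⟩
  · intro p hp0
    rcases List.mem_cons.mp hp0 with rfl | hp
    · refine ⟨hWpath, ?_⟩
      show (MA.append MB.reverse).edges ≠ []
      rw [Walk.edges_append]
      intro h
      exact hMAne (List.append_eq_nil_iff.mp h).1
    · rcases List.mem_append.mp hp with h | h
      · exact hLA p h
      · exact hLB p h
  · rw [List.pairwise_cons]
    constructor
    · intro r hr e heW her
      have heW' := (hWedges e).mp heW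
      rcases List.mem_append.mp hr with hrA | hrB
      · rcases heW' with h | h
        · exact hpwA.1 r hrA e h her
        · exact hdiag e ((hcovA e).mpr (Or.inr ⟨r, hrA, her⟩)).1
            ((hcovA e).mpr (Or.inr ⟨r, hrA, her⟩)).2
            ((hcovB e).mpr (Or.inl h)).2
      · rcases heW' with h | h
        · exact hdiag e ((hcovA e).mpr (Or.inl h)).1
            ((hcovA e).mpr (Or.inl h)).2
            ((hcovB e).mpr (Or.inr ⟨r, hrB, her⟩)).2
        · exact hpwB.1 r hrB e h her
    · rw [List.pairwise_append]
      refine ⟨hpwA.2, hpwB.2, ?_⟩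
      intro p hp q hq e hep heq
      exact hdiag e ((hcovA e).mpr (Or.inr ⟨p, hp, hep⟩)).1
        ((hcovA e).mpr (Or.inr ⟨p, hp, hep⟩)).2
        ((hcovB e).mpr (Or.inr ⟨q, hq, heq⟩)).2
  · intro e
    constructor
    · intro he
      induction e using Sym2.ind with
      | _ c d =>
        rcases hedge c d ((mem_edgeSet _).mp he) with ⟨hcA, hdA⟩ | ⟨hcB, hdB⟩
        · have hsides : ∀ z ∈ s(c, d), z ∈ A := by
            intro z hz
            rcases Sym2.mem_iff.mp hz with rfl | rfl
            exacts [hcA, hdA]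
          rcases (hcovA s(c, d)).mp ⟨he, hsides⟩ with h | ⟨p, hp, hep⟩
          · exact ⟨_, List.mem_cons_self, (hWedges _).mpr (Or.inl h)⟩
          · exact ⟨p, List.mem_cons_of_mem _ (List.mem_append.mpr (Or.inl hp)), hep⟩
        · have hsides : ∀ z ∈ s(c, d), z ∈ B := by
            intro z hz
            rcases Sym2.mem_iff.mp hz with rfl | rfl
            exacts [hcB, hdB]
          rcases (hcovB s(c, d)).mp ⟨he, hsides⟩ with h | ⟨p, hp, hep⟩
          · exact ⟨_, List.mem_cons_self, (hWedges _).mpr (Or.inr h)⟩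
          · exact ⟨p, List.mem_cons_of_mem _ (List.mem_append.mpr (Or.inr hp)), hep⟩
    · rintro ⟨p, hp0, hep⟩
      rcases List.mem_cons.mp hp0 with rfl | hp
      · exact Walk.edges_subset_edgeSet _ hep
      · exact Walk.edges_subset_edgeSet _ hep
  · simp only [List.length_cons, List.length_append]
    omega
end

section
/- Let G be a minimum counterexample to the statement that every connected 2-degenerate graph on n vertices other than a triangle has a path decomposition into at most ⌊n/2⌋ paths; that is, G is connected, 2-degenerate, not a triangle, its edges cannot be decomposed into at most ⌊n/2⌋ paths where n is its number of vertices, and every connected 2-degenerate graph on fewer vertices that is not a triangle admits a decomposition of its edges into at most ⌊(number of its vertices)/2⌋ paths. Let v be a vertex of degree 2 in G and let x be a neighbor of v with degree 3 in G. Then x is not a cut vertex of G. -/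
open SimpleGraph

section Aux

variable {V : Type*} {G : SimpleGraph V}

/-- Restriction of `G` to a vertex set `S`, as a graph on the same vertex type. -/
def GRaux (G : SimpleGraph V) (S : Set V) : SimpleGraph V where
  Adj u w := G.Adj u w ∧ u ∈ S ∧ w ∈ S
  symm := ⟨by intro u w h; exact ⟨h.1.symm, h.2.2, h.2.1⟩⟩
  loopless := ⟨by intro u h; exact G.loopless.irrefl u h.1⟩

/-- The set of edges of `G` with both ends in `S`. -/
def ESet (G : SimpleGraph V) (S : Set V) : Set (Sym2 V) :=
  {e | e ∈ G.edgeSet ∧ ∀ t ∈ e, t ∈ S}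

lemma GRaux_supp {S : Set V} : ∀ {u w : V} (p : (GRaux G S).Walk u w), u ∈ S →
    ∀ t ∈ p.support, t ∈ S := by
  intro u w p
  induction p with
  | nil => intro hu t ht; simp at ht; subst ht; exact hu
  | cons h q ih =>
    intro hu t ht
    rw [SimpleGraph.Walk.support_cons] at ht
    rcases List.mem_cons.mp ht with h1 | h2
    · subst h1; exact hu
    · exact ih h.2.2 t h2

lemma mem_support_reachable {H : SimpleGraph V} : ∀ {u w : V} (p : H.Walk u w),
    ∀ t ∈ p.support, H.Reachable u t := by
  intro u w p
  induction p with
  | nil => intro t ht; simp at ht; subst ht; exact Reachable.refl _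
  | cons h q ih =>
    intro t ht
    rw [SimpleGraph.Walk.support_cons] at ht
    rcases List.mem_cons.mp ht with h1 | h2
    · subst h1; exact Reachable.refl _
    · exact (Adj.reachable h).trans (ih t h2)

lemma reach_induce {S : Set V} : ∀ {u w : V} (p : (GRaux G S).Walk u w) (hu : u ∈ S) (hw : w ∈ S),
    (G.induce S).Reachable ⟨u, hu⟩ ⟨w, hw⟩ := by
  intro u w p
  induction p with
  | nil => intro hu hw; exact Reachable.refl _
  | cons h q ih =>
    intro hu hw
    have hnext := h.2.2
    have hadj : (G.induce S).Adj ⟨_, hu⟩ ⟨_, hnext⟩ := by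
      simp only [SimpleGraph.comap_adj]
      exact h.1
    exact (Adj.reachable hadj).trans (ih hnext hw)

lemma conn_induce {S : Set V} (hne : S.Nonempty)
    (h : ∀ u ∈ S, ∀ w ∈ S, (GRaux G S).Reachable u w) : (G.induce S).Connected := by
  rw [SimpleGraph.connected_iff]
  refine ⟨?_, ⟨⟨hne.choose, hne.choose_spec⟩⟩⟩
  rintro ⟨u, hu⟩ ⟨w, hw⟩
  obtain ⟨p⟩ := h u hu w hw
  exact reach_induce p hu hw

lemma twoDeg_induce [Fintype V] (hd : TwoDegenerate G) (S : Set V) :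
    TwoDegenerate (G.induce S) := by
  intro T hT
  obtain ⟨t0, ht0⟩ := hT
  have hne : (Subtype.val '' T).Nonempty := ⟨t0.val, ⟨t0, ht0, rfl⟩⟩
  obtain ⟨u, hu, hcard⟩ := hd (Subtype.val '' T) hne
  obtain ⟨u', hu'T, rfl⟩ := hu
  refine ⟨u', hu'T, ?_⟩
  have hinj : Set.InjOn Subtype.val ((G.induce S).neighborSet u' ∩ T) := by
    intro a _ b _ hab; exact Subtype.ext hab
  have hsub : Subtype.val '' ((G.induce S).neighborSet u' ∩ T) ⊆
      G.neighborSet u'.val ∩ (Subtype.val '' T) := by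
    rintro _ ⟨a, ⟨ha1, ha2⟩, rfl⟩
    exact ⟨SimpleGraph.comap_adj.mp ha1, ⟨a, ha2, rfl⟩⟩
  calc ((G.induce S).neighborSet u' ∩ T).ncard
      = (Subtype.val '' ((G.induce S).neighborSet u' ∩ T)).ncard := by
        rw [Set.ncard_image_of_injOn hinj]
    _ ≤ (G.neighborSet u'.val ∩ (Subtype.val '' T)).ncard :=
        Set.ncard_le_ncard hsub (Set.toFinite _)
    _ ≤ 2 := hcard

lemma edge_at {H : SimpleGraph V} {x : V} {e : Sym2 V} (he : e ∈ H.edgeSet) (hxe : x ∈ e) :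
    ∃ t, e = s(x, t) ∧ H.Adj x t := by
  induction e using Sym2.ind with
  | _ s t =>
    rw [Sym2.mem_iff] at hxe
    rcases hxe with rfl | rfl
    · exact ⟨t, rfl, he⟩
    · exact ⟨s, Sym2.eq_swap, (H.mem_edgeSet.mp he).symm⟩

lemma reach_GRaux_of_walk {S : Set V} {u w : V} (p : G.Walk u w)
    (hs : ∀ t ∈ p.support, t ∈ S) : (GRaux G S).Reachable u w := by
  refine ⟨p.transfer (GRaux G S) ?_⟩
  intro e he
  induction e using Sym2.ind with
  | _ s t =>
    exact ⟨G.mem_edgeSet.mp (p.edges_subset_edgeSet he),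
      hs s (SimpleGraph.Walk.fst_mem_support_of_mem_edges _ he),
      hs t (SimpleGraph.Walk.snd_mem_support_of_mem_edges _ he)⟩

lemma reach_GRaux_of_GRaux_walk {S T : Set V} {u w : V} (p : (GRaux G S).Walk u w)
    (hs : ∀ t ∈ p.support, t ∈ T) : (GRaux G T).Reachable u w := by
  refine ⟨p.transfer (GRaux G T) ?_⟩
  intro e he
  induction e using Sym2.ind with
  | _ s t =>
    exact ⟨((GRaux G S).mem_edgeSet.mp (p.edges_subset_edgeSet he)).1,
      hs s (SimpleGraph.Walk.fst_mem_support_of_mem_edges _ he),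
      hs t (SimpleGraph.Walk.snd_mem_support_of_mem_edges _ he)⟩

end Aux

section Walks

variable {V : Type*} {G : SimpleGraph V}

lemma walk_support_mem_edge : ∀ {u w : V} (p : G.Walk u w), p.edges ≠ [] →
    ∀ t ∈ p.support, ∃ e ∈ p.edges, t ∈ e := by
  intro u w p
  induction p with
  | nil => intro h; simp at h
  | @cons a b c h q ih =>
    intro _ t ht
    rw [Walk.support_cons] at ht
    rcases List.mem_cons.mp ht with rfl | h2
    · exact ⟨s(t, b), by simp, by simp⟩
    · cases q with
      | nil =>
        simp only [Walk.support_nil, List.mem_singleton] at h2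
        subst h2
        exact ⟨s(a, t), by simp, by simp⟩
      | cons h' q' =>
        obtain ⟨e, he, hte⟩ := ih (by simp) t h2
        exact ⟨e, by rw [Walk.edges_cons]; exact List.mem_cons_of_mem _ he, hte⟩

lemma internal_two_edges {x : V} : ∀ {u w : V} (p : G.Walk u w), p.IsPath →
    x ∈ p.support → x ≠ u → x ≠ w →
    ∃ e₁ ∈ p.edges, ∃ e₂ ∈ p.edges, e₁ ≠ e₂ ∧ x ∈ e₁ ∧ x ∈ e₂ := by
  intro u w p
  induction p with
  | nil =>
    intro _ hx hxu _
    simp only [Walk.support_nil, List.mem_singleton] at hx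
    exact absurd hx hxu
  | @cons a b c h q ih =>
    intro hp hx hxu hxw
    rw [Walk.support_cons] at hx
    rcases List.mem_cons.mp hx with rfl | h2
    · exact absurd rfl hxu
    by_cases hxb : x = b
    · subst hxb
      cases q with
      | nil => exact absurd rfl hxw
      | @cons b d c h' q' =>
        refine ⟨s(a, x), by simp, s(x, d), by simp, ?_, by simp, by simp⟩
        have hnd := hp.edges_nodup
        rw [Walk.edges_cons, Walk.edges_cons, List.nodup_cons] at hnd
        intro hEq
        exact hnd.1 (hEq ▸ List.mem_cons_self)
    · obtain ⟨e₁, he₁, e₂, he₂, hne, hx1, hx2⟩ := ih hp.of_cons h2 hxb hxw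
      exact ⟨e₁, by rw [Walk.edges_cons]; exact List.mem_cons_of_mem _ he₁,
        e₂, by rw [Walk.edges_cons]; exact List.mem_cons_of_mem _ he₂, hne, hx1, hx2⟩

lemma exit_lemma {c z : V} (hcz : c ≠ z) (p : G.Walk c z) (hp : p.IsPath) :
    ∃ (u : V) (q : G.Walk c u), G.Adj u z ∧ q.IsPath ∧ z ∉ q.support ∧
      (∀ t ∈ q.support, t ∈ p.support) := by
  obtain ⟨u, h, q', heq⟩ := Walk.exists_eq_cons_of_ne (Ne.symm hcz) p.reverse
  have hprpath : p.reverse.IsPath := hp.reverse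
  rw [heq] at hprpath
  have hq'path : q'.IsPath := hprpath.of_cons
  have hznotin : z ∉ q'.support := by
    have := hprpath.support_nodup
    rw [Walk.support_cons, List.nodup_cons] at this
    exact this.1
  refine ⟨u, q'.reverse, h.symm, hq'path.reverse, ?_, ?_⟩
  · rwa [Walk.support_reverse, List.mem_reverse]
  · intro t ht
    rw [Walk.support_reverse, List.mem_reverse] at ht
    have : t ∈ p.reverse.support := by
      rw [heq, Walk.support_cons]
      exact List.mem_cons_of_mem _ ht
    rwa [Walk.support_reverse, List.mem_reverse] at this

end Walks

section Triangle

variable {V : Type*} {G : SimpleGraph V}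

lemma triangle_card {W : Type*} {H : SimpleGraph W} (h : IsTriangleGraph H) :
    Nat.card W = 3 := by
  obtain ⟨e⟩ := h
  rw [Nat.card_congr e.toEquiv, Nat.card_eq_fintype_card, Fintype.card_fin]

lemma triangle_structure {S : Set V} (h : IsTriangleGraph (G.induce S)) {w : V} (hw : w ∈ S) :
    ∃ a b : V, a ∈ S ∧ b ∈ S ∧ S = {w, a, b} ∧ w ≠ a ∧ w ≠ b ∧ a ≠ b ∧
      G.Adj w a ∧ G.Adj w b ∧ G.Adj a b := by
  obtain ⟨e⟩ := h
  set i : Fin 3 := e ⟨w, hw⟩ with hi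
  have hex : ∀ i : Fin 3, ∃ j k : Fin 3, i ≠ j ∧ i ≠ k ∧ j ≠ k ∧
      ∀ t : Fin 3, t = i ∨ t = j ∨ t = k := by decide
  obtain ⟨j, k, hij, hik, hjk, hall⟩ := hex i
  refine ⟨(e.symm j).val, (e.symm k).val, (e.symm j).property, (e.symm k).property,
    ?_, ?_, ?_, ?_, ?_, ?_, ?_⟩
  · ext s
    constructor
    · intro hs
      rcases hall (e ⟨s, hs⟩) with ht | ht | ht
      · left
        have : (⟨s, hs⟩ : ↥S) = ⟨w, hw⟩ := e.injective (by rw [ht, hi])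
        exact congrArg Subtype.val this
      · right; left
        have : (⟨s, hs⟩ : ↥S) = e.symm j := by
          rw [← ht]; exact (e.symm_apply_apply _).symm
        exact congrArg Subtype.val this
      · right; right
        have : (⟨s, hs⟩ : ↥S) = e.symm k := by
          rw [← ht]; exact (e.symm_apply_apply _).symm
        exact congrArg Subtype.val this
    · rintro (rfl | rfl | rfl)
      · exact hw
      · exact (e.symm j).property
      · exact (e.symm k).property
  · intro hcon
    have h1 : (⟨w, hw⟩ : ↥S) = e.symm j := Subtype.ext hcon
    apply hij
    rw [hi, h1, e.apply_symm_apply]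
  · intro hcon
    have h1 : (⟨w, hw⟩ : ↥S) = e.symm k := Subtype.ext hcon
    apply hik
    rw [hi, h1, e.apply_symm_apply]
  · intro hcon
    exact hjk (e.symm.injective (Subtype.ext hcon))
  · have h3 : (G.induce S).Adj ⟨w, hw⟩ (e.symm j) := by
      have h2 : (⊤ : SimpleGraph (Fin 3)).Adj (e ⟨w, hw⟩) (e (e.symm j)) := by
        rw [e.apply_symm_apply]; exact hij
      exact e.map_adj_iff.mp h2
    exact h3
  · have h3 : (G.induce S).Adj ⟨w, hw⟩ (e.symm k) := by
      have h2 : (⊤ : SimpleGraph (Fin 3)).Adj (e ⟨w, hw⟩) (e (e.symm k)) := by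
        rw [e.apply_symm_apply]; exact hik
      exact e.map_adj_iff.mp h2
    exact h3
  · have h3 : (G.induce S).Adj (e.symm j) (e.symm k) := by
      have h2 : (⊤ : SimpleGraph (Fin 3)).Adj (e (e.symm j)) (e (e.symm k)) := by
        rw [e.apply_symm_apply, e.apply_symm_apply]; exact hjk
      exact e.map_adj_iff.mp h2
    exact h3

lemma edge_of_triple {w a b : V} {e : Sym2 V} (he : e ∈ G.edgeSet)
    (hin : ∀ t ∈ e, t ∈ ({w, a, b} : Set V)) :
    e = s(w, a) ∨ e = s(w, b) ∨ e = s(a, b) := by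
  induction e using Sym2.ind with
  | _ s t =>
    have hadj : G.Adj s t := he
    have hne : s ≠ t := hadj.ne
    have hs := hin s (by simp)
    have ht := hin t (by simp)
    simp only [Set.mem_insert_iff, Set.mem_singleton_iff] at hs ht
    rcases hs with rfl | rfl | rfl <;> rcases ht with rfl | rfl | rfl
    · exact absurd rfl hne
    · exact Or.inl rfl
    · exact Or.inr (Or.inl rfl)
    · exact Or.inl (Sym2.eq_swap)
    · exact absurd rfl hne
    · exact Or.inr (Or.inr rfl)
    · exact Or.inr (Or.inl (Sym2.eq_swap))
    · exact Or.inr (Or.inr (Sym2.eq_swap))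
    · exact absurd rfl hne

end Triangle

section Decomp

variable {V : Type*} {G : SimpleGraph V} {E E1 E2 : Set (Sym2 V)}
variable {Ps Qs : List (Σ u : V, Σ v : V, G.Walk u v)}

lemma decomp_edges_subset (h : IsPathDecompOf G E Ps)
    {p : Σ u : V, Σ v : V, G.Walk u v} (hp : p ∈ Ps) : ∀ e ∈ p.2.2.edges, e ∈ E :=
  fun e he => (h.2.2 e).mpr ⟨p, hp, he⟩

lemma decomp_supports (h : IsPathDecompOf G E Ps) {S : Set V}
    (hE : ∀ e ∈ E, ∀ t ∈ e, t ∈ S) :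
    ∀ p ∈ Ps, ∀ t ∈ p.2.2.support, t ∈ S := by
  intro p hp t ht
  obtain ⟨e, he, hte⟩ := walk_support_mem_edge p.2.2 (h.1 p hp).2 t ht
  exact hE e (decomp_edges_subset h hp e he) t hte

lemma decomp_perm (h : IsPathDecompOf G E Ps) (hperm : Ps.Perm Qs) :
    IsPathDecompOf G E Qs := by
  refine ⟨fun p hp => h.1 p (hperm.mem_iff.mpr hp), ?_, fun e => ?_⟩
  · refine (hperm.pairwise_iff ?_).mp h.2.1
    intro p q hpq e heq hep
    exact hpq e hep heq
  · rw [h.2.2 e]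
    constructor
    · rintro ⟨p, hp, he⟩; exact ⟨p, hperm.mem_iff.mp hp, he⟩
    · rintro ⟨p, hp, he⟩; exact ⟨p, hperm.mem_iff.mpr hp, he⟩

lemma decomp_union (h1 : IsPathDecompOf G E1 Ps) (h2 : IsPathDecompOf G E2 Qs)
    (hdisj : ∀ e, e ∈ E1 → e ∉ E2) : IsPathDecompOf G (E1 ∪ E2) (Ps ++ Qs) := by
  refine ⟨?_, ?_, fun e => ?_⟩
  · intro p hp
    rcases List.mem_append.mp hp with h | h
    · exact h1.1 p h
    · exact h2.1 p h
  · rw [List.pairwise_append]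
    refine ⟨h1.2.1, h2.2.1, ?_⟩
    intro p hp q hq e hep heq
    exact hdisj e (decomp_edges_subset h1 hp e hep) (decomp_edges_subset h2 hq e heq)
  · constructor
    · rintro (he | he)
      · obtain ⟨p, hp, hpe⟩ := (h1.2.2 e).mp he
        exact ⟨p, List.mem_append_left _ hp, hpe⟩
      · obtain ⟨p, hp, hpe⟩ := (h2.2.2 e).mp he
        exact ⟨p, List.mem_append_right _ hp, hpe⟩
    · rintro ⟨p, hp, hpe⟩
      rcases List.mem_append.mp hp with h | h
      · exact Or.inl ((h1.2.2 e).mpr ⟨p, h, hpe⟩)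
      · exact Or.inr ((h2.2.2 e).mpr ⟨p, h, hpe⟩)

lemma decomp_cons_fresh (h : IsPathDecompOf G E Ps) (q : Σ u : V, Σ v : V, G.Walk u v)
    (hq : q.2.2.IsPath) (hqe : q.2.2.edges ≠ [])
    (hfresh : ∀ e ∈ q.2.2.edges, e ∉ E) :
    IsPathDecompOf G (E ∪ {e | e ∈ q.2.2.edges}) (q :: Ps) := by
  refine ⟨?_, ?_, fun e => ?_⟩
  · intro p hp
    rcases List.mem_cons.mp hp with rfl | h'
    · exact ⟨hq, hqe⟩
    · exact h.1 p h'
  · rw [List.pairwise_cons]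
    exact ⟨fun p hp e heq hep => hfresh e heq (decomp_edges_subset h hp e hep), h.2.1⟩
  · constructor
    · rintro (he | he)
      · obtain ⟨p, hp, hpe⟩ := (h.2.2 e).mp he
        exact ⟨p, List.mem_cons_of_mem _ hp, hpe⟩
      · exact ⟨q, List.mem_cons_self, he⟩
    · rintro ⟨p, hp, hpe⟩
      rcases List.mem_cons.mp hp with rfl | h'
      · exact Or.inr hpe
      · exact Or.inl ((h.2.2 e).mpr ⟨p, h', hpe⟩)

lemma decomp_concat_fresh {u b c : V} {q : G.Walk u b}
    (h : IsPathDecompOf G E (⟨u, b, q⟩ :: Ps)) (hadj : G.Adj b c)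
    (hc : c ∉ q.support) (hfresh : s(b, c) ∉ E) :
    IsPathDecompOf G (E ∪ {s(b, c)}) (⟨u, c, q.concat hadj⟩ :: Ps) := by
  have hqpath : q.IsPath := (h.1 _ (List.mem_cons_self)).1
  have hqe : q.edges ≠ [] := (h.1 _ (List.mem_cons_self)).2
  have hpw := List.pairwise_cons.mp h.2.1
  have hedges : (q.concat hadj).edges = q.edges ++ [s(b, c)] := by
    rw [Walk.edges_concat, List.concat_eq_append]
  have hmem : ∀ e, e ∈ (q.concat hadj).edges ↔ e ∈ q.edges ∨ e = s(b, c) := by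
    intro e; rw [hedges, List.mem_append, List.mem_singleton]
  refine ⟨?_, ?_, fun e => ?_⟩
  · intro p hp
    rcases List.mem_cons.mp hp with rfl | h'
    · constructor
      · apply Walk.IsPath.mk'
        rw [Walk.support_concat, List.nodup_append]
        exact ⟨hqpath.support_nodup, List.nodup_singleton _,
          fun t ht b h2 hb => by subst hb; obtain rfl := List.mem_singleton.mp h2; exact hc ht⟩
      · rw [hedges]; simp
    · exact h.1 p (List.mem_cons_of_mem _ h')
  · rw [List.pairwise_cons]
    refine ⟨?_, hpw.2⟩
    intro p hp e he hep
    rcases (hmem e).mp he with h' | rfl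
    · exact hpw.1 p hp e h' hep
    · exact hfresh (decomp_edges_subset h (List.mem_cons_of_mem _ hp) _ hep)
  · constructor
    · rintro (he | he)
      · obtain ⟨p, hp, hpe⟩ := (h.2.2 e).mp he
        rcases List.mem_cons.mp hp with rfl | h'
        · exact ⟨_, List.mem_cons_self, (hmem e).mpr (Or.inl hpe)⟩
        · exact ⟨p, List.mem_cons_of_mem _ h', hpe⟩
      · rw [Set.mem_singleton_iff] at he
        exact ⟨_, List.mem_cons_self, (hmem e).mpr (Or.inr he)⟩
    · rintro ⟨p, hp, hpe⟩
      rcases List.mem_cons.mp hp with rfl | h'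
      · rcases (hmem e).mp hpe with h' | rfl
        · exact Or.inl ((h.2.2 e).mpr ⟨_, List.mem_cons_self, h'⟩)
        · exact Or.inr rfl
      · exact Or.inl ((h.2.2 e).mpr ⟨p, List.mem_cons_of_mem _ h', hpe⟩)

lemma decomp_reverse_head {u b : V} {q : G.Walk u b}
    (h : IsPathDecompOf G E (⟨u, b, q⟩ :: Ps)) :
    IsPathDecompOf G E (⟨b, u, q.reverse⟩ :: Ps) := by
  have hmem : ∀ e, e ∈ q.reverse.edges ↔ e ∈ q.edges := by
    intro e; rw [Walk.edges_reverse, List.mem_reverse]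
  refine ⟨?_, ?_, fun e => ?_⟩
  · intro p hp
    rcases List.mem_cons.mp hp with rfl | h'
    · refine ⟨((h.1 _ (List.mem_cons_self)).1).reverse, ?_⟩
      have := (h.1 _ (List.mem_cons_self)).2
      rw [Walk.edges_reverse]
      simpa using this
    · exact h.1 p (List.mem_cons_of_mem _ h')
  · have hpw := List.pairwise_cons.mp h.2.1
    rw [List.pairwise_cons]
    refine ⟨fun p hp e he hep => hpw.1 p hp e ((hmem e).mp he) hep, hpw.2⟩
  · rw [h.2.2 e]
    constructor
    · rintro ⟨p, hp, hpe⟩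
      rcases List.mem_cons.mp hp with rfl | h'
      · exact ⟨_, List.mem_cons_self, (hmem e).mpr hpe⟩
      · exact ⟨p, List.mem_cons_of_mem _ h', hpe⟩
    · rintro ⟨p, hp, hpe⟩
      rcases List.mem_cons.mp hp with rfl | h'
      · exact ⟨_, List.mem_cons_self, (hmem e).mp hpe⟩
      · exact ⟨p, List.mem_cons_of_mem _ h', hpe⟩

lemma decomp_extract_end {x y : V} (h : IsPathDecompOf G E Ps) (hxy : s(x, y) ∈ E)
    (huniq : ∀ e ∈ E, x ∈ e → e = s(x, y)) :
    ∃ (u : V) (q : G.Walk u x) (Ps' : List (Σ u : V, Σ v : V, G.Walk u v)),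
      IsPathDecompOf G E (⟨u, x, q⟩ :: Ps') ∧ Ps'.length + 1 = Ps.length ∧ u ≠ x := by
  classical
  obtain ⟨p, hp, hpe⟩ := (h.2.2 _).mp hxy
  obtain ⟨p1, p2, w⟩ := p
  have hxsupp : x ∈ w.support := Walk.fst_mem_support_of_mem_edges _ hpe
  have hwpath : w.IsPath := (h.1 _ hp).1
  have hend : x = p1 ∨ x = p2 := by
    by_contra hcon
    push_neg at hcon
    obtain ⟨e₁, he₁, e₂, he₂, hne, hx1, hx2⟩ :=
      internal_two_edges w hwpath hxsupp hcon.1 hcon.2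
    have h1 := huniq e₁ (decomp_edges_subset h hp e₁ he₁) hx1
    have h2 := huniq e₂ (decomp_edges_subset h hp e₂ he₂) hx2
    exact hne (h1.trans h2.symm)
  have hperm : Ps.Perm (⟨p1, p2, w⟩ :: Ps.erase ⟨p1, p2, w⟩) := List.perm_cons_erase hp
  have hdec : IsPathDecompOf G E (⟨p1, p2, w⟩ :: Ps.erase ⟨p1, p2, w⟩) := decomp_perm h hperm
  have hlen : (Ps.erase ⟨p1, p2, w⟩).length + 1 = Ps.length := by
    rw [hperm.length_eq]; rfl
  rcases hend with rfl | rfl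
  · refine ⟨p2, w.reverse, Ps.erase ⟨x, p2, w⟩, decomp_reverse_head hdec, hlen, ?_⟩
    rintro rfl
    rw [Walk.isPath_iff_eq_nil] at hwpath
    subst hwpath
    simp at hpe
  · refine ⟨p1, w, Ps.erase ⟨p1, x, w⟩, hdec, hlen, ?_⟩
    rintro rfl
    rw [Walk.isPath_iff_eq_nil] at hwpath
    subst hwpath
    simp at hpe

lemma decomp_merge {S1 S2 : Set V} {v u1 u2 : V} {q1 : G.Walk u1 v} {q2 : G.Walk u2 v}
    {L1 L2 : List (Σ u : V, Σ v : V, G.Walk u v)}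
    (hS : ∀ t, t ∈ S1 → t ∈ S2 → t = v)
    (h1 : IsPathDecompOf G E1 (⟨u1, v, q1⟩ :: L1))
    (h2 : IsPathDecompOf G E2 (⟨u2, v, q2⟩ :: L2))
    (hdisj : ∀ e, e ∈ E1 → e ∉ E2)
    (hs1 : ∀ t ∈ q1.support, t ∈ S1) (hs2 : ∀ t ∈ q2.support, t ∈ S2) :
    IsPathDecompOf G (E1 ∪ E2) (⟨u1, u2, q1.append q2.reverse⟩ :: (L1 ++ L2)) := by
  have hq1path : q1.IsPath := (h1.1 _ (List.mem_cons_self)).1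
  have hq2path : q2.IsPath := (h2.1 _ (List.mem_cons_self)).1
  have hq1e : q1.edges ≠ [] := (h1.1 _ (List.mem_cons_self)).2
  have hq1E : ∀ e ∈ q1.edges, e ∈ E1 := decomp_edges_subset h1 (List.mem_cons_self)
  have hq2E : ∀ e ∈ q2.edges, e ∈ E2 := decomp_edges_subset h2 (List.mem_cons_self)
  have hpw1 := List.pairwise_cons.mp h1.2.1
  have hpw2 := List.pairwise_cons.mp h2.2.1
  have hmem : ∀ e, e ∈ (q1.append q2.reverse).edges ↔ e ∈ q1.edges ∨ e ∈ q2.edges := by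
    intro e
    rw [Walk.edges_append, List.mem_append, Walk.edges_reverse, List.mem_reverse]
  have hL1sub : ∀ p ∈ L1, ∀ e ∈ p.2.2.edges, e ∈ E1 :=
    fun p hp => decomp_edges_subset h1 (List.mem_cons_of_mem _ hp)
  have hL2sub : ∀ p ∈ L2, ∀ e ∈ p.2.2.edges, e ∈ E2 :=
    fun p hp => decomp_edges_subset h2 (List.mem_cons_of_mem _ hp)
  have hrevsupp : q2.reverse.support = v :: q2.reverse.support.tail :=
    Walk.support_eq_cons _
  have hvnotin : v ∉ q2.reverse.support.tail := by
    have hnd : q2.reverse.support.Nodup := hq2path.reverse.support_nodup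
    rw [hrevsupp] at hnd
    exact (List.nodup_cons.mp hnd).1
  have htail_sub : ∀ t ∈ q2.reverse.support.tail, t ∈ q2.support := by
    intro t ht
    have : t ∈ q2.reverse.support := by rw [hrevsupp]; exact List.mem_cons_of_mem _ ht
    rwa [Walk.support_reverse, List.mem_reverse] at this
  have hmerged : (q1.append q2.reverse).IsPath := by
    apply Walk.IsPath.mk'
    rw [Walk.support_append, List.nodup_append]
    refine ⟨hq1path.support_nodup, ?_, ?_⟩
    · have hnd : q2.reverse.support.Nodup := hq2path.reverse.support_nodup
      exact hnd.tail
    · intro t ht1 t' ht2 htt'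
      subst htt'
      have htv : t = v := hS t (hs1 t ht1) (hs2 t (htail_sub t ht2))
      subst htv
      exact hvnotin ht2
  refine ⟨?_, ?_, fun e => ?_⟩
  · intro p hp
    rcases List.mem_cons.mp hp with rfl | h'
    · refine ⟨hmerged, ?_⟩
      rw [Walk.edges_append]
      intro hcon
      exact hq1e (List.append_eq_nil_iff.mp hcon).1
    · rcases List.mem_append.mp h' with h'' | h''
      · exact h1.1 p (List.mem_cons_of_mem _ h'')
      · exact h2.1 p (List.mem_cons_of_mem _ h'')
  · rw [List.pairwise_cons]
    constructor
    · intro p hp e he hep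
      rcases List.mem_append.mp hp with h' | h'
      · rcases (hmem e).mp he with h'' | h''
        · exact hpw1.1 p h' e h'' hep
        · exact hdisj e (hL1sub p h' e hep) (hq2E e h'')
      · rcases (hmem e).mp he with h'' | h''
        · exact hdisj e (hq1E e h'') (hL2sub p h' e hep)
        · exact hpw2.1 p h' e h'' hep
    · rw [List.pairwise_append]
      refine ⟨hpw1.2, hpw2.2, ?_⟩
      intro p hp q hq e hep heq
      exact hdisj e (hL1sub p hp e hep) (hL2sub q hq e heq)
  · constructor
    · rintro (he | he)
      · obtain ⟨p, hp, hpe⟩ := (h1.2.2 e).mp he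
        rcases List.mem_cons.mp hp with rfl | h'
        · exact ⟨_, List.mem_cons_self, (hmem e).mpr (Or.inl hpe)⟩
        · exact ⟨p, List.mem_cons_of_mem _ (List.mem_append_left _ h'), hpe⟩
      · obtain ⟨p, hp, hpe⟩ := (h2.2.2 e).mp he
        rcases List.mem_cons.mp hp with rfl | h'
        · exact ⟨_, List.mem_cons_self, (hmem e).mpr (Or.inr hpe)⟩
        · exact ⟨p, List.mem_cons_of_mem _ (List.mem_append_right _ h'), hpe⟩
    · rintro ⟨p, hp, hpe⟩
      rcases List.mem_cons.mp hp with rfl | h'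
      · rcases (hmem e).mp hpe with h'' | h''
        · exact Or.inl (hq1E _ h'')
        · exact Or.inr (hq2E _ h'')
      · rcases List.mem_append.mp h' with h'' | h''
        · exact Or.inl (hL1sub p h'' _ hpe)
        · exact Or.inr (hL2sub p h'' _ hpe)

end Decomp

section ApplyMin
variable {V : Type} [Fintype V] {G : SimpleGraph V}

lemma ncard_neighborSet_eq_degree [DecidableRel G.Adj] (x : V) :
    (G.neighborSet x).ncard = G.degree x := by
  rw [← G.card_neighborFinset_eq_degree x, neighborFinset_def, ← Set.ncard_eq_toFinset_card']

lemma apply_min (hG : MinCounterexample G) (S : Set V)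
    (hcard : S.ncard < Fintype.card V) (hne : S.Nonempty)
    (hconn : ∀ u ∈ S, ∀ w ∈ S, (GRaux G S).Reachable u w)
    (hnt : ¬ IsTriangleGraph (G.induce S)) :
    ∃ Qs : List (Σ u : V, Σ v : V, G.Walk u v),
      IsPathDecompOf G (ESet G S) Qs ∧ Qs.length ≤ S.ncard / 2 := by
  classical
  letI : Fintype ↥S := S.toFinite.fintype
  have hcardS : Fintype.card ↥S = S.ncard := by
    rw [← Nat.card_eq_fintype_card, Nat.card_coe_set_eq]
  obtain ⟨Rs, hRs, hRlen⟩ := hG.2.2.2.2 ↥S (G.induce S) (by rw [hcardS]; exact hcard)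
    (conn_induce hne hconn) (twoDeg_induce hG.2.1 S) hnt
  let hom : G.induce S →g G := ⟨Subtype.val, fun {a b} h => h⟩
  have hominj : Function.Injective hom := Subtype.val_injective
  let F : (Σ u : ↥S, Σ v : ↥S, (G.induce S).Walk u v) → (Σ u : V, Σ v : V, G.Walk u v) :=
    fun p => ⟨p.1.val, p.2.1.val, p.2.2.map hom⟩
  have hedg : ∀ p : (Σ u : ↥S, Σ v : ↥S, (G.induce S).Walk u v),
      (F p).2.2.edges = p.2.2.edges.map (Sym2.map (Subtype.val)) := by
    intro p
    simp only [F, Walk.edges_map]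
    rfl
  have hSym2inj : Function.Injective (Sym2.map (Subtype.val : ↥S → V)) :=
    Sym2.map.injective Subtype.val_injective
  refine ⟨Rs.map F, ⟨?_, ?_, ?_⟩, by rw [List.length_map, ← hcardS]; exact hRlen⟩
  · intro p hp
    obtain ⟨p', hp', rfl⟩ := List.mem_map.mp hp
    refine ⟨Walk.map_isPath_of_injective hominj (hRs.1 p' hp').1, ?_⟩
    rw [hedg]
    intro hcon
    exact (hRs.1 p' hp').2 (List.map_eq_nil_iff.mp hcon)
  · rw [List.pairwise_map]
    apply List.Pairwise.imp _ hRs.2.1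
    intro p q hpq e he1 he2
    rw [hedg] at he1 he2
    obtain ⟨e1, he1', rfl⟩ := List.mem_map.mp he1
    obtain ⟨e2, he2', heq⟩ := List.mem_map.mp he2
    have : e2 = e1 := hSym2inj heq
    subst this
    exact hpq e2 he1' he2'
  · intro e
    constructor
    · rintro ⟨hee, hin⟩
      induction e using Sym2.ind with
      | _ s t =>
        have hadj : G.Adj s t := hee
        have hsS : s ∈ S := hin s (by simp)
        have htS : t ∈ S := hin t (by simp)
        have hadj' : (G.induce S).Adj ⟨s, hsS⟩ ⟨t, htS⟩ := hadj
        obtain ⟨p', hp', hpe'⟩ := (hRs.2.2 s(⟨s, hsS⟩, ⟨t, htS⟩)).mp hadj'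
        refine ⟨F p', List.mem_map_of_mem hp', ?_⟩
        rw [hedg]
        refine List.mem_map.mpr ⟨_, hpe', ?_⟩
        rw [Sym2.map_pair_eq]
    · rintro ⟨p, hp, hpe⟩
      obtain ⟨p', hp', rfl⟩ := List.mem_map.mp hp
      rw [hedg] at hpe
      obtain ⟨e', he', rfl⟩ := List.mem_map.mp hpe
      have he'' : e' ∈ (G.induce S).edgeSet := Walk.edges_subset_edgeSet _ he'
      induction e' using Sym2.ind with
      | _ a b =>
        have hadj : (G.induce S).Adj a b := he''
        have hadjG : G.Adj a.val b.val := hadj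
        rw [Sym2.map_pair_eq]
        refine ⟨hadjG, ?_⟩
        intro t ht
        rw [Sym2.mem_iff] at ht
        rcases ht with rfl | rfl
        · exact a.property
        · exact b.property

end ApplyMin

section Main
variable {V : Type} [Fintype V]

lemma side_lemma_s11 (G : SimpleGraph V) [DecidableRel G.Adj] (hG : MinCounterexample G)
    (x v y : V) (hadj : G.Adj v x) (hv : G.degree v = 2) (hx : G.degree x = 3)
    (A B : Set V) (hxA : x ∈ A) (hxB : x ∈ B)
    (hABI : A ∩ B = {x}) (hABU : A ∪ B = Set.univ)
    (hcross : ∀ ⦃s t : V⦄, G.Adj s t → (s ∈ A ∧ t ∈ A) ∨ (s ∈ B ∧ t ∈ B))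
    (hConnA : ∀ u ∈ A, ∀ w ∈ A, (GRaux G A).Reachable u w)
    (hConnB : ∀ u ∈ B, ∀ w ∈ B, (GRaux G B).Reachable u w)
    (hyA : G.neighborSet x ∩ (A \ {x}) = {y}) : False := by
  classical
  set n := Fintype.card V with hn
  have hymem : y ∈ G.neighborSet x ∩ (A \ {x}) := by rw [hyA]; exact rfl
  have hxy : G.Adj x y := hymem.1
  have hyA' : y ∈ A := hymem.2.1
  have hyx : y ≠ x := by simpa using hymem.2.2
  have hyB : y ∉ B := by
    intro hB
    have h2 : y ∈ A ∩ B := ⟨hyA', hB⟩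
    rw [hABI] at h2
    exact hyx (by simpa using h2)
  have hNx : (G.neighborSet x).ncard = 3 := by rw [ncard_neighborSet_eq_degree]; exact hx
  have hNsplit : G.neighborSet x =
      (G.neighborSet x ∩ (A \ {x})) ∪ (G.neighborSet x ∩ (B \ {x})) := by
    ext t
    simp only [Set.mem_union, Set.mem_inter_iff, Set.mem_diff, Set.mem_singleton_iff]
    constructor
    · intro ht
      have htAB : t ∈ A ∪ B := by rw [hABU]; trivial
      rcases htAB with h | h
      · exact Or.inl ⟨ht, h, ht.ne'⟩
      · exact Or.inr ⟨ht, h, ht.ne'⟩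
    · rintro (⟨h, -⟩ | ⟨h, -⟩) <;> exact h
  have hNdisj : Disjoint (G.neighborSet x ∩ (A \ {x})) (G.neighborSet x ∩ (B \ {x})) := by
    rw [Set.disjoint_left]
    rintro t ⟨-, htA, htx⟩ ⟨-, htB, -⟩
    have h2 : t ∈ A ∩ B := ⟨htA, htB⟩
    rw [hABI] at h2
    exact htx h2
  have hNB2 : (G.neighborSet x ∩ (B \ {x})).ncard = 2 := by
    have h3 := Set.ncard_union_eq hNdisj (Set.toFinite _) (Set.toFinite _)
    rw [← hNsplit, hNx, hyA, Set.ncard_singleton] at h3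
    omega
  obtain ⟨z1, z2, hz12, hzeq⟩ := Set.ncard_eq_two.mp hNB2
  have hz1 : z1 ∈ G.neighborSet x ∩ (B \ {x}) := by rw [hzeq]; simp
  have hz2 : z2 ∈ G.neighborSet x ∩ (B \ {x}) := by rw [hzeq]; simp
  have hsum : A.ncard + B.ncard = n + 1 := by
    have h3 := Set.ncard_union_add_ncard_inter A B (Set.toFinite _) (Set.toFinite _)
    rw [hABU, hABI, Set.ncard_univ, Nat.card_eq_fintype_card, Set.ncard_singleton] at h3
    omega
  have hnA2 : 2 ≤ A.ncard := by
    have hsub : ({x, y} : Set V) ⊆ A := by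
      rintro t (rfl | rfl)
      · exact hxA
      · exact hyA'
    calc 2 = ({x, y} : Set V).ncard := (Set.ncard_pair (Ne.symm hyx)).symm
      _ ≤ A.ncard := Set.ncard_le_ncard hsub (Set.toFinite _)
  have hnB3 : 3 ≤ B.ncard := by
    have hsub : ({x, z1, z2} : Set V) ⊆ B := by
      rintro t (rfl | rfl | rfl)
      · exact hxB
      · exact hz1.2.1
      · exact hz2.2.1
    have hxz1 : x ≠ z1 := fun h => hz1.2.2 h.symm
    have hxz2 : x ≠ z2 := fun h => hz2.2.2 h.symm
    calc 3 = ({x, z1, z2} : Set V).ncard := by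
          rw [Set.ncard_insert_of_notMem (by simp [hxz1, hxz2]) (Set.toFinite _),
            Set.ncard_pair hz12]
      _ ≤ B.ncard := Set.ncard_le_ncard hsub (Set.toFinite _)
  have hnAle : A.ncard ≤ n := by
    rw [hn, ← Nat.card_eq_fintype_card, ← Set.ncard_univ]
    exact Set.ncard_le_ncard (Set.subset_univ _) (Set.toFinite _)
  have huniqA : ∀ e ∈ ESet G A, x ∈ e → e = s(x, y) := by
    intro e he hxe
    obtain ⟨t, rfl, hadj'⟩ := edge_at he.1 hxe
    have htA : t ∈ A := he.2 t (by simp)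
    have h2 : t ∈ G.neighborSet x ∩ (A \ {x}) := ⟨hadj', htA, hadj'.ne'⟩
    rw [hyA, Set.mem_singleton_iff] at h2
    rw [h2]
  have hxyA : s(x, y) ∈ ESet G A := by
    refine ⟨hxy, ?_⟩
    intro t ht
    rcases Sym2.mem_iff.mp ht with rfl | rfl
    · exact hxA
    · exact hyA'
  have hAnotri : ¬ IsTriangleGraph (G.induce A) := by
    intro htri
    obtain ⟨c, d, hcA, hdA, hAeq, hxc, hxd, hcd, hadjxc, hadjxd, hadjcd⟩ :=
      triangle_structure htri hxA
    have hc : c ∈ G.neighborSet x ∩ (A \ {x}) := ⟨hadjxc, hcA, hadjxc.ne'⟩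
    have hd : d ∈ G.neighborSet x ∩ (A \ {x}) := ⟨hadjxd, hdA, hadjxd.ne'⟩
    rw [hyA, Set.mem_singleton_iff] at hc hd
    exact hcd (hc.trans hd.symm)
  have hcover : ∀ e ∈ G.edgeSet, (∀ t ∈ e, t ∈ A) ∨ (∀ t ∈ e, t ∈ B) := by
    intro e he
    induction e using Sym2.ind with
    | _ s t =>
      rcases hcross (G.mem_edgeSet.mp he) with ⟨h1, h2⟩ | ⟨h1, h2⟩
      · left
        intro r hr
        rcases Sym2.mem_iff.mp hr with rfl | rfl
        · exact h1
        · exact h2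
      · right
        intro r hr
        rcases Sym2.mem_iff.mp hr with rfl | rfl
        · exact h1
        · exact h2
  have hABdisj : ∀ e, e ∈ ESet G A → e ∉ ESet G B := by
    intro e heA heB
    induction e using Sym2.ind with
    | _ s t =>
      have hsx : s = x := by
        have h2 : s ∈ A ∩ B := ⟨heA.2 s (by simp), heB.2 s (by simp)⟩
        rw [hABI] at h2; exact h2
      have htx : t = x := by
        have h2 : t ∈ A ∩ B := ⟨heA.2 t (by simp), heB.2 t (by simp)⟩
        rw [hABI] at h2; exact h2
      rw [hsx, htx] at heA
      exact (G.loopless.irrefl x) (G.mem_edgeSet.mp heA.1)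
  by_cases hBtri : IsTriangleGraph (G.induce B)
  · -- Case 1 : B is a triangle
    obtain ⟨a, b, haB, hbB, hBeq, hxa, hxb, hab, hadjxa, hadjxb, hadjab⟩ :=
      triangle_structure hBtri hxB
    have hnB : B.ncard = 3 := by
      rw [hBeq, Set.ncard_insert_of_notMem (by simp [hxa, hxb]) (Set.toFinite _),
        Set.ncard_pair hab]
    have haA : a ∉ A := by
      intro hA
      have h2 : a ∈ A ∩ B := ⟨hA, haB⟩
      rw [hABI] at h2
      have h3 : a = x := h2
      exact hxa h3.symm
    have hbA : b ∉ A := by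
      intro hA
      have h2 : b ∈ A ∩ B := ⟨hA, hbB⟩
      rw [hABI] at h2
      have h3 : b = x := h2
      exact hxb h3.symm
    obtain ⟨Qs, hQs, hQlen⟩ := apply_min hG A (by omega) ⟨x, hxA⟩ hConnA hAnotri
    obtain ⟨u, q, Qs', hdec, hlen, hux⟩ := decomp_extract_end hQs hxyA huniqA
    have hsuppA : ∀ t ∈ q.support, t ∈ A := by
      have h2 := decomp_supports hdec (S := A) (fun e he => he.2)
      exact fun t ht => h2 _ (List.mem_cons_self) t ht
    have ha_nq : a ∉ q.support := fun h => haA (hsuppA a h)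
    have hfresh1 : s(x, a) ∉ ESet G A := fun h => haA (h.2 a (by simp))
    have hdec1 := decomp_concat_fresh hdec hadjxa ha_nq hfresh1
    have hb_nq : b ∉ (q.concat hadjxa).support := by
      rw [Walk.support_concat]
      intro h
      rcases List.mem_append.mp h with h' | h'
      · exact hbA (hsuppA b h')
      · exact hab (List.mem_singleton.mp h').symm
    have hfresh2 : s(a, b) ∉ ESet G A ∪ {s(x, a)} := by
      rintro (h | h)
      · exact haA (h.2 a (by simp))
      · rw [Set.mem_singleton_iff, Sym2.eq_iff] at h
        rcases h with ⟨h1, -⟩ | ⟨-, h2⟩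
        · exact hxa h1.symm
        · exact hxb h2.symm
    have hdec2 := decomp_concat_fresh hdec1 hadjab hb_nq hfresh2
    have hP0path : (Walk.cons hadjxb.symm (Walk.nil : G.Walk x x)).IsPath := by
      apply Walk.IsPath.mk'
      simp only [Walk.support_cons, Walk.support_nil, List.nodup_cons, List.mem_singleton,
        List.not_mem_nil, not_false_iff, List.nodup_nil, and_true]
      exact fun h => hxb h.symm
    have hfresh3 : ∀ e ∈ (Walk.cons hadjxb.symm (Walk.nil : G.Walk x x)).edges,
        e ∉ (ESet G A ∪ {s(x, a)}) ∪ {s(a, b)} := by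
      intro e he
      simp only [Walk.edges_cons, Walk.edges_nil, List.mem_singleton] at he
      subst he
      rintro ((h | h) | h)
      · exact hbA (h.2 b (by simp))
      · rw [Set.mem_singleton_iff, Sym2.eq_iff] at h
        rcases h with ⟨h1, -⟩ | ⟨h1, -⟩
        · exact hxb h1.symm
        · exact hab h1.symm
      · rw [Set.mem_singleton_iff, Sym2.eq_iff] at h
        rcases h with ⟨h1, -⟩ | ⟨-, h2⟩
        · exact hab h1.symm
        · exact hxa h2
    have hdec3 := decomp_cons_fresh hdec2 ⟨b, x, Walk.cons hadjxb.symm Walk.nil⟩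
      hP0path (by simp) hfresh3
    have hEeq : (((ESet G A ∪ {s(x, a)}) ∪ {s(a, b)}) ∪
        {e | e ∈ (Walk.cons hadjxb.symm (Walk.nil : G.Walk x x)).edges}) = G.edgeSet := by
    {
      ext e
      constructor
      · rintro (((h | h) | h) | h)
        · exact h.1
        · rw [Set.mem_singleton_iff] at h; rw [h]; exact hadjxa
        · rw [Set.mem_singleton_iff] at h; rw [h]; exact hadjab
        · simp only [Set.mem_setOf_eq, Walk.edges_cons, Walk.edges_nil,
            List.mem_singleton] at h
          rw [h]; exact hadjxb.symm
      · intro he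
        rcases hcover e he with hA | hB
        · exact Or.inl (Or.inl (Or.inl ⟨he, hA⟩))
        · rcases edge_of_triple he (by rw [← hBeq]; exact hB) with h | h | h
          · exact Or.inl (Or.inl (Or.inr h))
          · refine Or.inr ?_
            simp only [Set.mem_setOf_eq, Walk.edges_cons, Walk.edges_nil, List.mem_singleton]
            rw [h]; exact Sym2.eq_swap
          · exact Or.inl (Or.inr h)
    }
    apply hG.2.2.2.1
    refine ⟨_, hEeq ▸ hdec3, ?_⟩
    simp only [List.length_cons]
    omega

  · -- Case 2 : B is not a triangle
    obtain ⟨Rs, hRs, hRlen⟩ := apply_min hG B (by omega) ⟨x, hxB⟩ hConnB hBtri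
    by_cases hpar : Odd A.ncard ∨ Odd B.ncard
    · -- 2a : parity allows direct union
      obtain ⟨Qs, hQs, hQlen⟩ := apply_min hG A (by omega) ⟨x, hxA⟩ hConnA hAnotri
      have hEeq : ESet G A ∪ ESet G B = G.edgeSet := by
        ext e
        constructor
        · rintro (h | h) <;> exact h.1
        · intro he
          rcases hcover e he with h | h
          · exact Or.inl ⟨he, h⟩
          · exact Or.inr ⟨he, h⟩
      have hdec := decomp_union hQs hRs hABdisj
      apply hG.2.2.2.1
      refine ⟨_, hEeq ▸ hdec, ?_⟩
      rw [List.length_append]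
      have hp2 : A.ncard % 2 = 1 ∨ B.ncard % 2 = 1 := by
        rcases hpar with h | h
        · exact Or.inl (Nat.odd_iff.mp h)
        · exact Or.inr (Nat.odd_iff.mp h)
      omega
    · push_neg at hpar
      obtain ⟨hparA, hparB⟩ := hpar
      rw [Nat.not_odd_iff] at hparA hparB
      by_cases hA3 : 3 ≤ A.ncard
      · -- 2b-i : split into A \ {x} and B ∪ {y}
        set A' : Set V := A \ {x} with hA'
        set B' : Set V := B ∪ {y} with hB'
        have hyA2 : y ∈ A' := ⟨hyA', hyx⟩
        have hxB' : x ∈ B' := Or.inl hxB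
        have hyB' : y ∈ B' := Or.inr rfl
        have hnA' : A'.ncard = A.ncard - 1 := by
          rw [hA', Set.ncard_diff_singleton_of_mem hxA]
        have hnB' : B'.ncard = B.ncard + 1 := by
          rw [hB', Set.union_singleton, Set.ncard_insert_of_notMem hyB (Set.toFinite _)]
        have hConnA' : ∀ u ∈ A', ∀ w ∈ A', (GRaux G A').Reachable u w := by
          intro u hu w hw
          obtain ⟨p⟩ := hConnA u hu.1 w hw.1
          obtain ⟨q, hqpath⟩ := p.toPath
          have hxq : x ∉ q.support := by
            intro hxq
            have hxu : x ≠ u := fun h => hu.2 h.symm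
            have hxw : x ≠ w := fun h => hw.2 h.symm
            obtain ⟨e₁, he₁, e₂, he₂, hne, hx1, hx2⟩ :=
              internal_two_edges q hqpath hxq hxu hxw
            obtain ⟨t₁, heq1, hadj1⟩ := edge_at (q.edges_subset_edgeSet he₁) hx1
            obtain ⟨t₂, heq2, hadj2⟩ := edge_at (q.edges_subset_edgeSet he₂) hx2
            have ht1 : t₁ ∈ G.neighborSet x ∩ (A \ {x}) := ⟨hadj1.1, hadj1.2.2, hadj1.1.ne'⟩
            have ht2 : t₂ ∈ G.neighborSet x ∩ (A \ {x}) := ⟨hadj2.1, hadj2.2.2, hadj2.1.ne'⟩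
            rw [hyA, Set.mem_singleton_iff] at ht1 ht2
            apply hne
            rw [heq1, heq2, ht1, ht2]
          refine reach_GRaux_of_GRaux_walk q ?_
          intro t ht
          exact ⟨GRaux_supp q hu.1 t ht, fun h => hxq (h ▸ ht)⟩
        have hConnB' : ∀ u ∈ B', ∀ w ∈ B', (GRaux G B').Reachable u w := by
          have hkey : ∀ u ∈ B', (GRaux G B').Reachable u x := by
            intro u hu
            rcases hu with hu | hu
            · obtain ⟨p⟩ := hConnB u hu x hxB
              exact reach_GRaux_of_GRaux_walk p (fun t ht => Or.inl (GRaux_supp p hu t ht))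
            · rw [Set.mem_singleton_iff] at hu
              subst hu
              exact Adj.reachable ⟨hxy.symm, hyB', hxB'⟩
          intro u hu w hw
          exact (hkey u hu).trans (hkey w hw).symm
        have huniqB' : ∀ e ∈ ESet G B', y ∈ e → e = s(y, x) := by
          intro e he hye
          obtain ⟨t, heq, hadj'⟩ := edge_at he.1 hye
          subst heq
          have htB' : t ∈ B' := he.2 t (by simp)
          have htA : t ∈ A := by
            rcases hcross hadj' with ⟨h1, h2⟩ | ⟨h1, h2⟩
            · exact h2
            · exact absurd h1 hyB
          rcases htB' with htB | hty
          · have h2 : t ∈ A ∩ B := ⟨htA, htB⟩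
            rw [hABI] at h2
            rw [show t = x from h2]
          · rw [Set.mem_singleton_iff] at hty
            exact absurd hty hadj'.ne'
        have hyxB' : s(y, x) ∈ ESet G B' := by
          refine ⟨hxy.symm, ?_⟩
          intro t ht
          rcases Sym2.mem_iff.mp ht with rfl | rfl
          · exact hyB'
          · exact hxB'
        have hB'notri : ¬ IsTriangleGraph (G.induce B') := by
          intro htri
          have h4 := triangle_card htri
          rw [Nat.card_coe_set_eq] at h4
          omega
        by_cases hA'tri : IsTriangleGraph (G.induce A')
        · -- 2b-i-α : A' is a triangle {y, c, d}
          obtain ⟨c, d, hcA', hdA', hA'eq, hyc, hyd, hcd, hadjyc, hadjyd, hadjcd⟩ :=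
            triangle_structure hA'tri hyA2
          have hnA4 : A'.ncard = 3 := by
            rw [hA'eq, Set.ncard_insert_of_notMem (by simp [hyc, hyd]) (Set.toFinite _),
              Set.ncard_pair hcd]
          obtain ⟨Sb, hSb, hSlen⟩ := apply_min hG B' (by omega) ⟨x, hxB'⟩ hConnB' hB'notri
          obtain ⟨u, q, Sb', hdec, hlen, huy⟩ := decomp_extract_end hSb hyxB' huniqB'
          have hsuppB' : ∀ t ∈ q.support, t ∈ B' := by
            have h2 := decomp_supports hdec (S := B') (fun e he => he.2)
            exact fun t ht => h2 _ (List.mem_cons_self) t ht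
          have hcB' : c ∉ B' := by
            rintro (hcB | hcy)
            · have h2 : c ∈ A ∩ B := ⟨hcA'.1, hcB⟩
              rw [hABI] at h2
              exact hcA'.2 h2
            · rw [Set.mem_singleton_iff] at hcy
              exact hyc hcy.symm
          have hdB' : d ∉ B' := by
            rintro (hdB | hdy)
            · have h2 : d ∈ A ∩ B := ⟨hdA'.1, hdB⟩
              rw [hABI] at h2
              exact hdA'.2 h2
            · rw [Set.mem_singleton_iff] at hdy
              exact hyd hdy.symm
          have hc_nq : c ∉ q.support := fun h => hcB' (hsuppB' c h)
          have hfresh1 : s(y, c) ∉ ESet G B' := fun h => hcB' (h.2 c (by simp))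
          have hdec1 := decomp_concat_fresh hdec hadjyc hc_nq hfresh1
          have hd_nq : d ∉ (q.concat hadjyc).support := by
            rw [Walk.support_concat]
            intro h
            rcases List.mem_append.mp h with h' | h'
            · exact hdB' (hsuppB' d h')
            · exact hcd (List.mem_singleton.mp h').symm
          have hfresh2 : s(c, d) ∉ ESet G B' ∪ {s(y, c)} := by
            rintro (h | h)
            · exact hcB' (h.2 c (by simp))
            · rw [Set.mem_singleton_iff, Sym2.eq_iff] at h
              rcases h with ⟨h1, -⟩ | ⟨-, h2⟩
              · exact hyc h1.symm
              · exact hyd h2.symm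
          have hdec2 := decomp_concat_fresh hdec1 hadjcd hd_nq hfresh2
          have hP0path : (Walk.cons hadjyd.symm (Walk.nil : G.Walk y y)).IsPath := by
            apply Walk.IsPath.mk'
            simp only [Walk.support_cons, Walk.support_nil, List.nodup_cons, List.mem_singleton,
              List.not_mem_nil, not_false_iff, List.nodup_nil, and_true]
            exact fun h => hyd h.symm
          have hfresh3 : ∀ e ∈ (Walk.cons hadjyd.symm (Walk.nil : G.Walk y y)).edges,
              e ∉ (ESet G B' ∪ {s(y, c)}) ∪ {s(c, d)} := by
            intro e he
            simp only [Walk.edges_cons, Walk.edges_nil, List.mem_singleton] at he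
            subst he
            rintro ((h | h) | h)
            · exact hdB' (h.2 d (by simp))
            · rw [Set.mem_singleton_iff, Sym2.eq_iff] at h
              rcases h with ⟨h1, -⟩ | ⟨h1, -⟩
              · exact hyd h1.symm
              · exact hcd h1.symm
            · rw [Set.mem_singleton_iff, Sym2.eq_iff] at h
              rcases h with ⟨h1, -⟩ | ⟨-, h2⟩
              · exact hcd h1.symm
              · exact hyc h2
          have hdec3 := decomp_cons_fresh hdec2 ⟨d, y, Walk.cons hadjyd.symm Walk.nil⟩
            hP0path (by simp) hfresh3
          have hEeq : (((ESet G B' ∪ {s(y, c)}) ∪ {s(c, d)}) ∪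
              {e | e ∈ (Walk.cons hadjyd.symm (Walk.nil : G.Walk y y)).edges}) = G.edgeSet := by
            ext e
            constructor
            · rintro (((h | h) | h) | h)
              · exact h.1
              · rw [Set.mem_singleton_iff] at h; rw [h]; exact hadjyc
              · rw [Set.mem_singleton_iff] at h; rw [h]; exact hadjcd
              · simp only [Set.mem_setOf_eq, Walk.edges_cons, Walk.edges_nil,
                  List.mem_singleton] at h
                rw [h]; exact hadjyd.symm
            · intro he
              rcases hcover e he with hA | hB
              · by_cases hxe : x ∈ e
                · have h2 := huniqA e ⟨he, hA⟩ hxe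
                  refine Or.inl (Or.inl (Or.inl ?_))
                  rw [h2]
                  refine ⟨hxy, ?_⟩
                  intro t ht
                  rcases Sym2.mem_iff.mp ht with rfl | rfl
                  · exact hxB'
                  · exact hyB'
                · have hA2 : ∀ t ∈ e, t ∈ ({y, c, d} : Set V) := by
                    intro t ht
                    rw [← hA'eq]
                    exact ⟨hA t ht, fun h => hxe (h ▸ ht)⟩
                  rcases edge_of_triple he hA2 with h | h | h
                  · exact Or.inl (Or.inl (Or.inr h))
                  · refine Or.inr ?_
                    simp only [Set.mem_setOf_eq, Walk.edges_cons, Walk.edges_nil,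
                      List.mem_singleton]
                    rw [h]; exact Sym2.eq_swap
                  · exact Or.inl (Or.inr h)
              · exact Or.inl (Or.inl (Or.inl ⟨he, fun t ht => Or.inl (hB t ht)⟩))
          apply hG.2.2.2.1
          refine ⟨_, hEeq ▸ hdec3, ?_⟩
          simp only [List.length_cons]
          omega
        · -- 2b-i-β : A' not a triangle, take the union
          obtain ⟨Qa, hQa, hQalen⟩ := apply_min hG A' (by omega) ⟨y, hyA2⟩ hConnA' hA'tri
          obtain ⟨Rb, hRb, hRblen⟩ := apply_min hG B' (by omega) ⟨x, hxB'⟩ hConnB' hB'notri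
          have hdisj' : ∀ e, e ∈ ESet G A' → e ∉ ESet G B' := by
            intro e heA' heB'
            induction e using Sym2.ind with
            | _ s t =>
              have hsA' := heA'.2 s (by simp)
              have htA' := heA'.2 t (by simp)
              have hsB' := heB'.2 s (by simp)
              have htB' := heB'.2 t (by simp)
              have hsy : s = y := by
                rcases hsB' with h | h
                · have h2 : s ∈ A ∩ B := ⟨hsA'.1, h⟩
                  rw [hABI] at h2
                  exact absurd h2 hsA'.2
                · exact h
              have hty : t = y := by
                rcases htB' with h | h
                · have h2 : t ∈ A ∩ B := ⟨htA'.1, h⟩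
                  rw [hABI] at h2
                  exact absurd h2 htA'.2
                · exact h
              rw [hsy, hty] at heA'
              exact (G.loopless.irrefl y) (G.mem_edgeSet.mp heA'.1)
          have hEeq : ESet G A' ∪ ESet G B' = G.edgeSet := by
            ext e
            constructor
            · rintro (h | h) <;> exact h.1
            · intro he
              rcases hcover e he with hA | hB
              · by_cases hxe : x ∈ e
                · have h2 := huniqA e ⟨he, hA⟩ hxe
                  refine Or.inr ?_
                  rw [h2]
                  refine ⟨hxy, ?_⟩
                  intro t ht
                  rcases Sym2.mem_iff.mp ht with rfl | rfl
                  · exact hxB'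
                  · exact hyB'
                · exact Or.inl ⟨he, fun t ht => ⟨hA t ht, fun h => hxe (h ▸ ht)⟩⟩
              · exact Or.inr ⟨he, fun t ht => Or.inl (hB t ht)⟩
          have hdec := decomp_union hQa hRb hdisj'
          apply hG.2.2.2.1
          refine ⟨_, hEeq ▸ hdec, ?_⟩
          rw [List.length_append]
          omega
      · -- 2b-ii : A = {x, y}
        have hnA2' : A.ncard = 2 := by omega
        have hAeq : A = {x, y} := by
          have hsub : ({x, y} : Set V) ⊆ A := by
            rintro t (rfl | rfl)
            · exact hxA
            · exact hyA'
          exact (Set.eq_of_subset_of_ncard_le hsub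
            (by simp [hnA2', Set.ncard_pair (Ne.symm hyx)]) (Set.toFinite _)).symm
        have hNy : G.neighborSet y = {x} := by
          ext t
          constructor
          · intro ht
            have htA : t ∈ A := by
              rcases hcross ht with ⟨h1, h2⟩ | ⟨h1, h2⟩
              · exact h2
              · exact absurd h1 hyB
            rw [hAeq] at htA
            rcases htA with rfl | h
            · exact rfl
            · rw [Set.mem_singleton_iff] at h
              exact absurd (h ▸ ht) (G.loopless.irrefl y)
          · intro ht
            rw [Set.mem_singleton_iff] at ht
            subst ht
            exact hxy.symm
        have hdegy : G.degree y = 1 := by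
          rw [← ncard_neighborSet_eq_degree, hNy, Set.ncard_singleton]
        have hvy : v ≠ y := by
          intro h
          rw [h] at hv
          rw [hv] at hdegy
          omega
        have hvx : v ≠ x := hadj.ne
        have hvB : v ∈ B := by
          have hvA : v ∉ A := by
            rw [hAeq]
            rintro (rfl | h)
            · exact hvx rfl
            · rw [Set.mem_singleton_iff] at h
              exact hvy h
          have h2 : v ∈ A ∪ B := by rw [hABU]; trivial
          rcases h2 with h | h
          · exact absurd h hvA
          · exact h
        have hNv : (G.neighborSet v).ncard = 2 := by
          rw [ncard_neighborSet_eq_degree]; exact hv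
        have hxNv : x ∈ G.neighborSet v := hadj
        obtain ⟨w, hwNv, hwx, hNveq⟩ : ∃ w, w ∈ G.neighborSet v ∧ w ≠ x ∧
            G.neighborSet v = {x, w} := by
          obtain ⟨p1, p2, hp12, hpeq⟩ := Set.ncard_eq_two.mp hNv
          rw [hpeq] at hxNv
          rcases hxNv with rfl | h
          · exact ⟨p2, by rw [hpeq]; simp, fun h => hp12 h.symm, hpeq⟩
          · rw [Set.mem_singleton_iff] at h
            subst h
            exact ⟨p1, by rw [hpeq]; simp, hp12, by rw [hpeq]; exact Set.pair_comm _ _⟩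
        have hadjvw : G.Adj v w := hwNv
        have hwv : w ≠ v := hadjvw.ne'
        have hwy : w ≠ y := by
          intro h
          subst h
          have h3 : v ∈ G.neighborSet w := hadjvw.symm
          rw [hNy, Set.mem_singleton_iff] at h3
          exact hvx h3
        have hwB : w ∈ B := by
          rcases hcross hadjvw with ⟨h1, h2⟩ | ⟨h1, h2⟩
          · refine absurd h1 ?_
            rw [hAeq]
            rintro (rfl | h)
            · exact hvx rfl
            · rw [Set.mem_singleton_iff] at h
              exact hvy h
          · exact h2
        set W : Set V := {t | t ≠ y ∧ t ≠ v} with hW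
        have hxW : x ∈ W := ⟨Ne.symm hyx, Ne.symm hvx⟩
        have hwW : w ∈ W := ⟨hwy, hwv⟩
        have hWcard : W.ncard = n - 2 := by
          have hWeq : W = Set.univ \ {y, v} := by
            ext t
            simp only [hW, Set.mem_setOf_eq, Set.mem_diff, Set.mem_univ, true_and,
              Set.mem_insert_iff, Set.mem_singleton_iff]
            tauto
          rw [hWeq, Set.ncard_diff (Set.subset_univ _), Set.ncard_univ,
            Nat.card_eq_fintype_card, Set.ncard_pair (Ne.symm hvy)]
        have hdich : ∀ u ∈ W, (GRaux G W).Reachable u x ∨ (GRaux G W).Reachable u w := by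
          intro u huW
          have huv : u ≠ v := huW.2
          obtain ⟨p0⟩ := hG.1.preconnected u v
          obtain ⟨p, hppath⟩ := p0.toPath
          obtain ⟨u', q, hu'v, hqpath, hvnq, hsupp⟩ := exit_lemma huv p hppath
          have hu'Nv : u' ∈ G.neighborSet v := hu'v.symm
          rw [hNveq] at hu'Nv
          have hynq : y ∉ q.support := by
            intro hyq
            have hyu : y ≠ u := fun h => huW.1 h.symm
            have hyu' : y ≠ u' := by
              rcases hu'Nv with rfl | h
              · exact hyx
              · rw [Set.mem_singleton_iff] at h
                subst h
                exact fun h2 => hwy h2.symm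
            obtain ⟨e₁, he₁, e₂, he₂, hne, hy1, hy2⟩ :=
              internal_two_edges q hqpath hyq hyu hyu'
            obtain ⟨t₁, heq1, hadj1⟩ := edge_at (q.edges_subset_edgeSet he₁) hy1
            obtain ⟨t₂, heq2, hadj2⟩ := edge_at (q.edges_subset_edgeSet he₂) hy2
            have ht1 : t₁ ∈ G.neighborSet y := hadj1
            have ht2 : t₂ ∈ G.neighborSet y := hadj2
            rw [hNy, Set.mem_singleton_iff] at ht1 ht2
            apply hne
            rw [heq1, heq2, ht1, ht2]
          have hqW : ∀ t ∈ q.support, t ∈ W := by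
            intro t ht
            exact ⟨fun h => hynq (h ▸ ht), fun h => hvnq (h ▸ ht)⟩
          have hreach : (GRaux G W).Reachable u u' := reach_GRaux_of_walk q hqW
          rcases hu'Nv with rfl | h
          · exact Or.inl hreach
          · rw [Set.mem_singleton_iff] at h
            subst h
            exact Or.inr hreach
        by_cases hwC : (GRaux G W).Reachable x w
        · -- 2b-ii-p : G - y - v is connected
          have hallW : ∀ u ∈ W, (GRaux G W).Reachable u x := by
            intro u hu
            rcases hdich u hu with h | h
            · exact h
            · exact h.trans hwC.symm
          have hConnW : ∀ u ∈ W, ∀ t ∈ W, (GRaux G W).Reachable u t :=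
            fun u hu t ht => (hallW u hu).trans (hallW t ht).symm
          have hWnotri : ¬ IsTriangleGraph (G.induce W) := by
            intro htri
            obtain ⟨c, d, hcW, hdW, hWeq3, hxc, hxd, hcd, hadjxc, hadjxd, hadjcd⟩ :=
              triangle_structure htri hxW
            have hsub : ({y, v, c, d} : Set V) ⊆ G.neighborSet x := by
              rintro t (rfl | rfl | rfl | rfl)
              · exact hxy
              · exact hadj.symm
              · exact hadjxc
              · exact hadjxd
            have h1 : y ∉ ({v, c, d} : Set V) := by
              simp only [Set.mem_insert_iff, Set.mem_singleton_iff]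
              push_neg
              exact ⟨Ne.symm hvy, fun h => hcW.1 h.symm, fun h => hdW.1 h.symm⟩
            have h2 : v ∉ ({c, d} : Set V) := by
              simp only [Set.mem_insert_iff, Set.mem_singleton_iff]
              push_neg
              exact ⟨fun h => hcW.2 h.symm, fun h => hdW.2 h.symm⟩
            have hcard4 : ({y, v, c, d} : Set V).ncard = 4 := by
              rw [Set.ncard_insert_of_notMem h1 (Set.toFinite _),
                Set.ncard_insert_of_notMem h2 (Set.toFinite _), Set.ncard_pair hcd]
            have hle := Set.ncard_le_ncard hsub (Set.toFinite _)
            rw [hcard4, hNx] at hle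
            omega
          obtain ⟨Ts, hTs, hTlen⟩ := apply_min hG W (by omega) ⟨x, hxW⟩ hConnW hWnotri
          have hP0path : (Walk.cons hxy.symm (Walk.cons hadj.symm
              (Walk.cons hadjvw Walk.nil)) : G.Walk y w).IsPath := by
            apply Walk.IsPath.mk'
            simp only [Walk.support_cons, Walk.support_nil]
            refine List.nodup_cons.mpr ⟨?_, List.nodup_cons.mpr ⟨?_,
              List.nodup_cons.mpr ⟨?_, List.nodup_singleton _⟩⟩⟩
            · simp only [List.mem_cons, List.mem_singleton, List.not_mem_nil, or_false]
              push_neg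
              exact ⟨hyx, Ne.symm hvy, Ne.symm hwy⟩
            · simp only [List.mem_cons, List.mem_singleton, List.not_mem_nil, or_false]
              push_neg
              exact ⟨Ne.symm hvx, Ne.symm hwx⟩
            · simp only [List.mem_singleton]
              exact Ne.symm hwv
          have hfreshP0 : ∀ e ∈ (Walk.cons hxy.symm (Walk.cons hadj.symm
              (Walk.cons hadjvw Walk.nil)) : G.Walk y w).edges, e ∉ ESet G W := by
            intro e he
            simp only [Walk.edges_cons, Walk.edges_nil, List.mem_cons, List.mem_singleton,
              List.not_mem_nil, or_false] at he
            rcases he with rfl | rfl | rfl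
            · exact fun h => (h.2 y (by simp)).1 rfl
            · exact fun h => (h.2 v (by simp)).2 rfl
            · exact fun h => (h.2 v (by simp)).2 rfl
          have hdec3 := decomp_cons_fresh hTs ⟨y, w, Walk.cons hxy.symm (Walk.cons hadj.symm
            (Walk.cons hadjvw Walk.nil))⟩ hP0path (by simp) hfreshP0
          have hEeq : ESet G W ∪ {e | e ∈ (Walk.cons hxy.symm (Walk.cons hadj.symm
              (Walk.cons hadjvw Walk.nil)) : G.Walk y w).edges} = G.edgeSet := by
            ext e
            constructor
            · rintro (h | h)
              · exact h.1
              · simp only [Set.mem_setOf_eq, Walk.edges_cons, Walk.edges_nil, List.mem_cons,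
                  List.mem_singleton, List.not_mem_nil, or_false] at h
                rcases h with rfl | rfl | rfl
                · exact hxy.symm
                · exact hadj.symm
                · exact hadjvw
            · intro he
              by_cases hye : y ∈ e
              · obtain ⟨t, heq, hadjyt⟩ := edge_at he hye
                have h3 : t ∈ G.neighborSet y := hadjyt
                rw [hNy, Set.mem_singleton_iff] at h3
                subst h3
                refine Or.inr ?_
                simp only [Set.mem_setOf_eq, Walk.edges_cons, Walk.edges_nil, List.mem_cons,
                  List.mem_singleton, List.not_mem_nil, or_false]
                exact Or.inl heq
              · by_cases hve : v ∈ e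
                · obtain ⟨t, heq, hadjvt⟩ := edge_at he hve
                  have h3 : t ∈ G.neighborSet v := hadjvt
                  rw [hNveq] at h3
                  subst heq
                  rcases h3 with h3 | h3
                  · subst h3
                    refine Or.inr ?_
                    simp only [Set.mem_setOf_eq, Walk.edges_cons, Walk.edges_nil, List.mem_cons,
                      List.mem_singleton, List.not_mem_nil, or_false]
                    exact Or.inr (Or.inl Sym2.eq_swap)
                  · rw [Set.mem_singleton_iff] at h3
                    subst h3
                    refine Or.inr ?_
                    tauto
                · refine Or.inl ⟨he, ?_⟩
                  intro t ht
                  exact ⟨fun h => hye (h ▸ ht), fun h => hve (h ▸ ht)⟩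
          apply hG.2.2.2.1
          refine ⟨_, hEeq ▸ hdec3, ?_⟩
          simp only [List.length_cons]
          omega
        · -- 2b-ii-q : G - y - v is disconnected; split at v
          set C : Set V := {t | (GRaux G W).Reachable x t} with hC
          have hxC : x ∈ C := Reachable.refl _
          have hCW : C ⊆ W := by
            intro t ht
            obtain ⟨p⟩ := ht
            exact GRaux_supp p hxW t (Walk.end_mem_support p)
          set D : Set V := W \ C with hD
          have hwD : w ∈ D := ⟨hwW, fun h => hwC h⟩
          have hDreach : ∀ u ∈ D, (GRaux G W).Reachable u w := by
            intro u hu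
            rcases hdich u hu.1 with h | h
            · exact absurd h.symm hu.2
            · exact h
          have hCD : C ∪ D = W := by
            ext t
            constructor
            · rintro (h | h)
              · exact hCW h
              · exact h.1
            · intro ht
              by_cases h : t ∈ C
              · exact Or.inl h
              · exact Or.inr ⟨ht, h⟩
          have hCDdisj : Disjoint C D := Set.disjoint_sdiff_right
          have hcards : C.ncard + D.ncard = n - 2 := by
            rw [← Set.ncard_union_eq hCDdisj (Set.toFinite _) (Set.toFinite _), hCD, hWcard]
          have hc1 : 0 < C.ncard := (Set.ncard_pos (Set.toFinite _)).mpr ⟨x, hxC⟩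
          have hc2 : 0 < D.ncard := (Set.ncard_pos (Set.toFinite _)).mpr ⟨w, hwD⟩
          set S1 : Set V := C ∪ {v, y} with hS1
          set S2 : Set V := D ∪ {v} with hS2
          have hvW : v ∉ W := fun h => h.2 rfl
          have hyW : y ∉ W := fun h => h.1 rfl
          have hvC : v ∉ C := fun h => hvW (hCW h)
          have hyC : y ∉ C := fun h => hyW (hCW h)
          have hvD : v ∉ D := fun h => hvW h.1
          have hyD : y ∉ D := fun h => hyW h.1
          have hxS1 : x ∈ S1 := Or.inl hxC
          have hvS1 : v ∈ S1 := Or.inr (Or.inl rfl)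
          have hyS1 : y ∈ S1 := Or.inr (Or.inr rfl)
          have hvS2 : v ∈ S2 := Or.inr rfl
          have hwS2 : w ∈ S2 := Or.inl hwD
          have hxS2 : x ∉ S2 := by
            rintro (h | h)
            · exact h.2 hxC
            · rw [Set.mem_singleton_iff] at h
              exact hvx h.symm
          have hwS1 : w ∉ S1 := by
            rintro (h | h)
            · exact hwD.2 h
            · rcases h with h | h
              · exact hwv h
              · rw [Set.mem_singleton_iff] at h
                exact hwy h
          have hS1card : S1.ncard = C.ncard + 2 := by
            have h1 : S1 = insert v (insert y C) := by
              ext t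
              simp only [hS1, Set.mem_union, Set.mem_insert_iff, Set.mem_singleton_iff]
              tauto
            rw [h1, Set.ncard_insert_of_notMem (by
                simp only [Set.mem_insert_iff]
                push_neg
                exact ⟨hvy, hvC⟩) (Set.toFinite _),
              Set.ncard_insert_of_notMem hyC (Set.toFinite _)]
          have hS2card : S2.ncard = D.ncard + 1 := by
            rw [hS2, Set.union_singleton, Set.ncard_insert_of_notMem hvD (Set.toFinite _)]
          have hConnS1 : ∀ u ∈ S1, ∀ t ∈ S1, (GRaux G S1).Reachable u t := by
            have hkey : ∀ u ∈ S1, (GRaux G S1).Reachable u x := by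
              intro u hu
              rcases hu with huC | hu
              · obtain ⟨p⟩ := huC
                have hsup : ∀ t ∈ p.support, t ∈ S1 := by
                  intro t ht
                  exact Or.inl (mem_support_reachable p t ht)
                exact (reach_GRaux_of_GRaux_walk p hsup).symm
              · rcases hu with h | h
                · subst h
                  exact Adj.reachable ⟨hadj, hvS1, hxS1⟩
                · rw [Set.mem_singleton_iff] at h
                  subst h
                  exact Adj.reachable ⟨hxy.symm, hyS1, hxS1⟩
            intro u hu t ht
            exact (hkey u hu).trans (hkey t ht).symm
          have hConnS2 : ∀ u ∈ S2, ∀ t ∈ S2, (GRaux G S2).Reachable u t := by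
            have hkey : ∀ u ∈ S2, (GRaux G S2).Reachable u w := by
              intro u hu
              rcases hu with huD | hv'
              · obtain ⟨p⟩ := hDreach u huD
                have hsup : ∀ t ∈ p.support, t ∈ S2 := by
                  intro t ht
                  have htW : t ∈ W := GRaux_supp p huD.1 t ht
                  have h4 : (GRaux G W).Reachable u t := mem_support_reachable p t ht
                  left
                  refine ⟨htW, ?_⟩
                  intro htC
                  exact huD.2 (htC.trans h4.symm)
                exact reach_GRaux_of_GRaux_walk p hsup
              · rw [Set.mem_singleton_iff] at hv'
                subst hv'
                exact Adj.reachable ⟨hadjvw, hvS2, hwS2⟩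
            intro u hu t ht
            exact (hkey u hu).trans (hkey t ht).symm
          have hS1notri : ¬ IsTriangleGraph (G.induce S1) := by
            intro htri
            obtain ⟨c, d, hcS1, hdS1, hS1eq, hyc, hyd, hcd, hadjyc, hadjyd, hadjcd⟩ :=
              triangle_structure htri hyS1
            have h3 : c ∈ G.neighborSet y := hadjyc
            have h4 : d ∈ G.neighborSet y := hadjyd
            rw [hNy, Set.mem_singleton_iff] at h3 h4
            exact hcd (h3.trans h4.symm)
          have hS2notri : ¬ IsTriangleGraph (G.induce S2) := by
            intro htri
            obtain ⟨c, d, hcS2, hdS2, hS2eq, hvc, hvd, hcd, hadjvc, hadjvd, hadjcd⟩ :=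
              triangle_structure htri hvS2
            have h3 : c ∈ G.neighborSet v := hadjvc
            have h4 : d ∈ G.neighborSet v := hadjvd
            rw [hNveq] at h3 h4
            have hcx : c ≠ x := fun h => hxS2 (h ▸ hcS2)
            have hdx : d ≠ x := fun h => hxS2 (h ▸ hdS2)
            rcases h3 with h3 | h3
            · exact hcx h3
            · rcases h4 with h4 | h4
              · exact hdx h4
              · rw [Set.mem_singleton_iff] at h3 h4
                exact hcd (h3.trans h4.symm)
          obtain ⟨Ls, hLs, hLlen⟩ := apply_min hG S1 (by omega) ⟨x, hxS1⟩ hConnS1 hS1notri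
          obtain ⟨Ms, hMs, hMlen⟩ := apply_min hG S2 (by omega) ⟨v, hvS2⟩ hConnS2 hS2notri
          have hS12 : ∀ t, t ∈ S1 → t ∈ S2 → t = v := by
            intro t ht1 ht2
            rcases ht2 with htD | htv
            · rcases ht1 with htC | ht1
              · exact absurd htC htD.2
              · rcases ht1 with h | h
                · exact h
                · rw [Set.mem_singleton_iff] at h
                  subst h
                  exact absurd htD hyD
            · rw [Set.mem_singleton_iff] at htv
              exact htv
          have hdisj12 : ∀ e, e ∈ ESet G S1 → e ∉ ESet G S2 := by
            intro e he1 he2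
            induction e using Sym2.ind with
            | _ s t =>
              have hsv : s = v := hS12 s (he1.2 s (by simp)) (he2.2 s (by simp))
              have htv : t = v := hS12 t (he1.2 t (by simp)) (he2.2 t (by simp))
              rw [hsv, htv] at he1
              exact (G.loopless.irrefl v) (G.mem_edgeSet.mp he1.1)
          have huniqS1 : ∀ e ∈ ESet G S1, v ∈ e → e = s(v, x) := by
            intro e he hve
            obtain ⟨t, heq, hadj'⟩ := edge_at he.1 hve
            subst heq
            have htS1 : t ∈ S1 := he.2 t (by simp)
            have h3 : t ∈ G.neighborSet v := hadj'
            rw [hNveq] at h3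
            rcases h3 with h3 | h3
            · rw [h3]
            · rw [Set.mem_singleton_iff] at h3
              subst h3
              exact absurd htS1 hwS1
          have huniqS2 : ∀ e ∈ ESet G S2, v ∈ e → e = s(v, w) := by
            intro e he hve
            obtain ⟨t, heq, hadj'⟩ := edge_at he.1 hve
            subst heq
            have htS2 : t ∈ S2 := he.2 t (by simp)
            have h3 : t ∈ G.neighborSet v := hadj'
            rw [hNveq] at h3
            rcases h3 with h3 | h3
            · subst h3
              exact absurd htS2 hxS2
            · rw [Set.mem_singleton_iff] at h3
              rw [h3]
          have hvxS1 : s(v, x) ∈ ESet G S1 := by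
            refine ⟨hadj, ?_⟩
            intro t ht
            rcases Sym2.mem_iff.mp ht with rfl | rfl
            · exact hvS1
            · exact hxS1
          have hvwS2 : s(v, w) ∈ ESet G S2 := by
            refine ⟨hadjvw, ?_⟩
            intro t ht
            rcases Sym2.mem_iff.mp ht with rfl | rfl
            · exact hvS2
            · exact hwS2
          have hEeq : ESet G S1 ∪ ESet G S2 = G.edgeSet := by
            ext e
            constructor
            · rintro (h | h) <;> exact h.1
            · intro he
              by_cases hye : y ∈ e
              · obtain ⟨t, heq, hadjyt⟩ := edge_at he hye
                have h3 : t ∈ G.neighborSet y := hadjyt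
                rw [hNy, Set.mem_singleton_iff] at h3
                subst h3
                subst heq
                refine Or.inl ⟨he, ?_⟩
                intro t ht
                rcases Sym2.mem_iff.mp ht with rfl | rfl
                · exact hyS1
                · exact hxS1
              · by_cases hve : v ∈ e
                · obtain ⟨t, heq, hadjvt⟩ := edge_at he hve
                  have h3 : t ∈ G.neighborSet v := hadjvt
                  rw [hNveq] at h3
                  subst heq
                  rcases h3 with h3 | h3
                  · subst h3
                    refine Or.inl ⟨he, ?_⟩
                    intro t ht
                    rcases Sym2.mem_iff.mp ht with rfl | rfl
                    · exact hvS1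
                    · exact hxS1
                  · rw [Set.mem_singleton_iff] at h3
                    subst h3
                    refine Or.inr ⟨he, ?_⟩
                    intro t ht
                    rcases Sym2.mem_iff.mp ht with rfl | rfl
                    · exact hvS2
                    · exact hwS2
                · induction e using Sym2.ind with
                  | _ s t =>
                    have hadj' : G.Adj s t := G.mem_edgeSet.mp he
                    have hsW : s ∈ W := ⟨fun h => hye (h ▸ (by simp : s ∈ s(s, t))),
                      fun h => hve (h ▸ (by simp : s ∈ s(s, t)))⟩
                    have htW : t ∈ W := ⟨fun h => hye (h ▸ (by simp : t ∈ s(s, t))),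
                      fun h => hve (h ▸ (by simp : t ∈ s(s, t)))⟩
                    have hadjW : (GRaux G W).Adj s t := ⟨hadj', hsW, htW⟩
                    by_cases hsC : s ∈ C
                    · have htC : t ∈ C := hsC.trans (Adj.reachable hadjW)
                      refine Or.inl ⟨he, ?_⟩
                      intro r hr
                      rcases Sym2.mem_iff.mp hr with rfl | rfl
                      · exact Or.inl hsC
                      · exact Or.inl htC
                    · have htD : t ∈ D := by
                        refine ⟨htW, ?_⟩
                        intro htC
                        exact hsC (htC.trans (Adj.reachable hadjW).symm)
                      have hsD : s ∈ D := ⟨hsW, hsC⟩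
                      refine Or.inr ⟨he, ?_⟩
                      intro r hr
                      rcases Sym2.mem_iff.mp hr with rfl | rfl
                      · exact Or.inl hsD
                      · exact Or.inl htD
          by_cases hpar2 : Odd S1.ncard ∨ Odd S2.ncard
          · have hdec := decomp_union hLs hMs hdisj12
            apply hG.2.2.2.1
            refine ⟨_, hEeq ▸ hdec, ?_⟩
            rw [List.length_append]
            have hp2 : S1.ncard % 2 = 1 ∨ S2.ncard % 2 = 1 := by
              rcases hpar2 with h | h
              · exact Or.inl (Nat.odd_iff.mp h)
              · exact Or.inr (Nat.odd_iff.mp h)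
            omega
          · push_neg at hpar2
            obtain ⟨hq1, hq2⟩ := hpar2
            rw [Nat.not_odd_iff] at hq1 hq2
            obtain ⟨u1, q1, L1, hdec1, hlen1, hu1v⟩ := decomp_extract_end hLs hvxS1 huniqS1
            obtain ⟨u2, q2, L2, hdec2, hlen2, hu2v⟩ := decomp_extract_end hMs hvwS2 huniqS2
            have hsupp1 : ∀ t ∈ q1.support, t ∈ S1 := by
              have h2 := decomp_supports hdec1 (S := S1) (fun e he => he.2)
              exact fun t ht => h2 _ (List.mem_cons_self) t ht
            have hsupp2 : ∀ t ∈ q2.support, t ∈ S2 := by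
              have h2 := decomp_supports hdec2 (S := S2) (fun e he => he.2)
              exact fun t ht => h2 _ (List.mem_cons_self) t ht
            have hdecM := decomp_merge hS12 hdec1 hdec2 hdisj12 hsupp1 hsupp2
            apply hG.2.2.2.1
            refine ⟨_, hEeq ▸ hdecM, ?_⟩
            simp only [List.length_cons, List.length_append]
            omega

/-- In a minimum counterexample, if `v` has degree 2 and `x` is a neighbour of
`v` of degree 3, then `x` is not a cut vertex. -/
theorem min_counterexample_deg_three_neighbor_not_cut {V : Type} [Fintype V]
    (G : SimpleGraph V) [DecidableRel G.Adj] (hG : MinCounterexample G)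
    (v x : V) (hv : G.degree v = 2) (hadj : G.Adj v x) (hx : G.degree x = 3) :
    ¬ IsCutVertex G x := by
  classical
  rintro ⟨-, hdisc⟩
  set Sx : Set V := {u | u ≠ x} with hSx
  have hvSx : v ∈ Sx := hadj.ne
  have hne : Nonempty ↥Sx := ⟨⟨v, hvSx⟩⟩
  have hnpre : ¬ (G.induce Sx).Preconnected := by
    intro hp
    rw [SimpleGraph.connected_iff] at hdisc
    exact hdisc ⟨hp, hne⟩
  rw [SimpleGraph.Preconnected] at hnpre
  push_neg at hnpre
  obtain ⟨⟨a, ha⟩, ⟨b, hb⟩, hnr⟩ := hnpre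
  have hnreach : ¬ (GRaux G Sx).Reachable a b := by
    intro h
    obtain ⟨p⟩ := h
    exact hnr (reach_induce p ha hb)
  have hreach_ne : ∀ t, (GRaux G Sx).Reachable a t → t ∈ Sx := by
    intro t h
    obtain ⟨p⟩ := h
    exact GRaux_supp p ha t (Walk.end_mem_support p)
  set A : Set V := {u | (GRaux G Sx).Reachable a u} ∪ {x} with hA
  set B : Set V := {u | ¬ (GRaux G Sx).Reachable a u} with hB
  have hxA : x ∈ A := Or.inr rfl
  have hxB : x ∈ B := fun h => (hreach_ne x h) rfl
  have hbB : b ∈ B := hnreach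
  have hax : a ≠ x := ha
  have hbx : b ≠ x := hb
  have hABI : A ∩ B = {x} := by
    ext t
    constructor
    · rintro ⟨(h1 | h1), h2⟩
      · exact absurd h1 h2
      · exact h1
    · intro h
      rw [Set.mem_singleton_iff] at h
      subst h
      exact ⟨hxA, hxB⟩
  have hABU : A ∪ B = Set.univ := by
    ext t
    simp only [Set.mem_union, Set.mem_univ, iff_true]
    by_cases h : (GRaux G Sx).Reachable a t
    · exact Or.inl (Or.inl h)
    · exact Or.inr h
  have hcross : ∀ ⦃s t : V⦄, G.Adj s t → (s ∈ A ∧ t ∈ A) ∨ (s ∈ B ∧ t ∈ B) := by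
    intro s t hst
    by_cases hsx : s = x
    · subst hsx
      by_cases htr : (GRaux G Sx).Reachable a t
      · exact Or.inl ⟨hxA, Or.inl htr⟩
      · exact Or.inr ⟨hxB, htr⟩
    · by_cases htx : t = x
      · subst htx
        by_cases hsr : (GRaux G Sx).Reachable a s
        · exact Or.inl ⟨Or.inl hsr, hxA⟩
        · exact Or.inr ⟨hsr, hxB⟩
      · have hadjSx : (GRaux G Sx).Adj s t := ⟨hst, hsx, htx⟩
        by_cases hsr : (GRaux G Sx).Reachable a s
        · exact Or.inl ⟨Or.inl hsr, Or.inl (hsr.trans (Adj.reachable hadjSx))⟩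
        · refine Or.inr ⟨hsr, ?_⟩
          intro htr
          exact hsr (htr.trans (Adj.reachable hadjSx).symm)
  have hexit : ∀ c, c ≠ x → ∃ u', G.Adj x u' ∧ u' ≠ x ∧ (GRaux G Sx).Reachable c u' := by
    intro c hcx
    obtain ⟨p0⟩ := hG.1.preconnected c x
    obtain ⟨p, hppath⟩ := p0.toPath
    obtain ⟨u', q, hu'x, hqpath, hxnq, -⟩ := exit_lemma hcx p hppath
    refine ⟨u', hu'x.symm, hu'x.ne, ?_⟩
    refine reach_GRaux_of_walk q ?_
    intro t ht
    exact fun h => hxnq (h ▸ ht)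
  obtain ⟨uA, huAadj, huAx, huAr⟩ := hexit a hax
  obtain ⟨uB, huBadj, huBx, huBr⟩ := hexit b hbx
  have huAA : uA ∈ A := Or.inl huAr
  have huBB : uB ∈ B := by
    intro h
    exact hnreach (h.trans huBr.symm)
  have hConnA : ∀ u ∈ A, ∀ w ∈ A, (GRaux G A).Reachable u w := by
    have hkey : ∀ u ∈ A, (GRaux G A).Reachable u a := by
      intro u hu
      rcases hu with hu | hu
      · obtain ⟨p⟩ := hu
        have hsup : ∀ t ∈ p.support, t ∈ A := fun t ht =>
          Or.inl (mem_support_reachable p t ht)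
        exact (reach_GRaux_of_GRaux_walk p hsup).symm
      · rw [Set.mem_singleton_iff] at hu
        subst hu
        have h2 : (GRaux G A).Reachable a uA := by
          obtain ⟨p⟩ := huAr
          exact reach_GRaux_of_GRaux_walk p (fun t ht =>
            Or.inl (mem_support_reachable p t ht))
        exact (Adj.reachable (⟨huAadj, hxA, huAA⟩ : (GRaux G A).Adj u uA)).trans h2.symm
    intro u hu w hw
    exact (hkey u hu).trans (hkey w hw).symm
  have hConnB : ∀ u ∈ B, ∀ w ∈ B, (GRaux G B).Reachable u w := by
    have hkey : ∀ u ∈ B, (GRaux G B).Reachable u x := by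
      intro u hu
      by_cases hux : u = x
      · subst hux
        exact Reachable.refl _
      · obtain ⟨u', hu'adj, hu'x, hu'r⟩ := hexit u hux
        obtain ⟨p⟩ := hu'r
        have hsup : ∀ t ∈ p.support, t ∈ B := by
          intro t ht
          have h4 : (GRaux G Sx).Reachable u t := mem_support_reachable p t ht
          intro har
          exact hu (har.trans h4.symm)
        have h5 : (GRaux G B).Reachable u u' := reach_GRaux_of_GRaux_walk p hsup
        have hu'B : u' ∈ B := hsup u' (Walk.end_mem_support p)
        exact h5.trans (Adj.reachable (⟨hu'adj.symm, hu'B, hxB⟩ : (GRaux G B).Adj u' x))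
    intro u hu w hw
    exact (hkey u hu).trans (hkey w hw).symm
  have hNdisj : Disjoint (G.neighborSet x ∩ (A \ {x})) (G.neighborSet x ∩ (B \ {x})) := by
    rw [Set.disjoint_left]
    rintro t ⟨-, htA, htx⟩ ⟨-, htB, -⟩
    have h2 : t ∈ A ∩ B := ⟨htA, htB⟩
    rw [hABI] at h2
    exact htx h2
  have hNsplit : G.neighborSet x =
      (G.neighborSet x ∩ (A \ {x})) ∪ (G.neighborSet x ∩ (B \ {x})) := by
    ext t
    simp only [Set.mem_union, Set.mem_inter_iff, Set.mem_diff, Set.mem_singleton_iff]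
    constructor
    · intro ht
      have htAB : t ∈ A ∪ B := by rw [hABU]; trivial
      rcases htAB with h | h
      · exact Or.inl ⟨ht, h, ht.ne'⟩
      · exact Or.inr ⟨ht, h, ht.ne'⟩
    · rintro (⟨h, -⟩ | ⟨h, -⟩) <;> exact h
  have hNx : (G.neighborSet x).ncard = 3 := by rw [ncard_neighborSet_eq_degree]; exact hx
  have hNsum := Set.ncard_union_eq hNdisj (Set.toFinite _) (Set.toFinite _)
  rw [← hNsplit, hNx] at hNsum
  have hNApos : 0 < (G.neighborSet x ∩ (A \ {x})).ncard :=
    (Set.ncard_pos (Set.toFinite _)).mpr ⟨uA, huAadj, huAA, huAx⟩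
  have hNBpos : 0 < (G.neighborSet x ∩ (B \ {x})).ncard :=
    (Set.ncard_pos (Set.toFinite _)).mpr ⟨uB, huBadj, huBB, huBx⟩
  have hone : (G.neighborSet x ∩ (A \ {x})).ncard = 1 ∨
      (G.neighborSet x ∩ (B \ {x})).ncard = 1 := by omega
  rcases hone with h1 | h1
  · obtain ⟨y, hy⟩ := Set.ncard_eq_one.mp h1
    exact side_lemma_s11 G hG x v y hadj hv hx A B hxA hxB hABI hABU hcross hConnA hConnB hy
  · obtain ⟨y, hy⟩ := Set.ncard_eq_one.mp h1
    exact side_lemma_s11 G hG x v y hadj hv hx B A hxB hxA (by rw [Set.inter_comm]; exact hABI)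
      (by rw [Set.union_comm]; exact hABU) (fun s t h => (hcross h).symm) hConnB hConnA hy

end Main
end
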